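/- arXiv:1112.5223 — 8 statements merged into one kernel-verified Lean document; each statement's English description precedes it below -/
import Mathlib

section
/- For every m ≥ 1, the identity Σ_{i=1}^m (x_i ⊕ x_i)/(x_i ⊖ t) · Π_{j≠i} (x_i ⊕ x_j)/(x_i ⊖ x_j) + Π_{i=1}^m (t ⊕ x_i)/(t ⊖ x_i) = 1 holds in the field of rational functions in the indeterminates β, t, x_1, …, x_m over ℚ. -/
/-!
STATEMENT 0: For every m ≥ 1, the identity
  Σ_{i=1}^m (x_i ⊕ x_i)/(x_i ⊖ t) · Π_{j≠i} (x_i ⊕ x_j)/(x_i ⊖ x_j)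
    + Π_{i=1}^m (t ⊕ x_i)/(t ⊖ x_i) = 1
holds in the field of rational functions in β, t, x_1, …, x_m over ℚ,
where x ⊕ y = x + y + βxy and x ⊖ y = (x − y)/(1 + βy).
-/

open Polynomial Finset

lemma basis_coeff_top {F : Type*} [Field F] [DecidableEq F] (S : Finset F) {r : F} (hr : r ∈ S) :
    (Lagrange.basis S id r).coeff (S.card - 1) = ∏ r' ∈ S.erase r, (r - r')⁻¹ := by
  have hinj : Set.InjOn id (S : Set F) := Function.injective_id.injOn
  have hnd := Lagrange.natDegree_basis hinj hr
  rw [← hnd]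
  show (Lagrange.basis S id r).leadingCoeff = _
  rw [Lagrange.basis, leadingCoeff_prod]
  refine Finset.prod_congr rfl fun j hj => ?_
  have hne : (r : F) ≠ j := (Finset.mem_erase.mp hj).1.symm
  rw [Lagrange.basisDivisor, leadingCoeff_mul, leadingCoeff_C, leadingCoeff_X_sub_C, mul_one]
  rfl

lemma residue_sum {F : Type*} [Field F] [DecidableEq F] (S : Finset F) (N : F[X])
    (hN : N.degree < ((S.card - 1 : ℕ) : WithBot ℕ)) :
    ∑ r ∈ S, N.eval r * ∏ r' ∈ S.erase r, (r - r')⁻¹ = 0 := by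
  have hinj : Set.InjOn id (S : Set F) := Function.injective_id.injOn
  have hdeg : N.degree < S.card := lt_of_lt_of_le hN (by exact_mod_cast Nat.sub_le S.card 1)
  have hint := Lagrange.eq_interpolate (v := id) hinj hdeg
  have hcoeff := congrArg (fun p => p.coeff (S.card - 1)) hint
  simp only [Lagrange.interpolate_apply, Polynomial.finset_sum_coeff,
    Polynomial.coeff_C_mul] at hcoeff
  rw [Polynomial.coeff_eq_zero_of_degree_lt hN] at hcoeff
  rw [show (∑ r ∈ S, N.eval r * ∏ r' ∈ S.erase r, (r - r')⁻¹)
      = ∑ x ∈ S, N.eval (id x) * (Lagrange.basis S id x).coeff (S.card - 1) from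
    Finset.sum_congr rfl fun r hr => by rw [basis_coeff_top S hr]; rfl]
  exact hcoeff.symm

lemma key_identity {F : Type*} [Field F] [DecidableEq F] {m : ℕ} (z : Fin m → F)
    (hz : Function.Injective z) (hz0 : ∀ i, z i ≠ 0) (s : F) (hs0 : s ≠ 0)
    (hsz : ∀ i, s ≠ z i) :
    (∑ i : Fin m, s * (z i * z i - 1) / (z i - s) *
        ∏ j ∈ Finset.univ.erase i, z j * (z i * z j - 1) / (z i - z j))
      + ∏ i : Fin m, z i * (s * z i - 1) / (s - z i) = 1 := by
  set T : Finset F := Finset.image z Finset.univ with hT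
  have h0T : (0 : F) ∉ T := by
    simp only [hT, Finset.mem_image, not_exists]
    rintro i ⟨-, h⟩; exact hz0 i h
  have hsT : s ∉ T := by
    simp only [hT, Finset.mem_image, not_exists]
    rintro i ⟨-, h⟩; exact hsz i h.symm
  have h0sT : (0 : F) ∉ insert s T := by
    simp only [Finset.mem_insert, not_or]
    exact ⟨fun h => hs0 h.symm, h0T⟩
  set S : Finset F := insert 0 (insert s T) with hS
  have hcardT : T.card = m := by
    rw [hT, Finset.card_image_of_injective _ hz, Finset.card_univ, Fintype.card_fin]
  have hcard : S.card = m + 2 := by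
    rw [hS, Finset.card_insert_of_notMem h0sT, Finset.card_insert_of_notMem hsT, hcardT]
  set N : Polynomial F := Polynomial.C s * ∏ i : Fin m,
      (Polynomial.C (z i * z i) * Polynomial.X - Polynomial.C (z i)) with hN
  have hNdeg : N.degree < ((S.card - 1 : ℕ) : WithBot ℕ) := by
    rw [hcard]
    have h1 : N.degree ≤ (m : WithBot ℕ) := by
      calc N.degree ≤ (Polynomial.C s).degree
            + (∏ i : Fin m, (Polynomial.C (z i * z i) * Polynomial.X
                - Polynomial.C (z i))).degree := Polynomial.degree_mul_le _ _
        _ ≤ 0 + ∑ i : Fin m, (1 : WithBot ℕ) := by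
            refine add_le_add Polynomial.degree_C_le
              ((Polynomial.degree_prod_le _ _).trans (Finset.sum_le_sum fun i _ => ?_))
            exact (Polynomial.degree_sub_le _ _).trans
              (max_le (Polynomial.degree_C_mul_X_le _)
                ((Polynomial.degree_C_le).trans (by norm_num)))
        _ = (m : WithBot ℕ) := by
            rw [zero_add, Finset.sum_const, Finset.card_univ, Fintype.card_fin]
            simp [nsmul_eq_mul]
    refine h1.trans_lt ?_
    rw [show m + 2 - 1 = m + 1 from rfl]
    exact_mod_cast Nat.lt_succ_self m
  have hres := residue_sum S N hNdeg
  have himg : ∀ x ∈ Finset.univ, ∀ y ∈ Finset.univ, z x = z y → x = y :=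
    fun x _ y _ h => hz h
  rw [hS] at hres
  rw [Finset.sum_insert h0sT, Finset.sum_insert hsT, hT, Finset.sum_image himg] at hres
  rw [← hT, ← hS] at hres
  -- nonzero facts
  have hzs : ∀ i, z i - s ≠ 0 := fun i => sub_ne_zero.mpr fun h => hsz i h.symm
  have hsz' : ∀ i, s - z i ≠ 0 := fun i => sub_ne_zero.mpr (hsz i)
  -- term at 0
  have h0 : N.eval 0 * ∏ r' ∈ S.erase 0, (0 - r')⁻¹ = -1 := by
    have e0 : S.erase 0 = insert s T := by rw [hS, Finset.erase_insert h0sT]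
    rw [e0, Finset.prod_insert hsT, hT, Finset.prod_image himg]
    simp only [hN, Polynomial.eval_mul, Polynomial.eval_C, Polynomial.eval_prod,
      Polynomial.eval_sub, Polynomial.eval_X, mul_zero, zero_sub]
    rw [Finset.prod_inv_distrib]
    have hP : (∏ i : Fin m, -z i) ≠ 0 :=
      Finset.prod_ne_zero_iff.mpr fun i _ => neg_ne_zero.mpr (hz0 i)
    field_simp
  -- term at s
  have hsterm : N.eval s * ∏ r' ∈ S.erase s, (s - r')⁻¹
      = ∏ i : Fin m, z i * (s * z i - 1) / (s - z i) := by
    have es : S.erase s = insert 0 T := by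
      rw [hS, Finset.erase_insert_of_ne (fun h => hs0 h.symm), Finset.erase_insert hsT]
    rw [es, Finset.prod_insert h0T, hT, Finset.prod_image himg]
    simp only [hN, Polynomial.eval_mul, Polynomial.eval_C, Polynomial.eval_prod,
      Polynomial.eval_sub, Polynomial.eval_X, sub_zero]
    have hrhs : ∏ i : Fin m, z i * (s * z i - 1) / (s - z i)
        = (∏ i : Fin m, (z i * z i * s - z i)) * ∏ i : Fin m, (s - z i)⁻¹ := by
      rw [← Finset.prod_mul_distrib]
      refine Finset.prod_congr rfl fun i _ => ?_
      rw [div_eq_mul_inv]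
      ring_nf
    rw [hrhs]
    set P1 := ∏ i : Fin m, (z i * z i * s - z i) with hP1
    set P2 := ∏ i : Fin m, (s - z i)⁻¹ with hP2
    field_simp
  -- terms at z i
  have hzterm : ∀ i : Fin m, N.eval (z i) * ∏ r' ∈ S.erase (z i), (z i - r')⁻¹
      = s * (z i * z i - 1) / (z i - s) *
          ∏ j ∈ Finset.univ.erase i, z j * (z i * z j - 1) / (z i - z j) := by
    intro i
    have hz0i := hz0 i
    have hzsi := hzs i
    have ez : S.erase (z i) = insert 0 (insert s (Finset.image z (Finset.univ.erase i))) := by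
      rw [hS, hT, Finset.erase_insert_of_ne (fun h => hz0 i h.symm),
        Finset.erase_insert_of_ne (hsz i), Finset.image_erase hz]
    have hsT' : s ∉ Finset.image z (Finset.univ.erase i) := by
      intro h
      exact hsT (hT ▸ Finset.image_subset_image (Finset.erase_subset _ _) h)
    have h0T' : (0 : F) ∉ insert s (Finset.image z (Finset.univ.erase i)) := by
      simp only [Finset.mem_insert, not_or]
      exact ⟨fun h => hs0 h.symm,
        fun h => h0T (hT ▸ Finset.image_subset_image (Finset.erase_subset _ _) h)⟩
    have himg' : ∀ x ∈ Finset.univ.erase i, ∀ y ∈ Finset.univ.erase i, z x = z y → x = y :=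
      fun x _ y _ h => hz h
    rw [ez, Finset.prod_insert h0T', Finset.prod_insert hsT', Finset.prod_image himg']
    simp only [hN, Polynomial.eval_mul, Polynomial.eval_C, Polynomial.eval_prod,
      Polynomial.eval_sub, Polynomial.eval_X, sub_zero]
    rw [← Finset.mul_prod_erase Finset.univ (fun j => z j * z j * z i - z j) (Finset.mem_univ i)]
    have hrhs : ∏ j ∈ Finset.univ.erase i, z j * (z i * z j - 1) / (z i - z j)
        = (∏ j ∈ Finset.univ.erase i, (z j * z j * z i - z j))
          * ∏ j ∈ Finset.univ.erase i, (z i - z j)⁻¹ := by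
      rw [← Finset.prod_mul_distrib]
      refine Finset.prod_congr rfl fun j _ => ?_
      rw [div_eq_mul_inv]
      ring_nf
    rw [hrhs]
    set P1 := ∏ j ∈ Finset.univ.erase i, (z j * z j * z i - z j) with hP1
    set P2 := ∏ j ∈ Finset.univ.erase i, (z i - z j)⁻¹ with hP2
    field_simp
  rw [h0, hsterm, Finset.sum_congr rfl (fun i _ => hzterm i)] at hres
  linear_combination hres



noncomputable section

namespace Stmt0

/-- Rational function field in the variables `x_1,…,x_m` (indexed by `Fin m`)
together with `β` (= `Sum.inr 0`) and `t` (= `Sum.inr 1`), over `ℚ`. -/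
abbrev K (m : ℕ) : Type := FractionRing (MvPolynomial (Fin m ⊕ Fin 2) ℚ)

def xv (m : ℕ) (i : Fin m) : K m :=
  algebraMap (MvPolynomial (Fin m ⊕ Fin 2) ℚ) (K m) (MvPolynomial.X (Sum.inl i))

def bet (m : ℕ) : K m :=
  algebraMap (MvPolynomial (Fin m ⊕ Fin 2) ℚ) (K m) (MvPolynomial.X (Sum.inr 0))

def tv (m : ℕ) : K m :=
  algebraMap (MvPolynomial (Fin m ⊕ Fin 2) ℚ) (K m) (MvPolynomial.X (Sum.inr 1))

/-- x ⊕ y = x + y + βxy -/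
def op (m : ℕ) (a c : K m) : K m := a + c + bet m * a * c

/-- x ⊖ y = (x − y)/(1 + βy) -/
def om (m : ℕ) (a c : K m) : K m := (a - c) / (1 + bet m * c)

-- basic nonvanishing facts
lemma ne_of_eval_ne {m : ℕ} {p q : MvPolynomial (Fin m ⊕ Fin 2) ℚ}
    (pt : (Fin m ⊕ Fin 2) → ℚ) (h : MvPolynomial.eval pt p ≠ MvPolynomial.eval pt q) :
    algebraMap (MvPolynomial (Fin m ⊕ Fin 2) ℚ) (K m) p
      ≠ algebraMap (MvPolynomial (Fin m ⊕ Fin 2) ℚ) (K m) q := by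
  intro hc
  exact h (congrArg _ (IsFractionRing.injective (MvPolynomial (Fin m ⊕ Fin 2) ℚ) (K m) hc))

lemma bet_ne_zero (m : ℕ) : bet m ≠ 0 := by
  have : (0 : K m) = algebraMap (MvPolynomial (Fin m ⊕ Fin 2) ℚ) (K m) 0 := by simp
  rw [bet, this]
  exact ne_of_eval_ne (fun _ => 1) (by simp)

lemma xv_sub_tv_ne (m : ℕ) (i : Fin m) : xv m i - tv m ≠ 0 := by
  rw [sub_ne_zero, xv, tv]
  exact ne_of_eval_ne (fun v => if v = Sum.inl i then 1 else 0) (by simp)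

lemma xv_ne_xv (m : ℕ) {i j : Fin m} (h : i ≠ j) : xv m i ≠ xv m j := by
  rw [xv, xv]
  refine ne_of_eval_ne (fun v => if v = Sum.inl i then 1 else 0) ?_
  have h2 : (Sum.inl j : Fin m ⊕ Fin 2) ≠ Sum.inl i := by simp [h.symm]
  simp [h2]

lemma one_add_bet_xv_ne (m : ℕ) (i : Fin m) : 1 + bet m * xv m i ≠ 0 := by
  have h1 : (1 : K m) + bet m * xv m i
      = algebraMap (MvPolynomial (Fin m ⊕ Fin 2) ℚ) (K m)
        (1 + MvPolynomial.X (Sum.inr 0) * MvPolynomial.X (Sum.inl i)) := by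
    simp [bet, xv]
  have h0 : (0 : K m) = algebraMap (MvPolynomial (Fin m ⊕ Fin 2) ℚ) (K m) 0 := by simp
  rw [h1, h0]
  exact ne_of_eval_ne (fun _ => 0) (by simp)

lemma one_add_bet_tv_ne (m : ℕ) : 1 + bet m * tv m ≠ 0 := by
  have h1 : (1 : K m) + bet m * tv m
      = algebraMap (MvPolynomial (Fin m ⊕ Fin 2) ℚ) (K m)
        (1 + MvPolynomial.X (Sum.inr 0) * MvPolynomial.X (Sum.inr 1)) := by
    simp [bet, tv]
  have h0 : (0 : K m) = algebraMap (MvPolynomial (Fin m ⊕ Fin 2) ℚ) (K m) 0 := by simp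
  rw [h1, h0]
  exact ne_of_eval_ne (fun _ => 0) (by simp)

theorem statement0 (m : ℕ) (hm : 1 ≤ m) :
    (∑ i : Fin m,
        op m (xv m i) (xv m i) / om m (xv m i) (tv m) *
          ∏ j ∈ Finset.univ.erase i, op m (xv m i) (xv m j) / om m (xv m i) (xv m j))
      + ∏ i : Fin m, op m (tv m) (xv m i) / om m (tv m) (xv m i) = 1 := by
  classical
  set z : Fin m → K m := fun i => 1 + bet m * xv m i with hzdef
  set sK : K m := 1 + bet m * tv m with hsdef
  have hb := bet_ne_zero m
  have hz0 : ∀ i, z i ≠ 0 := fun i => one_add_bet_xv_ne m i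
  have hs0 : sK ≠ 0 := one_add_bet_tv_ne m
  have hz : Function.Injective z := by
    intro i j h
    by_contra hne
    apply xv_ne_xv m hne
    have h2 : bet m * xv m i = bet m * xv m j := by
      have := h
      rw [hzdef] at this
      simpa using this
    exact mul_left_cancel₀ hb h2
  have hsz : ∀ i, sK ≠ z i := by
    intro i h
    apply xv_sub_tv_ne m i
    have h2 : bet m * tv m = bet m * xv m i := by
      rw [hsdef, hzdef] at h
      simpa using h
    have := mul_left_cancel₀ hb h2
    rw [← this]; ring
  have hzs : ∀ i, z i - sK ≠ 0 := fun i => sub_ne_zero.mpr fun h => hsz i h.symm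
  have hszs : ∀ i, sK - z i ≠ 0 := fun i => sub_ne_zero.mpr (hsz i)
  have hzz : ∀ i j, i ≠ j → z i - z j ≠ 0 := by
    intro i j hij
    exact sub_ne_zero.mpr fun h => hij (hz h)
  -- per-factor identities
  have hA : ∀ i, op m (xv m i) (xv m i) / om m (xv m i) (tv m)
      = sK * (z i * z i - 1) / (z i - sK) := by
    intro i
    rw [op, om, hzdef, hsdef]
    have h1 := xv_sub_tv_ne m i
    have h2 := one_add_bet_tv_ne m
    have h3 : (1 + bet m * xv m i) - (1 + bet m * tv m) ≠ 0 := by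
      have := hzs i
      rwa [hzdef, hsdef] at this
    rw [div_div_eq_mul_div, div_eq_div_iff h1 h3]
    ring
  have hB : ∀ i j, i ≠ j → op m (xv m i) (xv m j) / om m (xv m i) (xv m j)
      = z j * (z i * z j - 1) / (z i - z j) := by
    intro i j hij
    rw [op, om, hzdef]
    have h1 : xv m i - xv m j ≠ 0 := sub_ne_zero.mpr (xv_ne_xv m hij)
    have h2 := one_add_bet_xv_ne m j
    have h3 : (1 + bet m * xv m i) - (1 + bet m * xv m j) ≠ 0 := by
      have := hzz i j hij
      rwa [hzdef] at this
    rw [div_div_eq_mul_div, div_eq_div_iff h1 h3]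
    ring
  have hC : ∀ i, op m (tv m) (xv m i) / om m (tv m) (xv m i)
      = z i * (sK * z i - 1) / (sK - z i) := by
    intro i
    rw [op, om, hzdef, hsdef]
    have h1 : tv m - xv m i ≠ 0 := by
      intro h
      apply xv_sub_tv_ne m i
      rw [sub_eq_zero] at h ⊢
      exact h.symm
    have h2 := one_add_bet_xv_ne m i
    have h3 : (1 + bet m * tv m) - (1 + bet m * xv m i) ≠ 0 := by
      have := hszs i
      rwa [hzdef, hsdef] at this
    rw [div_div_eq_mul_div, div_eq_div_iff h1 h3]
    ring
  calc (∑ i : Fin m,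
        op m (xv m i) (xv m i) / om m (xv m i) (tv m) *
          ∏ j ∈ Finset.univ.erase i, op m (xv m i) (xv m j) / om m (xv m i) (xv m j))
      + ∏ i : Fin m, op m (tv m) (xv m i) / om m (tv m) (xv m i)
      = (∑ i : Fin m, sK * (z i * z i - 1) / (z i - sK) *
          ∏ j ∈ Finset.univ.erase i, z j * (z i * z j - 1) / (z i - z j))
        + ∏ i : Fin m, z i * (sK * z i - 1) / (sK - z i) := by
        congr 1
        · refine Finset.sum_congr rfl fun i _ => ?_
          rw [hA i]
          congr 1
          exact Finset.prod_congr rfl fun j hj => hB i j (Finset.mem_erase.mp hj).1.symm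
        · exact Finset.prod_congr rfl fun i _ => hC i
    _ = 1 := key_identity z hz hz0 sK hs0 hsz

end Stmt0
end
end

section
/- For every n ≥ 1 and each k ∈ {0, 1, 2}, the rational function Σ_{i=1}^n (1 + βx_i)^k · Π_{j≠i} (x_i ⊕ x_j)/(x_i ⊖ x_j) equals Π_{i=1}^n (1 + βx_i)^k − Π_{i=1}^n (1 + βx_i) if n is even, and equals Π_{i=1}^n (1 + βx_i)^k if n is odd, as an identity in the field of rational functions in β, x_1, …, x_n. -/
/-!
STATEMENT 1: For every n ≥ 1 and each k ∈ {0,1,2},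
  Σ_{i=1}^n (1 + βx_i)^k · Π_{j≠i} (x_i ⊕ x_j)/(x_i ⊖ x_j)
equals Π_{i=1}^n (1+βx_i)^k − Π_{i=1}^n (1+βx_i) if n is even,
and Π_{i=1}^n (1+βx_i)^k if n is odd,
in the field of rational functions in β, x_1, …, x_n.
-/

open Polynomial Finset Lagrange

lemma key {F : Type*} [Field F] {ι : Type*} [DecidableEq ι] (s : Finset ι) (v : ι → F)
    (hvs : Set.InjOn v s) (f : F[X]) (hf : f.degree < s.card) :
    ∑ i ∈ s, f.eval (v i) * Lagrange.nodalWeight s v i = f.coeff (s.card - 1) := by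
  have h := Lagrange.eq_interpolate hvs hf
  conv_rhs => rw [h]
  rw [Lagrange.interpolate_apply, Polynomial.finset_sum_coeff]
  refine Finset.sum_congr rfl fun i hi => ?_
  rw [Lagrange.basis_eq_prod_sub_inv_mul_nodal_div hi, ← Lagrange.nodal_erase_eq_nodal_div hi,
    ← mul_assoc, ← Polynomial.C_mul, Polynomial.coeff_C_mul]
  have hmon : (Lagrange.nodal (s.erase i) v).Monic := Lagrange.nodal_monic
  have hdeg : (Lagrange.nodal (s.erase i) v).natDegree = s.card - 1 := by
    rw [Lagrange.natDegree_nodal, Finset.card_erase_of_mem hi]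
  rw [show s.card - 1 = (Lagrange.nodal (s.erase i) v).natDegree from hdeg.symm,
    hmon.coeff_natDegree, mul_one, mul_comm]

lemma erase_inl {α β : Type*} [Fintype α] [Fintype β] [DecidableEq α] [DecidableEq β] (a : α) :
    (Finset.univ : Finset (α ⊕ β)).erase (Sum.inl a)
      = (Finset.univ.erase a).disjSum Finset.univ := by
  ext x; cases x <;> simp [eq_comm]

lemma erase_inr {α β : Type*} [Fintype α] [Fintype β] [DecidableEq α] [DecidableEq β] (b : β) :
    (Finset.univ : Finset (α ⊕ β)).erase (Sum.inr b)
      = Finset.univ.disjSum (Finset.univ.erase b) := by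
  ext x; cases x <;> simp [eq_comm]

lemma master {F : Type*} [Field F] (n : ℕ) (hn : 1 ≤ n) (k : ℕ) (hk : k ≤ 2)
    (y : Fin n → F) (h0 : ∀ i, y i ≠ 0) (h1 : ∀ i, y i ≠ 1) (hm1 : ∀ i, y i ≠ -1)
    (hinj : Function.Injective y) (h2 : (2 : F) ≠ 0) :
    ∑ i : Fin n, (y i) ^ k * ∏ j ∈ Finset.univ.erase i,
        (y j * (y i * y j - 1)) / (y i - y j)
      = if Even n then (∏ i, y i) ^ k - ∏ i, y i else (∏ i, y i) ^ k := by
  classical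
  set P : F := ∏ i, y i with hPdef
  have hP : P ≠ 0 := Finset.prod_ne_zero_iff.mpr fun i _ => h0 i
  set w : Fin 3 → F := ![0, 1, -1] with hwdef
  set v : Fin n ⊕ Fin 3 → F := Sum.elim y w with hvdef
  have hw0 : w 0 = 0 := rfl
  have hw1 : w 1 = 1 := rfl
  have hw2 : w 2 = -1 := rfl
  -- injectivity of nodes
  have hv : Set.InjOn v (Finset.univ : Finset (Fin n ⊕ Fin 3)) := by
    intro a _ b _ hab
    rcases a with i | bi <;> rcases b with j | bj
    · exact congrArg Sum.inl (hinj hab)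
    · exfalso
      fin_cases bj <;> simp [v, w] at hab
      · exact h0 i hab
      · exact h1 i hab
      · exact hm1 i hab
    · exfalso
      fin_cases bi <;> simp [v, w] at hab
      · exact h0 j hab.symm
      · exact h1 j hab.symm
      · exact hm1 j hab.symm
    · fin_cases bi <;> fin_cases bj
      · rfl
      · exact absurd (show (0:F) = 1 from hab) zero_ne_one
      · exact absurd (show (0:F) = -1 from hab) (fun h => h2 (by linear_combination 2*h))
      · exact absurd (show (1:F) = 0 from hab) one_ne_zero
      · rfl
      · exact absurd (show (1:F) = -1 from hab) (fun h => h2 (by linear_combination h))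
      · exact absurd (show (-1:F) = 0 from hab) (fun h => h2 (by linear_combination -2*h))
      · exact absurd (show (-1:F) = 1 from hab) (fun h => h2 (by linear_combination -h))
      · rfl
  -- the interpolating polynomial
  set f : Polynomial F := X ^ k * Lagrange.nodal Finset.univ (fun j => (y j)⁻¹) with hfdef
  have hcard : (Finset.univ : Finset (Fin n ⊕ Fin 3)).card = n + 3 := by
    simp
  have hfdeg : f.degree = ((k + n : ℕ) : WithBot ℕ) := by
    rw [hfdef, degree_mul, degree_X_pow, Lagrange.degree_nodal]
    push_cast
    simp
  have hlt : f.degree < ((Finset.univ : Finset (Fin n ⊕ Fin 3)).card : WithBot ℕ) := by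
    rw [hfdeg, hcard]
    exact_mod_cast (by omega : k + n < n + 3)
  have hkey := key Finset.univ v hv f hlt
  have hcoeff : f.coeff ((Finset.univ : Finset (Fin n ⊕ Fin 3)).card - 1)
      = if k = 2 then 1 else 0 := by
    rw [hcard, show n + 3 - 1 = n + 2 from rfl]
    by_cases hk2 : k = 2
    · subst hk2
      have hmon : f.Monic := (monic_X_pow 2).mul Lagrange.nodal_monic
      have hnd : f.natDegree = n + 2 := natDegree_eq_of_degree_eq_some
        (by rw [hfdeg]; norm_cast; ring)
      rw [if_pos rfl, ← hnd, hmon.coeff_natDegree]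
    · have hnd : f.natDegree = k + n := natDegree_eq_of_degree_eq_some hfdeg
      rw [if_neg hk2, Polynomial.coeff_eq_zero_of_natDegree_lt (by rw [hnd]; omega)]
  -- split the key sum over the two node families
  rw [← Finset.univ_disjSum_univ, Finset.sum_disjSum] at hkey
  -- weight at an x-node
  have hWinl : ∀ i : Fin n, Lagrange.nodalWeight Finset.univ v (Sum.inl i)
      = (∏ j ∈ Finset.univ.erase i, (y i - y j)⁻¹)
        * ((y i - 0)⁻¹ * ((y i - 1)⁻¹ * ((y i - (-1))⁻¹ * 1))) := by
    intro i
    rw [Lagrange.nodalWeight, erase_inl, Finset.prod_disjSum, Fin.prod_univ_three]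
    show (∏ j ∈ Finset.univ.erase i, (y i - y j)⁻¹)
        * ((y i - 0)⁻¹ * (y i - 1)⁻¹ * (y i - (-1))⁻¹) = _
    ring
  -- the main terms
  have hterm : ∀ i : Fin n,
      (y i) ^ k * ∏ j ∈ Finset.univ.erase i, (y j * (y i * y j - 1)) / (y i - y j)
        = P ^ 2 * (f.eval (v (Sum.inl i)) * Lagrange.nodalWeight Finset.univ v (Sum.inl i)) := by
    intro i
    have hEval : f.eval (v (Sum.inl i))
        = (y i) ^ k * ((y i - (y i)⁻¹) * ∏ j ∈ Finset.univ.erase i, (y i - (y j)⁻¹)) := by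
      show f.eval (y i) = _
      rw [hfdef, Polynomial.eval_mul, Polynomial.eval_pow, Polynomial.eval_X,
        Lagrange.eval_nodal, ← Finset.mul_prod_erase _ _ (Finset.mem_univ i)]
    rw [hEval, hWinl i]
    have hA : ∏ j ∈ Finset.univ.erase i, (y j * (y i * y j - 1)) / (y i - y j)
        = (∏ j ∈ Finset.univ.erase i, y j) ^ 2
          * ((∏ j ∈ Finset.univ.erase i, (y i - (y j)⁻¹))
            * ∏ j ∈ Finset.univ.erase i, (y i - y j)⁻¹) := by
      rw [← Finset.prod_pow, ← Finset.prod_mul_distrib, ← Finset.prod_mul_distrib]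
      refine Finset.prod_congr rfl fun j hj => ?_
      have hyj := h0 j
      have hne : y i - y j ≠ 0 := sub_ne_zero_of_ne
        (fun h => (Finset.mem_erase.mp hj).1 (hinj h).symm)
      field_simp
    rw [hA, show P = y i * ∏ j ∈ Finset.univ.erase i, y j from
      (Finset.mul_prod_erase _ _ (Finset.mem_univ i)).symm, Finset.prod_inv_distrib]
    have hyi := h0 i
    have hyi1 : y i - 1 ≠ 0 := sub_ne_zero_of_ne (h1 i)
    have hyip1 : y i + 1 ≠ 0 := by
      intro h; exact hm1 i (by linear_combination h)
    have hC : ∏ j ∈ Finset.univ.erase i, (y i - y j) ≠ 0 :=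
      Finset.prod_ne_zero_iff.mpr fun j hj => sub_ne_zero_of_ne
        (fun h => (Finset.mem_erase.mp hj).1 (hinj h).symm)
    set E1 := ∏ j ∈ Finset.univ.erase i, (y i - (y j)⁻¹) with hE1
    set C := ∏ j ∈ Finset.univ.erase i, (y i - y j) with hCdef
    set A := ∏ j ∈ Finset.univ.erase i, y j with hAdef
    field_simp
    rw [eq_div_iff (by rwa [sub_neg_eq_add])]
    ring
  -- boundary terms
  have hWinr : ∀ b : Fin 3, Lagrange.nodalWeight Finset.univ v (Sum.inr b)
      = (∏ j : Fin n, (w b - y j)⁻¹) * ∏ c ∈ Finset.univ.erase b, (w b - w c)⁻¹ := by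
    intro b
    rw [Lagrange.nodalWeight, erase_inr, Finset.prod_disjSum]
    rfl
  have hEvalInr : ∀ b : Fin 3, f.eval (v (Sum.inr b)) = (w b) ^ k * ∏ j, (w b - (y j)⁻¹) := by
    intro b
    show f.eval (w b) = _
    rw [hfdef, Polynomial.eval_mul, Polynomial.eval_pow, Polynomial.eval_X, Lagrange.eval_nodal]
  have e0 : (Finset.univ.erase (0 : Fin 3)) = {1, 2} := by decide
  have e1 : (Finset.univ.erase (1 : Fin 3)) = {0, 2} := by decide
  have e2 : (Finset.univ.erase (2 : Fin 3)) = {0, 1} := by decide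
  have ht0 : f.eval (v (Sum.inr 0)) * Lagrange.nodalWeight Finset.univ v (Sum.inr 0)
      = (0 : F) ^ k * -((P ^ 2)⁻¹) := by
    rw [hEvalInr 0, hWinr 0, e0, Finset.prod_pair (by decide), hw0, hw1, hw2]
    have hc : (∏ j, ((0 : F) - (y j)⁻¹)) * (∏ j, ((0 : F) - y j)⁻¹) = (P ^ 2)⁻¹ := by
      rw [← Finset.prod_mul_distrib, hPdef, ← Finset.prod_pow, ← Finset.prod_inv_distrib]
      refine Finset.prod_congr rfl fun j _ => ?_
      field_simp
      ring
    calc ((0 : F) ^ k * ∏ j, ((0 : F) - (y j)⁻¹))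
          * ((∏ j, ((0 : F) - y j)⁻¹) * (((0 : F) - 1)⁻¹ * ((0 : F) - (-1))⁻¹))
        = (0 : F) ^ k * ((∏ j, ((0 : F) - (y j)⁻¹)) * (∏ j, ((0 : F) - y j)⁻¹))
            * (((0 : F) - 1)⁻¹ * ((0 : F) - (-1))⁻¹) := by ring
      _ = (0 : F) ^ k * -((P ^ 2)⁻¹) := by rw [hc]; norm_num
  have ht1 : f.eval (v (Sum.inr 1)) * Lagrange.nodalWeight Finset.univ v (Sum.inr 1)
      = (-1 : F) ^ n * (2⁻¹ * P⁻¹) := by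
    rw [hEvalInr 1, hWinr 1, e1, Finset.prod_pair (by decide), hw0, hw1, hw2]
    have hc : (∏ j, ((1 : F) - (y j)⁻¹)) * (∏ j, ((1 : F) - y j)⁻¹) = (-1 : F) ^ n * P⁻¹ := by
      rw [← Finset.prod_mul_distrib, hPdef, ← Finset.prod_inv_distrib,
        show ((-1 : F) ^ n : F) = ∏ _j : Fin n, (-1 : F) by
          rw [Finset.prod_const]; simp,
        ← Finset.prod_mul_distrib]
      refine Finset.prod_congr rfl fun j _ => ?_
      have hj0 := h0 j
      have hj1 : (1 : F) - y j ≠ 0 := fun h => h1 j (by linear_combination -h)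
      field_simp
      ring
    calc ((1 : F) ^ k * ∏ j, ((1 : F) - (y j)⁻¹))
          * ((∏ j, ((1 : F) - y j)⁻¹) * (((1 : F) - 0)⁻¹ * ((1 : F) - (-1))⁻¹))
        = ((∏ j, ((1 : F) - (y j)⁻¹)) * (∏ j, ((1 : F) - y j)⁻¹))
            * ((1 : F) ^ k * (((1 : F) - 0)⁻¹ * ((1 : F) - (-1))⁻¹)) := by ring
      _ = (-1 : F) ^ n * (2⁻¹ * P⁻¹) := by rw [hc]; norm_num; ring
  have ht2 : f.eval (v (Sum.inr 2)) * Lagrange.nodalWeight Finset.univ v (Sum.inr 2)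
      = (-1 : F) ^ k * (2⁻¹ * P⁻¹) := by
    rw [hEvalInr 2, hWinr 2, e2, Finset.prod_pair (by decide), hw0, hw1, hw2]
    have hc : (∏ j, ((-1 : F) - (y j)⁻¹)) * (∏ j, ((-1 : F) - y j)⁻¹) = P⁻¹ := by
      rw [← Finset.prod_mul_distrib, hPdef, ← Finset.prod_inv_distrib]
      refine Finset.prod_congr rfl fun j _ => ?_
      have hj0 := h0 j
      have hj1 : (-1 : F) - y j ≠ 0 := fun h => hm1 j (by linear_combination -h)
      field_simp
      ring
    calc ((-1 : F) ^ k * ∏ j, ((-1 : F) - (y j)⁻¹))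
          * ((∏ j, ((-1 : F) - y j)⁻¹) * (((-1 : F) - 0)⁻¹ * ((-1 : F) - 1)⁻¹))
        = ((∏ j, ((-1 : F) - (y j)⁻¹)) * (∏ j, ((-1 : F) - y j)⁻¹))
            * ((-1 : F) ^ k * (((-1 : F) - 0)⁻¹ * ((-1 : F) - 1)⁻¹)) := by ring
      _ = (-1 : F) ^ k * (2⁻¹ * P⁻¹) := by
          rw [hc]
          norm_num
          ring
  -- assemble
  rw [Finset.univ_disjSum_univ] at hkey
  have hsum : ∑ i : Fin n, f.eval (v (Sum.inl i)) * Lagrange.nodalWeight Finset.univ v (Sum.inl i)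
      = (if k = 2 then 1 else 0)
        - ((0 : F) ^ k * -((P ^ 2)⁻¹) + (-1 : F) ^ n * (2⁻¹ * P⁻¹)
            + (-1 : F) ^ k * (2⁻¹ * P⁻¹)) := by
    rw [eq_sub_iff_add_eq, ← ht0, ← ht1, ← ht2, ← hcoeff, ← hkey, ← add_assoc,
      Fin.sum_univ_three]
    ring
  calc ∑ i : Fin n, (y i) ^ k * ∏ j ∈ Finset.univ.erase i, (y j * (y i * y j - 1)) / (y i - y j)
      = ∑ i : Fin n, P ^ 2
          * (f.eval (v (Sum.inl i)) * Lagrange.nodalWeight Finset.univ v (Sum.inl i)) :=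
        Finset.sum_congr rfl fun i _ => hterm i
    _ = P ^ 2 * ∑ i : Fin n,
          f.eval (v (Sum.inl i)) * Lagrange.nodalWeight Finset.univ v (Sum.inl i) := by
        rw [Finset.mul_sum]
    _ = P ^ 2 * ((if k = 2 then 1 else 0)
          - ((0 : F) ^ k * -((P ^ 2)⁻¹) + (-1 : F) ^ n * (2⁻¹ * P⁻¹)
              + (-1 : F) ^ k * (2⁻¹ * P⁻¹))) := by rw [hsum]
    _ = if Even n then P ^ k - P else P ^ k := by
        rcases Nat.even_or_odd n with he | ho
        · rw [if_pos he, he.neg_one_pow]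
          interval_cases k <;> norm_num <;> field_simp <;> ring
        · rw [if_neg (Nat.not_even_iff_odd.mpr ho), ho.neg_one_pow]
          interval_cases k <;> norm_num <;> field_simp <;> ring


noncomputable section

namespace Stmt1

/-- Rational function field in the variables `x_1,…,x_n` and `β`, over `ℚ`. -/
abbrev K (n : ℕ) : Type := FractionRing (MvPolynomial (Fin n ⊕ Unit) ℚ)

def xv (n : ℕ) (i : Fin n) : K n :=
  algebraMap (MvPolynomial (Fin n ⊕ Unit) ℚ) (K n) (MvPolynomial.X (Sum.inl i))

def bet (n : ℕ) : K n :=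
  algebraMap (MvPolynomial (Fin n ⊕ Unit) ℚ) (K n) (MvPolynomial.X (Sum.inr ()))

/-- x ⊕ y = x + y + βxy -/
def op (n : ℕ) (a c : K n) : K n := a + c + bet n * a * c

/-- x ⊖ y = (x − y)/(1 + βy) -/
def om (n : ℕ) (a c : K n) : K n := (a - c) / (1 + bet n * c)

theorem statement1 (n : ℕ) (hn : 1 ≤ n) (k : ℕ) (hk : k ≤ 2) :
    ∑ i : Fin n,
        (1 + bet n * xv n i) ^ k *
          ∏ j ∈ Finset.univ.erase i, op n (xv n i) (xv n j) / om n (xv n i) (xv n j)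
      =
      if Even n then
        ∏ i : Fin n, (1 + bet n * xv n i) ^ k - ∏ i : Fin n, (1 + bet n * xv n i)
      else
        ∏ i : Fin n, (1 + bet n * xv n i) ^ k := by
  classical
  have hinjA : Function.Injective
      (algebraMap (MvPolynomial (Fin n ⊕ Unit) ℚ) (K n)) :=
    IsFractionRing.injective _ _
  have hpoly : ∀ (p : MvPolynomial (Fin n ⊕ Unit) ℚ),
      MvPolynomial.eval (fun _ => (0 : ℚ)) p ≠ 0 →
      algebraMap (MvPolynomial (Fin n ⊕ Unit) ℚ) (K n) p ≠ 0 := by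
    intro p hg h
    have hp0 : p = 0 := (map_eq_zero_iff _ hinjA).mp h
    rw [hp0] at hg
    simp at hg
  have hb : bet n ≠ 0 :=
    (map_ne_zero_iff _ hinjA).mpr (MvPolynomial.X_ne_zero _)
  have hxv : ∀ i, xv n i ≠ 0 := fun i =>
    (map_ne_zero_iff _ hinjA).mpr (MvPolynomial.X_ne_zero _)
  have hxvinj : Function.Injective (xv n) := fun i j h =>
    Sum.inl_injective (MvPolynomial.X_injective (hinjA h))
  set y : Fin n → K n := fun i => 1 + bet n * xv n i with hy
  have h0 : ∀ i, y i ≠ 0 := by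
    intro i
    have : y i = algebraMap (MvPolynomial (Fin n ⊕ Unit) ℚ) (K n)
        (1 + MvPolynomial.X (Sum.inr ()) * MvPolynomial.X (Sum.inl i)) := by
      simp [hy, bet, xv, map_add, map_mul, map_one]
    rw [this]
    apply hpoly
    simp
  have h1 : ∀ i, y i ≠ 1 := by
    intro i h
    have : bet n * xv n i = 0 := by
      have := h
      simp only [hy] at this
      linear_combination this
    exact mul_ne_zero hb (hxv i) this
  have hm1 : ∀ i, y i ≠ -1 := by
    intro i h
    have heq : algebraMap (MvPolynomial (Fin n ⊕ Unit) ℚ) (K n)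
        (2 + MvPolynomial.X (Sum.inr ()) * MvPolynomial.X (Sum.inl i)) = 0 := by
      have h2' : (2 : K n) + bet n * xv n i = 0 := by
        simp only [hy] at h
        linear_combination h
      rw [← h2']
      simp [bet, xv, map_add, map_mul, map_ofNat]
    refine hpoly _ ?_ heq
    simp
    rw [map_ofNat]
    norm_num
  have hinj : Function.Injective y := by
    intro i j h
    simp only [hy] at h
    have : bet n * (xv n i - xv n j) = 0 := by linear_combination h
    rcases mul_eq_zero.mp this with h' | h'
    · exact absurd h' hb
    · exact hxvinj (by linear_combination h')
  have h2 : (2 : K n) ≠ 0 := by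
    have : (2 : K n) = algebraMap (MvPolynomial (Fin n ⊕ Unit) ℚ) (K n) 2 :=
      (map_ofNat _ 2).symm
    rw [this]
    apply hpoly
    simp
    rw [map_ofNat]
    norm_num
  have hconv : ∀ i : Fin n,
      (1 + bet n * xv n i) ^ k *
          ∏ j ∈ Finset.univ.erase i, op n (xv n i) (xv n j) / om n (xv n i) (xv n j)
        = y i ^ k
            * ∏ j ∈ Finset.univ.erase i, (y j * (y i * y j - 1)) / (y i - y j) := by
    intro i
    congr 1
    refine Finset.prod_congr rfl fun j hj => ?_
    have hij : j ≠ i := (Finset.mem_erase.mp hj).1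
    have hx : xv n i - xv n j ≠ 0 :=
      sub_ne_zero_of_ne fun h => hij (hxvinj h).symm
    have h1pj : 1 + bet n * xv n j ≠ 0 := h0 j
    have hyij : y i - y j ≠ 0 := by
      simp only [hy]
      intro h
      apply mul_ne_zero hb hx
      linear_combination h
    simp only [op, om, hy]
    rw [div_div_eq_mul_div]
    rw [div_eq_div_iff hx hyij]
    ring
  rw [Finset.sum_congr rfl fun i _ => hconv i,
    master n hn k hk y h0 h1 hm1 hinj h2]
  simp only [hy, Finset.prod_pow]

end Stmt1
end
end

section
/- For every m ≥ 1, the Pfaffian of the 2m × 2m skew-symmetric matrix with (i,j) entry (x_i − x_j)/(x_i ⊕ x_j) equals Π_{1≤i<j≤2m} (x_i − x_j)/(x_i ⊕ x_j), as an identity in the field of rational functions in β, x_1, …, x_{2m}. -/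
/-!
STATEMENT 2: For every m ≥ 1, the Pfaffian of the 2m × 2m skew-symmetric matrix
with (i,j) entry (x_i − x_j)/(x_i ⊕ x_j) equals Π_{1≤i<j≤2m} (x_i − x_j)/(x_i ⊕ x_j),
in the field of rational functions in β, x_1, …, x_{2m}.
Here Pf(A) = (1/(2^m m!)) Σ_{σ ∈ S_{2m}} sgn(σ) Π_{k=1}^m a_{σ(2k−1), σ(2k)}.
-/

noncomputable section

namespace Stmt2

/-- Rational function field in the variables `x_1,…,x_{2m}` and `β`, over `ℚ`. -/
abbrev K (m : ℕ) : Type := FractionRing (MvPolynomial (Fin (2 * m) ⊕ Unit) ℚ)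

def xv (m : ℕ) (i : Fin (2 * m)) : K m :=
  algebraMap (MvPolynomial (Fin (2 * m) ⊕ Unit) ℚ) (K m) (MvPolynomial.X (Sum.inl i))

def bet (m : ℕ) : K m :=
  algebraMap (MvPolynomial (Fin (2 * m) ⊕ Unit) ℚ) (K m) (MvPolynomial.X (Sum.inr ()))

/-- x ⊕ y = x + y + βxy -/
def op (m : ℕ) (a c : K m) : K m := a + c + bet m * a * c

/-- The Pfaffian of an `N × N` matrix (intended for even `N`):
`Pf(A) = (1/(2^(N/2) (N/2)!)) Σ_{σ} sgn(σ) Π_{k=1}^{N/2} a_{σ(2k−1), σ(2k)}`. -/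
def pf {F : Type} [Field F] (N : ℕ) (M : Matrix (Fin N) (Fin N) F) : F :=
  ((2 : F) ^ (N / 2) * ((N / 2).factorial : F))⁻¹ *
    ∑ σ : Equiv.Perm (Fin N),
      ((Equiv.Perm.sign σ : ℤ) : F) *
        ∏ k : Fin (N / 2),
          M (σ ⟨2 * k.val, by have := k.isLt; omega⟩)
            (σ ⟨2 * k.val + 1, by have := k.isLt; omega⟩)

open Finset Equiv Equiv.Perm Polynomial

section General

variable {F : Type*} [Field F]

/-- The un-normalized Pfaffian sum. -/
def T (n : ℕ) (M : Matrix (Fin n) (Fin n) F) : F :=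
  ∑ σ : Equiv.Perm (Fin n),
    ((Equiv.Perm.sign σ : ℤ) : F) *
      ∏ k : Fin (n / 2),
        M (σ ⟨2 * k.val, by have := k.isLt; omega⟩)
          (σ ⟨2 * k.val + 1, by have := k.isLt; omega⟩)



theorem res_sum {ι : Type*} [DecidableEq ι] (S : Finset ι) (v : ι → F)
    (hv : Set.InjOn v S) (f : F[X]) (hf : f.natDegree + 2 ≤ S.card) :
    ∑ k ∈ S, f.eval (v k) * ∏ j ∈ S.erase k, (v k - v j)⁻¹ = 0 := by
  classical
  have hdeg : f.degree < (S.card : WithBot ℕ) :=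
    lt_of_le_of_lt Polynomial.degree_le_natDegree (by exact_mod_cast (by omega : f.natDegree < S.card))
  have key := Lagrange.eq_interpolate (v := v) hv hdeg
  have hco := congrArg (fun p : F[X] => p.coeff (S.card - 1)) key
  simp only [Lagrange.interpolate_apply, Polynomial.finset_sum_coeff,
    Polynomial.coeff_C_mul] at hco
  have hbco : ∀ i ∈ S, (Lagrange.basis S v i).coeff (S.card - 1)
      = ∏ j ∈ S.erase i, (v i - v j)⁻¹ := by
    intro i hi
    have hcard : (S.erase i).card = S.card - 1 := Finset.card_erase_of_mem hi
    have h1 : ∀ j ∈ S.erase i, (Lagrange.basisDivisor (v i) (v j)).natDegree ≤ 1 := by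
      intro j _
      refine le_trans (Polynomial.natDegree_mul_le) ?_
      simp [Polynomial.natDegree_X_sub_C]
    have := Polynomial.coeff_prod_of_natDegree_le
      (s := S.erase i) (f := fun j => Lagrange.basisDivisor (v i) (v j)) (n := 1) h1
    rw [Lagrange.basis, ← hcard, ← mul_one (#(S.erase i)), this]
    refine Finset.prod_congr rfl fun j _ => ?_
    simp [Lagrange.basisDivisor, Polynomial.coeff_C_mul, Polynomial.coeff_sub,
      Polynomial.coeff_X_one, Polynomial.coeff_C]
  have h0 : f.coeff (S.card - 1) = 0 :=
    Polynomial.coeff_eq_zero_of_natDegree_lt (by omega)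
  rw [h0] at hco
  have hstep : ∑ k ∈ S, f.eval (v k) * ∏ j ∈ S.erase k, (v k - v j)⁻¹
      = ∑ x ∈ S, eval (v x) f * (Lagrange.basis S v x).coeff (S.card - 1) :=
    Finset.sum_congr rfl fun i hi => by rw [hbco i hi]
  rw [hstep]
  exact hco.symm

def gq (β u v : F) : F := (u - v) / (u + v + β * u * v)

theorem gq_anti (β u v : F) : gq β u v = - gq β v u := by
  unfold gq
  rw [show v + u + β * v * u = u + v + β * u * v from by ring, ← neg_div, neg_sub]

theorem gq_ne_zero {β u v : F} (h1 : u ≠ v) (h2 : u + v + β * u * v ≠ 0) : gq β u v ≠ 0 :=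
  div_ne_zero (sub_ne_zero.2 h1) h2

theorem count1 {n : ℕ} (a : Fin n) :
    ((univ : Finset (Fin n)).filter (fun q => q < a)).card = a.val := by
  have : ((univ : Finset (Fin n)).filter (fun q => q < a)) = Finset.Iio a := by
    ext x; simp [Finset.mem_Iio]
  rw [this, Fin.card_Iio]

theorem count2 {n : ℕ} (a : Fin (n + 2)) (b' : Fin (n + 1)) :
    (((univ : Finset (Fin (n + 2))).erase a).filter
      (fun q => q < a.succAbove b')).card = b'.val := by
  have h : (((univ : Finset (Fin (n + 2))).erase a).filter (fun q => q < a.succAbove b'))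
      = (Finset.Iio (a.succAbove b')).erase a := by
    ext x; simp [Finset.mem_Iio, Finset.mem_erase, and_comm]
  rw [h]
  rcases lt_or_ge (b'.castSucc) a with h1 | h1
  · rw [Fin.succAbove_of_castSucc_lt _ _ h1]
    rw [Finset.erase_eq_of_notMem (by rw [Finset.mem_Iio]; exact not_lt.mpr (le_of_lt h1))]
    rw [Fin.card_Iio, Fin.coe_castSucc]
  · rw [Fin.succAbove_of_le_castSucc _ _ h1]
    rw [Finset.card_erase_of_mem (by rw [Finset.mem_Iio]; exact lt_of_le_of_lt h1 (Fin.castSucc_lt_succ : b'.castSucc < b'.succ))]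
    rw [Fin.card_Iio, Fin.val_succ]
    omega

theorem peel' {N : ℕ} (β : F) (y : Fin N → F) (S : Finset (Fin N)) (a : Fin N) (ha : a ∈ S) :
    (∏ p ∈ S, ∏ q ∈ S.filter (fun q => p < q), gq β (y p) (y q))
      = (-1 : F) ^ ((S.filter (fun q => q < a)).card) *
      (∏ i ∈ S.erase a, gq β (y a) (y i)) *
      (∏ p ∈ S.erase a, ∏ q ∈ (S.erase a).filter (fun q => p < q), gq β (y p) (y q)) := by
  classical
  rw [← Finset.mul_prod_erase _ _ ha]
  have hinner : ∀ p ∈ S.erase a,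
      (∏ q ∈ S.filter (fun q => p < q), gq β (y p) (y q))
        = (if p < a then gq β (y p) (y a) else 1) *
          ∏ q ∈ (S.erase a).filter (fun q => p < q), gq β (y p) (y q) := by
    intro p hp
    by_cases hpa : p < a
    · have hset : S.filter (fun q => p < q)
          = insert a ((S.erase a).filter (fun q => p < q)) := by
        ext q
        simp only [Finset.mem_filter, Finset.mem_insert, Finset.mem_erase]
        constructor
        · rintro ⟨hq, hlt⟩
          rcases eq_or_ne q a with rfl | hqa
          · exact Or.inl rfl
          · exact Or.inr ⟨⟨hqa, hq⟩, hlt⟩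
        · rintro (rfl | ⟨⟨hqa, hq⟩, hlt⟩)
          · exact ⟨ha, hpa⟩
          · exact ⟨hq, hlt⟩
      rw [hset, Finset.prod_insert (by simp)]
      simp [hpa]
    · have hset : S.filter (fun q => p < q) = (S.erase a).filter (fun q => p < q) := by
        ext q
        simp only [Finset.mem_filter, Finset.mem_erase]
        constructor
        · rintro ⟨hq, hlt⟩
          exact ⟨⟨fun h => hpa (h ▸ hlt), hq⟩, hlt⟩
        · rintro ⟨⟨_, hq⟩, hlt⟩; exact ⟨hq, hlt⟩
      rw [hset]; simp [hpa]
  rw [Finset.prod_congr rfl hinner, Finset.prod_mul_distrib]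
  have hfa : S.filter (fun q => a < q) = (S.erase a).filter (fun q => a < q) := by
    ext q; simp only [Finset.mem_filter, Finset.mem_erase]
    exact ⟨fun h => ⟨⟨ne_of_gt h.2, h.1⟩, h.2⟩, fun h => ⟨h.1.2, h.2⟩⟩
  have hite : (∏ p ∈ S.erase a, if p < a then gq β (y p) (y a) else 1)
      = ∏ p ∈ (S.erase a).filter (fun p => p < a), gq β (y p) (y a) :=
    (Finset.prod_filter _ _).symm
  have hc : ((S.erase a).filter (fun p => p < a)) = S.filter (fun q => q < a) := by
    ext q; simp only [Finset.mem_filter, Finset.mem_erase]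
    exact ⟨fun h => ⟨h.1.2, h.2⟩, fun h => ⟨⟨ne_of_lt h.2, h.1⟩, h.2⟩⟩
  have hflip : (∏ p ∈ (S.erase a).filter (fun p => p < a), gq β (y p) (y a))
      = (-1 : F) ^ ((S.filter (fun q => q < a)).card) *
        ∏ p ∈ (S.erase a).filter (fun p => p < a), gq β (y a) (y p) := by
    rw [Finset.prod_congr rfl (fun p _ => gq_anti β (y p) (y a))]
    rw [Finset.prod_congr rfl (fun p _ => (neg_one_mul (gq β (y a) (y p))).symm)]
    rw [Finset.prod_mul_distrib, Finset.prod_const, hc]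
  have hmerge : (∏ q ∈ (S.erase a).filter (fun q => a < q), gq β (y a) (y q)) *
      (∏ p ∈ (S.erase a).filter (fun p => p < a), gq β (y a) (y p))
      = ∏ i ∈ S.erase a, gq β (y a) (y i) := by
    have hnot : (S.erase a).filter (fun q => ¬ a < q) = (S.erase a).filter (fun q => q < a) := by
      ext q; simp only [Finset.mem_filter, Finset.mem_erase, not_lt]
      exact ⟨fun h => ⟨h.1, lt_of_le_of_ne h.2 h.1.1⟩, fun h => ⟨h.1, le_of_lt h.2⟩⟩
    rw [← hnot, Finset.prod_filter_mul_prod_filter_not]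
  rw [hfa, hite, hflip, ← hmerge]
  ring







def nodeF {ι : Type*} (β w : F) (z : ι → F) : Fin 3 ⊕ ι → F :=
  Sum.elim (fun a => if a = 0 then (1 + β * w)⁻¹ else if a = 1 then 1 else -1)
    (fun i => 1 + β * z i)

@[simp] theorem nodeF_inl0 {ι : Type*} (β w : F) (z : ι → F) :
    nodeF β w z (Sum.inl 0) = (1 + β * w)⁻¹ := by simp [nodeF]
@[simp] theorem nodeF_inl1 {ι : Type*} (β w : F) (z : ι → F) :
    nodeF β w z (Sum.inl 1) = 1 := by simp [nodeF]
@[simp] theorem nodeF_inl2 {ι : Type*} (β w : F) (z : ι → F) :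
    nodeF β w z (Sum.inl 2) = -1 := by
  have : ((2 : Fin 3) = 0) = False := by simp
  have h2 : ((2 : Fin 3) = 1) = False := by simp
  simp [nodeF, this, h2]
@[simp] theorem nodeF_inr {ι : Type*} (β w : F) (z : ι → F) (i : ι) :
    nodeF β w z (Sum.inr i) = 1 + β * z i := rfl


theorem prod_disjSum' {α γ M : Type*} [CommMonoid M] (s : Finset α) (t : Finset γ)
    (f : α ⊕ γ → M) :
    ∏ x ∈ s.disjSum t, f x = (∏ x ∈ s, f (Sum.inl x)) * ∏ x ∈ t, f (Sum.inr x) := by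
  rw [← Finset.map_inl_disjUnion_map_inr, Finset.prod_disjUnion, Finset.prod_map, Finset.prod_map]
  rfl

theorem sum_disjSum' {α γ M : Type*} [AddCommMonoid M] (s : Finset α) (t : Finset γ)
    (f : α ⊕ γ → M) :
    ∑ x ∈ s.disjSum t, f x = (∑ x ∈ s, f (Sum.inl x)) + ∑ x ∈ t, f (Sum.inr x) := by
  rw [← Finset.map_inl_disjUnion_map_inr, Finset.sum_disjUnion, Finset.sum_map, Finset.sum_map]
  rfl

theorem core [CharZero F] {ι : Type*} [DecidableEq ι] (S : Finset ι) (hodd : Odd S.card)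
    (β w : F) (z : ι → F) (hβ : β ≠ 0)
    (hz : Set.InjOn z ↑S) (hz0 : ∀ i ∈ S, z i ≠ 0) (h1z : ∀ i ∈ S, 1 + β * z i ≠ 0)
    (h2z : ∀ i ∈ S, 2 + β * z i ≠ 0)
    (hw0 : w ≠ 0) (h1w : 1 + β * w ≠ 0) (h2w : 2 + β * w ≠ 0)
    (hwz : ∀ i ∈ S, w + z i + β * w * z i ≠ 0)
    (hzz : ∀ i ∈ S, ∀ j ∈ S, i ≠ j → z i + z j + β * z i * z j ≠ 0) :
    ∑ b ∈ S, gq β w (z b) * ∏ i ∈ S.erase b,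
        ((z b + z i + β * z b * z i) / (z b - z i))
      = ∏ j ∈ S, gq β w (z j) := by
  classical
  have h2 : (2 : F) ≠ 0 := two_ne_zero
  have hs1 : 1 + β * w - 1 ≠ 0 := by
    intro h
    have hbw : β * w = 0 := by linear_combination h
    rcases mul_eq_zero.mp hbw with h' | h'
    · exact hβ h'
    · exact hw0 h'
  have hsm1 : 1 + β * w + 1 ≠ 0 := by
    intro h; exact h2w (by linear_combination h)
  have ht1 : ∀ i ∈ S, 1 + β * z i - 1 ≠ 0 := by
    intro i hi h
    have hbz : β * z i = 0 := by linear_combination h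
    rcases mul_eq_zero.mp hbz with h' | h'
    · exact hβ h'
    · exact hz0 i hi h'
  have htm1 : ∀ i ∈ S, 1 + β * z i + 1 ≠ 0 := by
    intro i hi h; exact h2z i hi (by linear_combination h)
  have hstm : ∀ i ∈ S, (1 + β * w) * (1 + β * z i) - 1 ≠ 0 := by
    intro i hi h
    exact mul_ne_zero hβ (hwz i hi) (by linear_combination h)
  have httm : ∀ i ∈ S, ∀ j ∈ S, i ≠ j → (1 + β * z i) * (1 + β * z j) - 1 ≠ 0 := by
    intro i hi j hj hij h
    exact mul_ne_zero hβ (hzz i hi j hj hij) (by linear_combination h)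
  have hzsub : ∀ i ∈ S, ∀ j ∈ S, i ≠ j → z i - z j ≠ 0 :=
    fun i hi j hj hij => sub_ne_zero.mpr (fun h' => hij (hz hi hj h'))
  have htsub : ∀ i ∈ S, ∀ j ∈ S, i ≠ j → (1 + β * z i) - (1 + β * z j) ≠ 0 := by
    intro i hi j hj hij h
    exact mul_ne_zero hβ (hzsub i hi j hj hij) (by linear_combination h)
  have hinv_ne : ∀ i ∈ S, (1 + β * w)⁻¹ - (1 + β * z i) ≠ 0 := by
    intro i hi
    have hrw : (1 + β * w)⁻¹ - (1 + β * z i)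
        = -((1 + β * w)⁻¹ * ((1 + β * w) * (1 + β * z i) - 1)) := by
      field_simp
      ring
    rw [hrw]
    exact neg_ne_zero.mpr (mul_ne_zero (inv_ne_zero h1w) (hstm i hi))
  have hone_ne : ∀ i ∈ S, 1 - (1 + β * z i) ≠ 0 := by
    intro i hi h; exact ht1 i hi (by linear_combination -h)
  have hmone_ne : ∀ i ∈ S, -1 - (1 + β * z i) ≠ 0 := by
    intro i hi h; exact htm1 i hi (by linear_combination -h)
  have hd01 : nodeF β w z (Sum.inl 0) ≠ nodeF β w z (Sum.inl (1 : Fin 3)) := by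
    rw [nodeF_inl0, nodeF_inl1]
    intro h
    exact hs1 (by linear_combination (inv_eq_one.mp h))
  have hd02 : nodeF β w z (Sum.inl 0) ≠ nodeF β w z (Sum.inl (2 : Fin 3)) := by
    rw [nodeF_inl0, nodeF_inl2]
    intro h
    have h' : 1 + β * w = -1 := by
      have := congrArg (fun x : F => x⁻¹) h
      simpa [inv_inv, inv_neg, inv_one] using this
    exact hsm1 (by linear_combination h')
  have hd12 : nodeF β w z (Sum.inl (1 : Fin 3)) ≠ nodeF β w z (Sum.inl (2 : Fin 3)) := by
    rw [nodeF_inl1, nodeF_inl2]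
    intro h
    exact h2 (by linear_combination h)
  have hdr : ∀ a : Fin 3, ∀ j ∈ S, nodeF β w z (Sum.inl a) ≠ nodeF β w z (Sum.inr j) := by
    intro a j hj
    fin_cases a
    · intro h
      have h' : (1 + β * w)⁻¹ = 1 + β * z j := h
      exact hinv_ne j hj (by linear_combination h')
    · intro h
      have h' : (1 : F) = 1 + β * z j := h
      exact hone_ne j hj (by linear_combination h')
    · intro h
      have h' : (-1 : F) = 1 + β * z j := h
      exact hmone_ne j hj (by linear_combination h')
  have hvinj : Set.InjOn (nodeF β w z) ((univ : Finset (Fin 3)).disjSum S) := by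
    intro x hx y hy hxy
    rcases x with a | i <;> rcases y with b | j
    · congr 1
      fin_cases a <;> fin_cases b <;>
        first
          | rfl
          | exact absurd hxy hd01 | exact absurd hxy.symm hd01
          | exact absurd hxy hd02 | exact absurd hxy.symm hd02
          | exact absurd hxy hd12 | exact absurd hxy.symm hd12
    · exact absurd hxy (hdr a j (by simpa using hy))
    · exact absurd hxy.symm (hdr b i (by simpa using hx))
    · have hi : i ∈ S := by simpa using hx
      have hj : j ∈ S := by simpa using hy
      have h' : β * z i = β * z j := by
        have h0 := hxy; rw [nodeF_inr, nodeF_inr] at h0; linear_combination h0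
      exact congrArg Sum.inr (hz hi hj (mul_left_cancel₀ hβ h'))
  -- erase lemmas
  have herase_inr : ∀ b : ι, (((univ : Finset (Fin 3)).disjSum S).erase (Sum.inr b))
      = (univ : Finset (Fin 3)).disjSum (S.erase b) := by
    intro b
    ext x
    rcases x with a | i <;>
      simp [Finset.mem_erase, Finset.inl_mem_disjSum, Finset.inr_mem_disjSum]
  have herase_inl : ∀ a : Fin 3, (((univ : Finset (Fin 3)).disjSum S).erase (Sum.inl a))
      = ((univ : Finset (Fin 3)).erase a).disjSum S := by
    intro a
    ext x
    rcases x with c | i <;>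
      simp [Finset.mem_erase, Finset.inl_mem_disjSum, Finset.inr_mem_disjSum]
  -- degree bound
  have hdeg : ((C (1 + β * w) - X) * ∏ i ∈ S, (C (1 + β * z i) * X - 1)).natDegree + 2
      ≤ ((univ : Finset (Fin 3)).disjSum S).card := by
    have ha : (C (1 + β * w) - X : F[X]).natDegree ≤ 1 := by
      compute_degree
    have hb : (∏ i ∈ S, (C (1 + β * z i) * X - 1) : F[X]).natDegree ≤ S.card := by
      refine le_trans (natDegree_prod_le _ _) ?_
      refine le_trans (Finset.sum_le_card_nsmul S _ 1 ?_) (by simp)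
      intro i _
      compute_degree
    have hm := natDegree_mul_le (p := (C (1 + β * w) - X : F[X]))
      (q := ∏ i ∈ S, (C (1 + β * z i) * X - 1))
    rw [Finset.card_disjSum]
    simp only [Finset.card_univ, Fintype.card_fin]
    omega
  have hres := res_sum ((univ : Finset (Fin 3)).disjSum S) (nodeF β w z) hvinj
    ((C (1 + β * w) - X) * ∏ i ∈ S, (C (1 + β * z i) * X - 1)) hdeg
  rw [sum_disjSum'] at hres
  rw [Fin.sum_univ_three] at hres
  beta_reduce at hres
  -- nonzero helpers for scalar computations
  have hia : (1 + β * w)⁻¹ - 1 ≠ 0 := by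
    intro h
    have h1 : (1 + β * w)⁻¹ = 1 := by linear_combination h
    have h' := inv_eq_one.mp h1
    exact hs1 (by linear_combination h')
  have hib : (1 + β * w)⁻¹ + 1 ≠ 0 := by
    intro h
    have h1 : (1 + β * w)⁻¹ = -1 := by linear_combination h
    have h' : 1 + β * w = -1 := by
      have := congrArg (fun x : F => x⁻¹) h1
      simpa [inv_inv, inv_neg, inv_one] using this
    exact hsm1 (by linear_combination h')
  -- Claim for the node 1/s
  have hT0 : eval (nodeF β w z (Sum.inl 0))
        ((C (1 + β * w) - X) * ∏ i ∈ S, (C (1 + β * z i) * X - 1)) *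
      ∏ j ∈ (((univ : Finset (Fin 3)).disjSum S).erase (Sum.inl 0)),
        (nodeF β w z (Sum.inl 0) - nodeF β w z j)⁻¹
      = -((1 + β * w) * ∏ j ∈ S, gq β w (z j)) := by
    rw [herase_inl 0, prod_disjSum', nodeF_inl0]
    simp only [nodeF_inr]
    rw [show ((univ : Finset (Fin 3)).erase 0) = {1, 2} from by decide]
    rw [Finset.prod_pair (by decide)]
    simp only [nodeF_inl1, nodeF_inl2]
    simp only [eval_mul, eval_sub, eval_prod, eval_C, eval_X, eval_one]
    have hcomb : (∏ i ∈ S, ((1 + β * z i) * (1 + β * w)⁻¹ - 1)) *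
        (∏ i ∈ S, ((1 + β * w)⁻¹ - (1 + β * z i))⁻¹)
        = ∏ j ∈ S, gq β w (z j) := by
      rw [← Finset.prod_mul_distrib]
      refine Finset.prod_congr rfl fun i hi => ?_
      rw [gq, ← div_eq_mul_inv, div_eq_div_iff (hinv_ne i hi) (hwz i hi)]
      field_simp
      ring
    have hsc : ((1 + β * w) - (1 + β * w)⁻¹) *
        (((1 + β * w)⁻¹ - 1)⁻¹ * ((1 + β * w)⁻¹ - (-1))⁻¹) = -(1 + β * w) := by
      have hib' : (1 + β * w)⁻¹ - (-1) ≠ 0 := by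
        intro h; exact hib (by linear_combination h)
      rw [← mul_inv, ← div_eq_mul_inv, div_eq_iff (mul_ne_zero hia hib')]
      field_simp
      ring
    linear_combination ((1 + β * w) - (1 + β * w)⁻¹) *
        (((1 + β * w)⁻¹ - 1)⁻¹ * ((1 + β * w)⁻¹ - (-1))⁻¹) * hcomb +
      (∏ j ∈ S, gq β w (z j)) * hsc
  -- Claim for node 1
  have hT1 : eval (nodeF β w z (Sum.inl 1))
        ((C (1 + β * w) - X) * ∏ i ∈ S, (C (1 + β * z i) * X - 1)) *
      ∏ j ∈ (((univ : Finset (Fin 3)).disjSum S).erase (Sum.inl 1)),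
        (nodeF β w z (Sum.inl 1) - nodeF β w z j)⁻¹
      = -((1 + β * w) / 2) := by
    rw [herase_inl 1, prod_disjSum', nodeF_inl1]
    simp only [nodeF_inr]
    rw [show ((univ : Finset (Fin 3)).erase 1) = {0, 2} from by decide]
    rw [Finset.prod_pair (by decide)]
    simp only [nodeF_inl0, nodeF_inl2]
    simp only [eval_mul, eval_sub, eval_prod, eval_C, eval_X, eval_one]
    have hcomb : (∏ i ∈ S, ((1 + β * z i) * 1 - 1)) *
        (∏ i ∈ S, (1 - (1 + β * z i))⁻¹) = -1 := by
      rw [← Finset.prod_mul_distrib]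
      rw [Finset.prod_congr rfl (fun i hi => (show ((1 + β * z i) * 1 - 1) *
          (1 - (1 + β * z i))⁻¹ = -1 from by
        rw [← div_eq_mul_inv, div_eq_iff (hone_ne i hi)]
        ring))]
      rw [Finset.prod_const]
      exact Odd.neg_one_pow hodd
    have h1ms : 1 - (1 + β * w)⁻¹ ≠ 0 := by
      intro h; exact hia (by linear_combination -h)
    have hsc : ((1 + β * w) - 1) * ((1 - (1 + β * w)⁻¹)⁻¹ * (1 - (-1))⁻¹) * (-1)
        = -((1 + β * w) / 2) := by
      rw [← mul_inv, ← div_eq_mul_inv, div_mul_eq_mul_div, ← neg_div,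
        div_eq_div_iff (mul_ne_zero h1ms (by norm_num : (1:F) - (-1) ≠ 0)) (two_ne_zero)]
      field_simp
      ring
    linear_combination ((1 + β * w) - 1) * ((1 - (1 + β * w)⁻¹)⁻¹ * (1 - (-1))⁻¹) * hcomb +
      hsc
  -- Claim for node -1
  have hT2 : eval (nodeF β w z (Sum.inl 2))
        ((C (1 + β * w) - X) * ∏ i ∈ S, (C (1 + β * z i) * X - 1)) *
      ∏ j ∈ (((univ : Finset (Fin 3)).disjSum S).erase (Sum.inl 2)),
        (nodeF β w z (Sum.inl 2) - nodeF β w z j)⁻¹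
      = (1 + β * w) / 2 := by
    rw [herase_inl 2, prod_disjSum', nodeF_inl2]
    simp only [nodeF_inr]
    rw [show ((univ : Finset (Fin 3)).erase 2) = {0, 1} from by decide]
    rw [Finset.prod_pair (by decide)]
    simp only [nodeF_inl0, nodeF_inl1]
    simp only [eval_mul, eval_sub, eval_prod, eval_C, eval_X, eval_one]
    have hcomb : (∏ i ∈ S, ((1 + β * z i) * (-1) - 1)) *
        (∏ i ∈ S, ((-1) - (1 + β * z i))⁻¹) = 1 := by
      rw [← Finset.prod_mul_distrib]
      rw [Finset.prod_congr rfl (fun i hi => (show ((1 + β * z i) * (-1) - 1) *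
          ((-1) - (1 + β * z i))⁻¹ = 1 from by
        rw [← div_eq_mul_inv, div_eq_iff (hmone_ne i hi)]
        ring))]
      exact Finset.prod_const_one
    have h1ms : -1 - (1 + β * w)⁻¹ ≠ 0 := by
      intro h; exact hib (by linear_combination -h)
    have hsc : ((1 + β * w) - (-1)) * (((-1) - (1 + β * w)⁻¹)⁻¹ * ((-1) - 1)⁻¹) * 1
        = (1 + β * w) / 2 := by
      rw [mul_one, ← mul_inv, ← div_eq_mul_inv,
        div_eq_div_iff (mul_ne_zero h1ms (by norm_num : (-1:F) - 1 ≠ 0)) (two_ne_zero)]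
      field_simp
      ring
    linear_combination ((1 + β * w) - (-1)) * (((-1) - (1 + β * w)⁻¹)⁻¹ * ((-1) - 1)⁻¹) * hcomb +
      hsc
  -- Claim for nodes t b
  have hTb : ∀ b ∈ S, eval (nodeF β w z (Sum.inr b))
        ((C (1 + β * w) - X) * ∏ i ∈ S, (C (1 + β * z i) * X - 1)) *
      ∏ j ∈ (((univ : Finset (Fin 3)).disjSum S).erase (Sum.inr b)),
        (nodeF β w z (Sum.inr b) - nodeF β w z j)⁻¹
      = (1 + β * w) * (gq β w (z b) *
          ∏ i ∈ S.erase b, ((z b + z i + β * z b * z i) / (z b - z i))) := by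
    intro b hb
    rw [herase_inr b, prod_disjSum', nodeF_inr]
    simp only [nodeF_inr]
    rw [Fin.prod_univ_three]
    simp only [nodeF_inl0, nodeF_inl1, nodeF_inl2]
    simp only [eval_mul, eval_sub, eval_prod, eval_C, eval_X, eval_one]
    rw [← Finset.mul_prod_erase _ (fun i => (1 + β * z i) * (1 + β * z b) - 1) hb]
    have hcombb : (∏ i ∈ S.erase b, ((1 + β * z i) * (1 + β * z b) - 1)) *
        (∏ i ∈ S.erase b, ((1 + β * z b) - (1 + β * z i))⁻¹)
        = ∏ i ∈ S.erase b, ((z b + z i + β * z b * z i) / (z b - z i)) := by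
      rw [← Finset.prod_mul_distrib]
      refine Finset.prod_congr rfl fun i hi => ?_
      rcases Finset.mem_erase.mp hi with ⟨hib2, hiS⟩
      rw [← div_eq_mul_inv, div_eq_div_iff (htsub b hb i hiS (Ne.symm hib2))
        (hzsub b hb i hiS (Ne.symm hib2))]
      ring
    have hbs : (1 + β * z b) - (1 + β * w)⁻¹ ≠ 0 := by
      intro h; exact hinv_ne b hb (by linear_combination -h)
    have hb1 := ht1 b hb
    have hb2 := htm1 b hb
    have hb1' : (1 + β * z b) - 1 ≠ 0 := by intro h; exact hb1 (by linear_combination h)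
    have hb2' : (1 + β * z b) - (-1) ≠ 0 := by intro h; exact hb2 (by linear_combination h)
    have hscb : ((1 + β * w) - (1 + β * z b)) * ((1 + β * z b) * (1 + β * z b) - 1) *
        (((1 + β * z b) - (1 + β * w)⁻¹)⁻¹ *
          (((1 + β * z b) - 1)⁻¹ * ((1 + β * z b) - (-1))⁻¹))
        = (1 + β * w) * gq β w (z b) := by
      have hd := hwz b hb
      rw [gq, ← mul_inv, ← mul_inv, ← div_eq_mul_inv, ← mul_div_assoc,
        div_eq_div_iff (mul_ne_zero hbs (mul_ne_zero hb1' hb2')) hd]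
      field_simp
      ring
    linear_combination ((1 + β * w) - (1 + β * z b)) * ((1 + β * z b) * (1 + β * z b) - 1) *
        (((1 + β * z b) - (1 + β * w)⁻¹)⁻¹ *
          (((1 + β * z b) - 1)⁻¹ * ((1 + β * z b) - (-1))⁻¹)) * hcombb +
      (∏ i ∈ S.erase b, ((z b + z i + β * z b * z i) / (z b - z i))) * hscb
  -- sum over b
  have hsum : (∑ b ∈ S, eval (nodeF β w z (Sum.inr b))
        ((C (1 + β * w) - X) * ∏ i ∈ S, (C (1 + β * z i) * X - 1)) *
      ∏ j ∈ (((univ : Finset (Fin 3)).disjSum S).erase (Sum.inr b)),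
        (nodeF β w z (Sum.inr b) - nodeF β w z j)⁻¹)
      = (1 + β * w) * ∑ b ∈ S, (gq β w (z b) *
          ∏ i ∈ S.erase b, ((z b + z i + β * z b * z i) / (z b - z i))) := by
    rw [Finset.mul_sum]
    exact Finset.sum_congr rfl hTb
  have hmain : (1 + β * w) * (∑ b ∈ S, gq β w (z b) *
        ∏ i ∈ S.erase b, ((z b + z i + β * z b * z i) / (z b - z i)))
      = (1 + β * w) * ∏ j ∈ S, gq β w (z j) := by
    linear_combination (-1 : F) * hsum + hres - hT0 - hT1 - hT2
  exact mul_left_cancel₀ h1w hmain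






def liftp {n : ℕ} (τ : Equiv.Perm (Fin n)) : Equiv.Perm (Fin (n + 1)) :=
  Equiv.Perm.decomposeFin.symm (0, τ)

theorem liftp_zero {n : ℕ} (τ : Equiv.Perm (Fin n)) : liftp τ 0 = 0 :=
  Equiv.Perm.decomposeFin_symm_apply_zero 0 τ

theorem liftp_succ {n : ℕ} (τ : Equiv.Perm (Fin n)) (x : Fin n) :
    liftp τ x.succ = (τ x).succ := by
  rw [liftp, Equiv.Perm.decomposeFin_symm_apply_succ]
  simp

theorem sign_liftp {n : ℕ} (τ : Equiv.Perm (Fin n)) : sign (liftp τ) = sign τ := by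
  rw [liftp, Equiv.Perm.decomposeFin.symm_sign]
  simp

def iota (n : ℕ) : (Fin 2 ⊕ Fin n) ≃ Fin (n + 2) :=
  finSumFinEquiv.trans (finCongr (by omega))

theorem iota_inl (n : ℕ) (j : Fin 2) : iota n (Sum.inl j) = ⟨j.val, by omega⟩ := by
  apply Fin.ext
  simp [iota]

theorem iota_inr (n : ℕ) (k : Fin n) : iota n (Sum.inr k) = ⟨2 + k.val, by omega⟩ := by
  apply Fin.ext
  simp [iota]
  omega

def extp {n : ℕ} (σ : Equiv.Perm (Fin n)) : Equiv.Perm (Fin (n + 2)) :=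
  (iota n).permCongr (Equiv.sumCongr (Equiv.refl (Fin 2)) σ)

theorem extp_iota {n : ℕ} (σ : Equiv.Perm (Fin n)) (s : Fin 2 ⊕ Fin n) :
    extp σ (iota n s) = iota n ((Equiv.sumCongr (Equiv.refl (Fin 2)) σ) s) := by
  simp [extp, Equiv.permCongr_apply]

theorem sign_extp {n : ℕ} (σ : Equiv.Perm (Fin n)) : sign (extp σ) = sign σ := by
  rw [extp, Equiv.Perm.sign_permCongr, Equiv.Perm.sign_sumCongr]
  simp

def rho {n : ℕ} (a : Fin (n + 2)) (b' : Fin (n + 1)) : Equiv.Perm (Fin (n + 2)) :=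
  (a.cycleRange)⁻¹ * liftp ((b'.cycleRange)⁻¹)

theorem rho_zero {n : ℕ} (a : Fin (n + 2)) (b' : Fin (n + 1)) : rho a b' 0 = a := by
  rw [rho, Equiv.Perm.mul_apply, liftp_zero]
  exact Fin.cycleRange_symm_zero a

theorem rho_one {n : ℕ} (a : Fin (n + 2)) (b' : Fin (n + 1)) :
    rho a b' 1 = a.succAbove b' := by
  rw [rho, Equiv.Perm.mul_apply, ← Fin.succ_zero_eq_one, liftp_succ]
  rw [show ((b'.cycleRange)⁻¹ : Equiv.Perm (Fin (n+1))) 0 = b' from Fin.cycleRange_symm_zero b']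
  exact Fin.cycleRange_symm_succ a b'

theorem rho_two {n : ℕ} (a : Fin (n + 2)) (b' : Fin (n + 1)) (k : Fin n)
    (h : k.val + 2 < n + 2) :
    rho a b' ⟨k.val + 2, h⟩ = a.succAbove (b'.succAbove k) := by
  have hmk : (⟨k.val + 2, h⟩ : Fin (n + 2)) = (k.succ).succ := by
    apply Fin.ext; simp
  rw [hmk, rho, Equiv.Perm.mul_apply, liftp_succ]
  rw [show ((b'.cycleRange)⁻¹ : Equiv.Perm (Fin (n+1))) k.succ = b'.succAbove k from
    Fin.cycleRange_symm_succ b' k]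
  exact Fin.cycleRange_symm_succ a (b'.succAbove k)

theorem sign_rho {n : ℕ} (a : Fin (n + 2)) (b' : Fin (n + 1)) :
    sign (rho a b') = (-1 : ℤˣ) ^ (a.val + b'.val) := by
  rw [rho, map_mul, Equiv.Perm.sign_inv, sign_liftp, Equiv.Perm.sign_inv,
    Fin.sign_cycleRange, Fin.sign_cycleRange, pow_add]

def eab {n : ℕ} (a : Fin (n + 2)) (b' : Fin (n + 1)) (k : Fin n) : Fin (n + 2) :=
  a.succAbove (b'.succAbove k)

def Phi {n : ℕ} (x : Fin (n + 2) × Fin (n + 1) × Equiv.Perm (Fin n)) :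
    Equiv.Perm (Fin (n + 2)) :=
  rho x.1 x.2.1 * extp x.2.2

theorem Phi_zero {n : ℕ} (x : Fin (n + 2) × Fin (n + 1) × Equiv.Perm (Fin n)) :
    Phi x 0 = x.1 := by
  have h0 : (0 : Fin (n + 2)) = iota n (Sum.inl 0) := by
    apply Fin.ext; rw [iota_inl]; simp
  rw [Phi, Equiv.Perm.mul_apply, h0, extp_iota]
  simp only [Equiv.sumCongr_apply, Sum.map_inl, Equiv.refl_apply]
  rw [← h0, rho_zero]

theorem Phi_one {n : ℕ} (x : Fin (n + 2) × Fin (n + 1) × Equiv.Perm (Fin n)) :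
    Phi x 1 = x.1.succAbove x.2.1 := by
  have h1 : (1 : Fin (n + 2)) = iota n (Sum.inl 1) := by
    apply Fin.ext; rw [iota_inl]; simp
  rw [Phi, Equiv.Perm.mul_apply, h1, extp_iota]
  simp only [Equiv.sumCongr_apply, Sum.map_inl, Equiv.refl_apply]
  rw [← h1, rho_one]

theorem Phi_two {n : ℕ} (x : Fin (n + 2) × Fin (n + 1) × Equiv.Perm (Fin n))
    (k : Fin n) (m : ℕ) (hm : m = k.val + 2) (h : m < n + 2) :
    Phi x ⟨m, h⟩ = eab x.1 x.2.1 (x.2.2 k) := by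
  subst hm
  have h2 : (⟨k.val + 2, h⟩ : Fin (n + 2)) = iota n (Sum.inr k) := by
    apply Fin.ext
    rw [iota_inr]
    show k.val + 2 = 2 + k.val
    omega
  rw [Phi, Equiv.Perm.mul_apply, h2, extp_iota]
  simp only [Equiv.sumCongr_apply, Sum.map_inr]
  have h3 : iota n (Sum.inr (x.2.2 k))
      = (⟨(x.2.2 k).val + 2, by have := (x.2.2 k).isLt; omega⟩ : Fin (n + 2)) := by
    apply Fin.ext
    rw [iota_inr]
    show 2 + (x.2.2 k).val = (x.2.2 k).val + 2
    omega
  rw [h3]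
  exact rho_two x.1 x.2.1 (x.2.2 k) _

theorem Phi_injective {n : ℕ} :
    Function.Injective (Phi (n := n)) := by
  rintro ⟨a, b', σ⟩ ⟨c, d', τ⟩ h
  have h0 : a = c := by
    have h' := congrArg (fun p : Equiv.Perm (Fin (n + 2)) => p 0) h
    simpa [Phi_zero] using h'
  subst h0
  have h1 : b' = d' := by
    have h' := congrArg (fun p : Equiv.Perm (Fin (n + 2)) => p 1) h
    simp only [Phi_one] at h'
    exact a.succAbove_right_injective h'
  subst h1
  have h3 : extp σ = extp τ := mul_left_cancel h
  have h4 : σ = τ := by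
    apply Equiv.ext
    intro k
    have h' := congrArg (fun p : Equiv.Perm (Fin (n + 2)) => p (iota n (Sum.inr k))) h3
    simp only [extp_iota] at h'
    have h'' := (iota n).injective h'
    simpa using h''
  subst h4
  rfl

theorem Phi_bijective {n : ℕ} :
    Function.Bijective (Phi (n := n)) := by
  rw [Fintype.bijective_iff_injective_and_card]
  refine ⟨Phi_injective, ?_⟩
  simp only [Fintype.card_prod, Fintype.card_perm, Fintype.card_fin]
  try rw [show n + 2 = (n + 1) + 1 from rfl, Nat.factorial_succ, Nat.factorial_succ]
  try ring
  try rfl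

theorem TREC {n : ℕ} (M : Matrix (Fin (n + 2)) (Fin (n + 2)) F) :
    T (n + 2) M = ∑ a : Fin (n + 2), ∑ b' : Fin (n + 1),
      (-1 : F) ^ (a.val + b'.val) * M a (a.succAbove b') *
        T n (M.submatrix (eab a b') (eab a b')) := by
  have hbij := Fintype.sum_bijective (Phi (n := n)) Phi_bijective
    (fun x => ((Equiv.Perm.sign (Phi x) : ℤ) : F) *
      ∏ k : Fin ((n + 2) / 2),
        M (Phi x ⟨2 * k.val, by have := k.isLt; omega⟩)
          (Phi x ⟨2 * k.val + 1, by have := k.isLt; omega⟩))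
    (fun σ => ((Equiv.Perm.sign σ : ℤ) : F) *
      ∏ k : Fin ((n + 2) / 2),
        M (σ ⟨2 * k.val, by have := k.isLt; omega⟩)
          (σ ⟨2 * k.val + 1, by have := k.isLt; omega⟩))
    (fun x => rfl)
  rw [T, ← hbij, Fintype.sum_prod_type]
  refine Finset.sum_congr rfl fun a _ => ?_
  rw [Fintype.sum_prod_type]
  refine Finset.sum_congr rfl fun b' _ => ?_
  rw [T, Finset.mul_sum]
  refine Finset.sum_congr rfl fun σ _ => ?_
  have hsign : ((Equiv.Perm.sign (Phi (a, b', σ)) : ℤ) : F)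
      = (-1 : F) ^ (a.val + b'.val) * ((Equiv.Perm.sign σ : ℤ) : F) := by
    rw [Phi, map_mul, sign_rho, sign_extp]
    push_cast
    ring
  have hcast : n / 2 + 1 = (n + 2) / 2 := by omega
  have hprod : (∏ k : Fin ((n + 2) / 2),
        M (Phi (a, b', σ) ⟨2 * k.val, by have := k.isLt; omega⟩)
          (Phi (a, b', σ) ⟨2 * k.val + 1, by have := k.isLt; omega⟩))
      = M a (a.succAbove b') *
        ∏ k : Fin (n / 2),
          (M.submatrix (eab a b') (eab a b'))
            (σ ⟨2 * k.val, by have := k.isLt; omega⟩)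
            (σ ⟨2 * k.val + 1, by have := k.isLt; omega⟩) := by
    rw [← Fin.prod_congr' _ hcast, Fin.prod_univ_succ]
    congr 1
    · have e0 : Phi (a, b', σ) ⟨2 * ((Fin.cast hcast 0) : Fin ((n+2)/2)).val,
          by have := ((Fin.cast hcast 0) : Fin ((n+2)/2)).isLt; omega⟩ = a := by
        have : (⟨2 * ((Fin.cast hcast 0) : Fin ((n+2)/2)).val, by
            have := ((Fin.cast hcast 0) : Fin ((n+2)/2)).isLt; omega⟩ : Fin (n+2)) = 0 := by
          apply Fin.ext; simp
        rw [this, Phi_zero]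
      have e1 : Phi (a, b', σ) ⟨2 * ((Fin.cast hcast 0) : Fin ((n+2)/2)).val + 1, by
          have := ((Fin.cast hcast 0) : Fin ((n+2)/2)).isLt; omega⟩ = a.succAbove b' := by
        have : (⟨2 * ((Fin.cast hcast 0) : Fin ((n+2)/2)).val + 1, by
            have := ((Fin.cast hcast 0) : Fin ((n+2)/2)).isLt; omega⟩ : Fin (n+2)) = 1 := by
          apply Fin.ext; simp
        rw [this, Phi_one]
      rw [e0, e1]
    · refine Finset.prod_congr rfl fun j _ => ?_
      rw [Phi_two (a, b', σ) ⟨2 * j.val, by have := j.isLt; omega⟩ _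
          (by simp [Fin.val_succ]; omega) (by have := j.isLt; omega)]
      rw [Phi_two (a, b', σ) ⟨2 * j.val + 1, by have := j.isLt; omega⟩ _
          (by simp [Fin.val_succ]; omega) (by have := j.isLt; omega)]
      simp [Matrix.submatrix_apply, eab]
  rw [hsign, hprod]
  ring


def Gmat {N : ℕ} (β : F) (y : Fin N → F) : Matrix (Fin N) (Fin N) F :=
  Matrix.of fun i j => gq β (y i) (y j)

theorem pprod_comp {k N : ℕ} (β : F) (y : Fin N → F) (e : Fin k → Fin N) (he : StrictMono e)
    (C : Finset (Fin N)) (hC : C.card = k) (him : ∀ x, e x ∈ C) :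
    (∏ p : Fin k, ∏ q ∈ univ.filter (fun q => p < q), gq β (y (e p)) (y (e q)))
      = ∏ p ∈ C, ∏ q ∈ C.filter (fun q => p < q), gq β (y p) (y q) := by
  classical
  have hsurj : ∀ c ∈ C, ∃ j, e j = c := by
    have himg : (univ : Finset (Fin k)).image e = C := by
      apply Finset.eq_of_subset_of_card_le
      · intro c hc
        rcases Finset.mem_image.mp hc with ⟨j, _, rfl⟩
        exact him j
      · rw [Finset.card_image_of_injective _ he.injective, Finset.card_univ,
          Fintype.card_fin, hC]
    intro c hc
    rcases Finset.mem_image.mp (himg ▸ hc) with ⟨j, _, hj⟩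
    exact ⟨j, hj⟩
  refine Finset.prod_nbij e (fun p _ => him p) (he.injective.injOn) ?_ ?_
  · intro c hc
    rcases hsurj c (by simpa using hc) with ⟨j, hj⟩
    exact ⟨j, by simp, hj⟩
  · intro p _
    refine Finset.prod_nbij e ?_ (he.injective.injOn) ?_ ?_
    · intro q hq
      simp only [Finset.mem_filter, Finset.mem_univ, true_and] at hq ⊢
      exact ⟨him q, he hq⟩
    · intro c hc
      simp only [Finset.coe_filter, Set.mem_setOf_eq] at hc
      rcases hsurj c hc.1 with ⟨j, hj⟩
      refine ⟨j, ?_, hj⟩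
      simp only [Finset.coe_filter, Set.mem_setOf_eq, Finset.mem_univ, true_and]
      rw [← hj] at hc
      exact he.lt_iff_lt.mp hc.2
    · intro q _
      rfl

theorem row [CharZero F] {n : ℕ} (hn : Even n) (β : F) (y : Fin (n + 2) → F) (hβ : β ≠ 0)
    (hy1 : ∀ i j, i ≠ j → y i ≠ y j)
    (hy2 : ∀ i j, i ≠ j → y i + y j + β * y i * y j ≠ 0)
    (hy3 : ∀ i, y i ≠ 0) (hy4 : ∀ i, 1 + β * y i ≠ 0) (hy5 : ∀ i, 2 + β * y i ≠ 0)
    (a : Fin (n + 2)) :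
    ∑ b' : Fin (n + 1), (-1 : F) ^ (a.val + b'.val) * gq β (y a) (y (a.succAbove b')) *
        (∏ p ∈ (((univ : Finset (Fin (n+2))).erase a).erase (a.succAbove b')),
          ∏ q ∈ ((((univ : Finset (Fin (n+2))).erase a).erase (a.succAbove b')).filter
              (fun q => p < q)),
            gq β (y p) (y q))
      = ∏ p ∈ (univ : Finset (Fin (n+2))),
          ∏ q ∈ univ.filter (fun q => p < q), gq β (y p) (y q) := by
  classical
  have hR := peel' β y univ a (Finset.mem_univ a)
  rw [count1] at hR
  have hterm : ∀ b' : Fin (n + 1),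
      (-1 : F) ^ (a.val + b'.val) * gq β (y a) (y (a.succAbove b')) *
        (∏ p ∈ (((univ : Finset (Fin (n+2))).erase a).erase (a.succAbove b')),
          ∏ q ∈ ((((univ : Finset (Fin (n+2))).erase a).erase (a.succAbove b')).filter
              (fun q => p < q)), gq β (y p) (y q))
      = ((-1 : F) ^ (a.val) *
          (∏ p ∈ (univ : Finset (Fin (n+2))).erase a,
            ∏ q ∈ (((univ : Finset (Fin (n+2))).erase a).filter (fun q => p < q)),
              gq β (y p) (y q))) *
          (gq β (y a) (y (a.succAbove b')) *
            ∏ i ∈ (((univ : Finset (Fin (n+2))).erase a).erase (a.succAbove b')),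
              ((y (a.succAbove b') + y i + β * y (a.succAbove b') * y i) /
                (y (a.succAbove b') - y i))) := by
    intro b'
    have hbmem : a.succAbove b' ∈ (univ : Finset (Fin (n+2))).erase a :=
      Finset.mem_erase.mpr ⟨Fin.succAbove_ne a b', Finset.mem_univ _⟩
    have hP := peel' β y ((univ : Finset (Fin (n+2))).erase a) (a.succAbove b') hbmem
    rw [count2] at hP
    have hQW : (∏ i ∈ (((univ : Finset (Fin (n+2))).erase a).erase (a.succAbove b')),
        gq β (y (a.succAbove b')) (y i)) *
        (∏ i ∈ (((univ : Finset (Fin (n+2))).erase a).erase (a.succAbove b')),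
          ((y (a.succAbove b') + y i + β * y (a.succAbove b') * y i) /
            (y (a.succAbove b') - y i))) = 1 := by
      rw [← Finset.prod_mul_distrib]
      refine Finset.prod_eq_one fun i hi => ?_
      have hib : i ≠ a.succAbove b' := (Finset.mem_erase.mp hi).1
      have h1 : y (a.succAbove b') - y i ≠ 0 :=
        sub_ne_zero.mpr (hy1 _ i (Ne.symm hib))
      have h2 : y (a.succAbove b') + y i + β * y (a.succAbove b') * y i ≠ 0 :=
        hy2 _ i (Ne.symm hib)
      rw [gq, div_mul_div_comm, div_eq_one_iff_eq (mul_ne_zero h2 h1)]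
      ring
    linear_combination (-(-1 : F) ^ (a.val) * gq β (y a) (y (a.succAbove b')) *
        (∏ i ∈ (((univ : Finset (Fin (n+2))).erase a).erase (a.succAbove b')),
          ((y (a.succAbove b') + y i + β * y (a.succAbove b') * y i) /
            (y (a.succAbove b') - y i)))) * hP +
      (-(-1 : F) ^ (a.val + b'.val) * gq β (y a) (y (a.succAbove b')) *
        (∏ p ∈ (((univ : Finset (Fin (n+2))).erase a).erase (a.succAbove b')),
          ∏ q ∈ ((((univ : Finset (Fin (n+2))).erase a).erase (a.succAbove b')).filter
              (fun q => p < q)), gq β (y p) (y q))) * hQW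
  rw [Finset.sum_congr rfl (fun b' _ => hterm b'), ← Finset.mul_sum]
  have hreindex : (∑ b' : Fin (n+1), gq β (y a) (y (a.succAbove b')) *
      ∏ i ∈ (((univ : Finset (Fin (n+2))).erase a).erase (a.succAbove b')),
        ((y (a.succAbove b') + y i + β * y (a.succAbove b') * y i) /
          (y (a.succAbove b') - y i)))
      = ∑ b ∈ (univ : Finset (Fin (n+2))).erase a, gq β (y a) (y b) *
          ∏ i ∈ (((univ : Finset (Fin (n+2))).erase a).erase b),
            ((y b + y i + β * y b * y i) / (y b - y i)) := by
    refine Finset.sum_nbij (fun b' => a.succAbove b') ?_ ?_ ?_ ?_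
    · intro b' _
      exact Finset.mem_erase.mpr ⟨Fin.succAbove_ne a b', Finset.mem_univ _⟩
    · exact Fin.succAbove_right_injective.injOn
    · intro b hb
      have hba : b ≠ a := by simpa using hb
      rcases Fin.exists_succAbove_eq hba with ⟨b', hb'⟩
      exact ⟨b', by simp, hb'⟩
    · intro b' _
      rfl
  have hodd : Odd ((univ : Finset (Fin (n+2))).erase a).card := by
    have hcard : ((univ : Finset (Fin (n+2))).erase a).card = n + 1 := by
      rw [Finset.card_erase_of_mem (Finset.mem_univ a), Finset.card_univ, Fintype.card_fin]
      omega
    rw [hcard]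
    exact hn.add_one
  have hcore := core ((univ : Finset (Fin (n+2))).erase a) hodd β (y a) y hβ
    (fun i _ j _ h => by
      by_contra hne
      exact hy1 i j hne h)
    (fun i _ => hy3 i) (fun i _ => hy4 i) (fun i _ => hy5 i)
    (hy3 a) (hy4 a) (hy5 a)
    (fun i hi => hy2 a i (Ne.symm (Finset.mem_erase.mp hi).1))
    (fun i _ j _ hij => hy2 i j hij)
  rw [hreindex, hcore, hR]
  ring

theorem schur [CharZero F] (β : F) : ∀ n : ℕ, Even n → ∀ y : Fin n → F, β ≠ 0 →
    (∀ i j, i ≠ j → y i ≠ y j) → (∀ i j, i ≠ j → y i + y j + β * y i * y j ≠ 0) →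
    (∀ i, y i ≠ 0) → (∀ i, 1 + β * y i ≠ 0) → (∀ i, 2 + β * y i ≠ 0) →
    T n (Gmat β y) = (2 : F) ^ (n / 2) * ((n / 2).factorial : F) *
      ∏ p ∈ (univ : Finset (Fin n)), ∏ q ∈ univ.filter (fun q => p < q),
        gq β (y p) (y q) := by
  intro n
  induction n using Nat.strong_induction_on with
  | _ n ih =>
    intro hEven y hβ hy1 hy2 hy3 hy4 hy5
    rcases Nat.eq_zero_or_pos n with h0 | hpos
    · subst h0
      rw [T]
      simp
    · obtain ⟨k, rfl⟩ : ∃ k, n = k + 2 := by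
        rcases hEven with ⟨m, hm⟩
        exact ⟨n - 2, by omega⟩
      have hEk : Even k := by
        rcases hEven with ⟨m, hm⟩
        exact ⟨m - 1, by omega⟩
      rw [TREC]
      have hstep : ∀ (a : Fin (k+2)) (b' : Fin (k+1)),
          T k ((Gmat β y).submatrix (eab a b') (eab a b'))
            = (2:F)^(k/2) * ((k/2).factorial : F) *
              ∏ p ∈ ((((univ : Finset (Fin (k+2))).erase a).erase (a.succAbove b'))),
                ∏ q ∈ (((((univ : Finset (Fin (k+2))).erase a).erase (a.succAbove b'))).filter
                    (fun q => p < q)),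
                  gq β (y p) (y q) := by
        intro a b'
        have hinj : Function.Injective (eab a b') := fun i j h =>
          Fin.succAbove_right_injective (Fin.succAbove_right_injective h)
        have hrw : (Gmat β y).submatrix (eab a b') (eab a b')
            = Gmat β (fun i => y (eab a b' i)) := rfl
        rw [hrw, ih k (by omega) hEk _ hβ
          (fun i j hij => hy1 _ _ (fun h => hij (hinj h)))
          (fun i j hij => hy2 _ _ (fun h => hij (hinj h)))
          (fun i => hy3 _) (fun i => hy4 _) (fun i => hy5 _)]
        congr 1
        have hbmem : a.succAbove b' ∈ (univ : Finset (Fin (k+2))).erase a :=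
          Finset.mem_erase.mpr ⟨Fin.succAbove_ne a b', Finset.mem_univ _⟩
        refine pprod_comp β y (eab a b')
          ((Fin.strictMono_succAbove a).comp (Fin.strictMono_succAbove b')) _ ?_ ?_
        · rw [Finset.card_erase_of_mem hbmem, Finset.card_erase_of_mem (Finset.mem_univ a),
            Finset.card_univ, Fintype.card_fin]
          omega
        · intro x
          refine Finset.mem_erase.mpr ⟨?_,
            Finset.mem_erase.mpr ⟨Fin.succAbove_ne a _, Finset.mem_univ _⟩⟩
          intro h
          exact Fin.succAbove_ne b' x (Fin.succAbove_right_injective h)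
      rw [Finset.sum_congr rfl (fun a _ => Finset.sum_congr rfl (fun b' _ => by
        rw [hstep a b']))]
      have hone : ∀ a : Fin (k+2),
          (∑ b' : Fin (k+1), (-1:F)^(a.val + b'.val) * (Gmat β y) a (a.succAbove b') *
            ((2:F)^(k/2) * ((k/2).factorial : F) *
              ∏ p ∈ ((((univ : Finset (Fin (k+2))).erase a).erase (a.succAbove b'))),
                ∏ q ∈ (((((univ : Finset (Fin (k+2))).erase a).erase (a.succAbove b'))).filter
                    (fun q => p < q)),
                  gq β (y p) (y q)))
          = (2:F)^(k/2) * ((k/2).factorial : F) *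
            ∏ p ∈ (univ : Finset (Fin (k+2))), ∏ q ∈ univ.filter (fun q => p < q),
              gq β (y p) (y q) := by
        intro a
        rw [← row hEk β y hβ hy1 hy2 hy3 hy4 hy5 a, Finset.mul_sum]
        refine Finset.sum_congr rfl fun b' _ => ?_
        have hG : (Gmat β y) a (a.succAbove b') = gq β (y a) (y (a.succAbove b')) := rfl
        rw [hG]
        ring
      rw [Finset.sum_congr rfl (fun a _ => hone a), Finset.sum_const, Finset.card_univ,
        Fintype.card_fin, nsmul_eq_mul]
      have h3 : (k : ℕ) = 2 * (k / 2) := by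
        rcases hEk with ⟨m, hm⟩
        omega
      have h2 : (k : F) = 2 * ((k / 2 : ℕ) : F) := by
        exact_mod_cast congrArg (fun t : ℕ => (t : F)) h3
      have h1 : (k + 2) / 2 = k / 2 + 1 := by omega
      rw [h1, pow_succ, Nat.factorial_succ]
      push_cast
      linear_combination ((∏ p ∈ (univ : Finset (Fin (k+2))),
        ∏ q ∈ univ.filter (fun q => p < q), gq β (y p) (y q)) *
        (2:F)^(k/2) * ((k/2).factorial : F)) * h2

end General

set_option maxHeartbeats 1000000 in
theorem statement2 (m : ℕ) (hm : 1 ≤ m) :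
    pf (2 * m)
        (Matrix.of fun i j : Fin (2 * m) =>
          (xv m i - xv m j) / op m (xv m i) (xv m j))
      =
      ∏ i : Fin (2 * m), ∏ j ∈ Finset.univ.filter fun j : Fin (2 * m) => i < j,
        (xv m i - xv m j) / op m (xv m i) (xv m j) := by
  classical
  have hinj : Function.Injective (algebraMap (MvPolynomial (Fin (2 * m) ⊕ Unit) ℚ) (K m)) :=
    IsFractionRing.injective _ _
  haveI : CharZero (K m) := by
    refine ⟨fun a b h => ?_⟩
    have h' : ((a : ℕ) : MvPolynomial (Fin (2 * m) ⊕ Unit) ℚ)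
        = ((b : ℕ) : MvPolynomial (Fin (2 * m) ⊕ Unit) ℚ) := by
      apply hinj
      rw [map_natCast, map_natCast]
      exact h
    exact Nat.cast_injective h'
  set pt : (Fin (2 * m) ⊕ Unit) → ℚ :=
    (fun v => Sum.elim (fun i : Fin (2 * m) => (i : ℚ) + 1) (fun _ => 1) v) with hpt
  have key : ∀ p : MvPolynomial (Fin (2 * m) ⊕ Unit) ℚ,
      MvPolynomial.eval pt p ≠ 0 → algebraMap (MvPolynomial (Fin (2 * m) ⊕ Unit) ℚ) (K m) p ≠ 0 := by
    intro p hp hc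
    have hz : p = 0 := hinj (by rw [hc, map_zero])
    rw [hz] at hp
    simp at hp
  have hβ : bet m ≠ 0 := by
    refine key _ ?_
    simp [hpt]
  have hy1 : ∀ i j : Fin (2 * m), i ≠ j → xv m i ≠ xv m j := by
    intro i j hij
    have hval : (i : ℚ) ≠ (j : ℚ) := by
      intro h
      exact hij (Fin.ext (by exact_mod_cast h))
    have h := key (MvPolynomial.X (Sum.inl i) - MvPolynomial.X (Sum.inl j)) (by
      rw [map_sub]
      simp only [MvPolynomial.eval_X, hpt, Sum.elim_inl]
      intro h
      apply hval
      linarith)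
    rw [map_sub] at h
    exact sub_ne_zero.mp h
  have hy2 : ∀ i j : Fin (2 * m), i ≠ j →
      xv m i + xv m j + bet m * xv m i * xv m j ≠ 0 := by
    intro i j _
    have h := key (MvPolynomial.X (Sum.inl i) + MvPolynomial.X (Sum.inl j)
        + MvPolynomial.X (Sum.inr ()) * MvPolynomial.X (Sum.inl i) * MvPolynomial.X (Sum.inl j)) (by
      rw [map_add, map_add, map_mul, map_mul]
      simp only [MvPolynomial.eval_X, hpt, Sum.elim_inl, Sum.elim_inr]
      have h1 : (0:ℚ) ≤ (i : ℚ) := by positivity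
      have h2 : (0:ℚ) ≤ (j : ℚ) := by positivity
      nlinarith)
    rw [map_add, map_add, map_mul, map_mul] at h
    exact h
  have hy3 : ∀ i : Fin (2 * m), xv m i ≠ 0 := by
    intro i
    refine key _ ?_
    simp only [MvPolynomial.eval_X, hpt, Sum.elim_inl]
    have h1 : (0:ℚ) ≤ (i : ℚ) := by positivity
    linarith
  have hy4 : ∀ i : Fin (2 * m), 1 + bet m * xv m i ≠ 0 := by
    intro i
    have h := key (1 + MvPolynomial.X (Sum.inr ()) * MvPolynomial.X (Sum.inl i)) (by
      rw [map_add, map_one, map_mul]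
      simp only [MvPolynomial.eval_X, hpt, Sum.elim_inl, Sum.elim_inr]
      have h1 : (0:ℚ) ≤ (i : ℚ) := by positivity
      nlinarith)
    rw [map_add, map_one, map_mul] at h
    exact h
  have hy5 : ∀ i : Fin (2 * m), 2 + bet m * xv m i ≠ 0 := by
    intro i
    have h := key (2 + MvPolynomial.X (Sum.inr ()) * MvPolynomial.X (Sum.inl i)) (by
      rw [map_add, map_ofNat, map_mul]
      simp only [MvPolynomial.eval_X, hpt, Sum.elim_inl, Sum.elim_inr]
      have h1 : (0:ℚ) ≤ (i : ℚ) := by positivity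
      nlinarith)
    rw [map_add, map_ofNat, map_mul] at h
    exact h
  have hmain := schur (bet m) (2 * m) ⟨m, by ring⟩ (xv m) hβ hy1 hy2 hy3 hy4 hy5
  have hpf : pf (2 * m)
      (Matrix.of fun i j : Fin (2 * m) =>
        (xv m i - xv m j) / op m (xv m i) (xv m j))
      = ((2 : K m) ^ ((2 * m) / 2) * (((2 * m) / 2).factorial : K m))⁻¹ *
        T (2 * m) (Gmat (bet m) (xv m)) := rfl
  have hc : ((2 : K m) ^ ((2 * m) / 2) * (((2 * m) / 2).factorial : K m)) ≠ 0 :=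
    mul_ne_zero (pow_ne_zero _ two_ne_zero)
      (Nat.cast_ne_zero.mpr (Nat.factorial_ne_zero _))
  rw [hpf, hmain, ← mul_assoc, inv_mul_cancel₀ hc, one_mul]
  rfl

end Stmt2
end
end

section
/- Let λ, μ be partitions in P_n. If λ ⊄ μ (i.e., λ_i > μ_i for some i), then G_λ(b_μ|b) = 0. Moreover G_λ(b_λ|b) = Π_{(i,j)∈λ} ( b_{n+j−λ'_j} ⊖ b_{λ_i+n−i+1} ), where the product is over all boxes (i,j) of the Young diagram of λ and λ'_j = #{i : λ_i ≥ j} is the conjugate partition. -/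
/-!
STATEMENT 4: Let λ, μ ∈ P_n. If λ ⊄ μ (i.e. λ_i > μ_i for some i), then
G_λ(b_μ|b) = 0. Moreover
G_λ(b_λ|b) = Π_{(i,j)∈λ} ( b_{n+j−λ'_j} ⊖ b_{λ_i+n−i+1} ),
where λ'_j = #{i : λ_i ≥ j}. Here
G_λ(y|b) = det([y_i|b]^{λ_j+n−j}(1+βy_i)^{j−1}) / Π_{i<j}(y_i − y_j)
and b_μ = (⊖b_{μ_1+n}, …, ⊖b_{μ_i+n−i+1}, …, ⊖b_{μ_n+1}).
We work in the fraction field of ℤ[β][b] ⊗ ℚ, with β = X 0 and b_k = X k (k ≥ 1).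
-/

noncomputable section

namespace Stmt4

abbrev K : Type := FractionRing (MvPolynomial ℕ ℚ)

def bet : K := algebraMap (MvPolynomial ℕ ℚ) K (MvPolynomial.X 0)

def bv (k : ℕ) : K := algebraMap (MvPolynomial ℕ ℚ) K (MvPolynomial.X k)

/-- x ⊕ y = x + y + βxy -/
def op (a c : K) : K := a + c + bet * a * c

/-- x ⊖ y = (x − y)/(1 + βy) -/
def om (a c : K) : K := (a - c) / (1 + bet * c)

/-- `[x|b]^k = (x ⊕ b_1)⋯(x ⊕ b_k)`. -/
def fb (xx : K) (k : ℕ) : K := ∏ t ∈ Finset.range k, op xx (bv (t + 1))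

/-- The factorial Grothendieck polynomial `G_λ`, as a function of the
arguments `y = (y_1,…,y_n)`. -/
def Gro (n : ℕ) (lam : Fin n → ℕ) (y : Fin n → K) : K :=
  Matrix.det (Matrix.of fun i j : Fin n =>
      fb (y i) (lam j + (n - 1 - (j : ℕ))) * (1 + bet * y i) ^ (j : ℕ)) /
    ∏ i : Fin n, ∏ j ∈ Finset.univ.filter fun j : Fin n => (i : ℕ) < (j : ℕ),
      (y i - y j)

/-- The sequence `b_μ = (⊖b_{μ_1+n},…,⊖b_{μ_i+n−i+1},…,⊖b_{μ_n+1})`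
(0-indexed: the i-th entry is `⊖b_{μ_i + n − i}`). -/
def bmu (n : ℕ) (mu : Fin n → ℕ) : Fin n → K := fun i => om 0 (bv (mu i + n - (i : ℕ)))

/-- λ'_j = #{i : λ_i ≥ j}. -/
def conj (n : ℕ) (lam : Fin n → ℕ) (j : ℕ) : ℕ :=
  (Finset.univ.filter fun i : Fin n => j ≤ lam i).card

/-! ### Auxiliary lemmas -/


lemma inj : Function.Injective (algebraMap (MvPolynomial ℕ ℚ) K) :=
  IsFractionRing.injective _ _

lemma bv_ne {s t : ℕ} (h : s ≠ t) : bv s ≠ bv t := by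
  intro he
  exact (MvPolynomial.X_injective.ne h) (inj he)

lemma one_add_ne (m : ℕ) : (1 : K) + bet * bv m ≠ 0 := by
  intro he
  have : (1 : MvPolynomial ℕ ℚ) + MvPolynomial.X 0 * MvPolynomial.X m = 0 := by
    apply inj
    simpa [bet, bv, map_add, map_mul, map_one] using he
  have := congrArg MvPolynomial.constantCoeff this
  simp at this

lemma om_self (c : K) : om c c = 0 := by simp [om]

lemma op_om_self (m : ℕ) : op (om 0 (bv m)) (bv m) = 0 := by
  have h := one_add_ne m
  have h' : 1 + bv m * bet ≠ 0 := by rw [mul_comm]; exact h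
  unfold op om
  field_simp
  ring

lemma op_om (t m : ℕ) : op (om 0 (bv m)) (bv t) = om (bv t) (bv m) := by
  have h := one_add_ne m
  have h' : 1 + bv m * bet ≠ 0 := by rw [mul_comm]; exact h
  unfold op om
  field_simp
  ring

lemma one_add_bet_om (m : ℕ) : 1 + bet * om 0 (bv m) = (1 + bet * bv m)⁻¹ := by
  have h := one_add_ne m
  unfold om
  field_simp
  ring

lemma sub_om (s m : ℕ) : om 0 (bv s) - om 0 (bv m) = om (bv m) (bv s) / (1 + bet * bv m) := by
  have hs := one_add_ne s
  have hm := one_add_ne m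
  have hs' : 1 + bv s * bet ≠ 0 := by rw [mul_comm]; exact hs
  have hm' : 1 + bv m * bet ≠ 0 := by rw [mul_comm]; exact hm
  unfold om
  field_simp
  ring

lemma om_ne {s m : ℕ} (h : s ≠ m) : om (bv s) (bv m) ≠ 0 := by
  have hm := one_add_ne m
  have : bv s - bv m ≠ 0 := sub_ne_zero.mpr (bv_ne h)
  exact div_ne_zero this hm

lemma fb_zero {m k : ℕ} (h1 : 1 ≤ m) (h2 : m ≤ k) : fb (om 0 (bv m)) k = 0 := by
  apply Finset.prod_eq_zero (i := m - 1) (Finset.mem_range.mpr (by omega))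
  have hm : m - 1 + 1 = m := by omega
  rw [hm, op_om_self]

lemma fb_om (m k : ℕ) : fb (om 0 (bv m)) k = ∏ t ∈ Finset.Icc 1 k, om (bv t) (bv m) := by
  rw [fb, ← Finset.Ico_add_one_right_eq_Icc, Finset.prod_Ico_eq_prod_range]
  apply Finset.prod_congr rfl
  intro t _
  rw [op_om, add_comm 1 t]

/-! ### Combinatorics -/

variable {n : ℕ} {lam : Fin n → ℕ}

lemma conj_le (c : ℕ) : conj n lam c ≤ n := by
  simpa [conj] using (Finset.card_filter_le Finset.univ fun i : Fin n => c ≤ lam i)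

lemma conj_antitone : Antitone (conj n lam) := by
  intro a b h
  apply Finset.card_le_card
  intro i hi
  simp only [Finset.mem_filter, Finset.mem_univ, true_and] at *
  omega

lemma conj_ge_iff (hlam : Antitone lam) (c : ℕ) (j : Fin n) :
    (j : ℕ) + 1 ≤ conj n lam c ↔ c ≤ lam j := by
  constructor
  · intro h
    by_contra hc
    push_neg at hc
    have hsub : (Finset.univ.filter fun i : Fin n => c ≤ lam i) ⊆ Finset.Iio j := by
      intro i hi
      simp only [Finset.mem_filter, Finset.mem_univ, true_and] at hi
      simp only [Finset.mem_Iio]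
      by_contra hij
      push_neg at hij
      exact absurd (le_trans hi (hlam hij)) (not_le.mpr hc)
    have := Finset.card_le_card hsub
    rw [Fin.card_Iio] at this
    unfold conj at h
    omega
  · intro h
    have hsub : Finset.Iic j ⊆ (Finset.univ.filter fun i : Fin n => c ≤ lam i) := by
      intro i hi
      simp only [Finset.mem_Iic] at hi
      simp only [Finset.mem_filter, Finset.mem_univ, true_and]
      exact le_trans h (hlam hi)
    have := Finset.card_le_card hsub
    rw [Fin.card_Iic] at this
    unfold conj
    omega

/-- index of row i : `m_i = λ_i + n − i` -/
def mf (lam : Fin n → ℕ) (i : Fin n) : ℕ := lam i + n - (i : ℕ)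

/-- column labels -/
def cf (n : ℕ) (lam : Fin n → ℕ) (j : ℕ) : ℕ := n + (j + 1) - conj n lam (j + 1)

lemma mf_lt (hlam : Antitone lam) {i j : Fin n} (h : i < j) : mf lam j < mf lam i := by
  have h1 := hlam h.le
  have h2 := j.isLt
  have h3 : (i : ℕ) < (j : ℕ) := h
  unfold mf; omega

lemma cf_strictmono (hlam : Antitone lam) : StrictMono (cf n lam) := by
  have : ∀ j : ℕ, cf n lam j < cf n lam (j + 1) := by
    intro j
    have h1 : conj n lam (j + 1 + 1) ≤ conj n lam (j + 1) := conj_antitone (by omega)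
    have h2 := conj_le (lam := lam) (j + 1)
    unfold cf; omega
  exact strictMono_nat_of_lt_succ this

lemma partition_lemma (hlam : Antitone lam) (i : Fin n) :
    Finset.Icc 1 (mf lam i - 1)
      = ((Finset.univ.filter fun j : Fin n => (i : ℕ) < (j : ℕ)).image (mf lam))
        ∪ ((Finset.range (lam i)).image (cf n lam)) ∧
    Disjoint ((Finset.univ.filter fun j : Fin n => (i : ℕ) < (j : ℕ)).image (mf lam))
      ((Finset.range (lam i)).image (cf n lam)) := by
  have hin := i.isLt
  have hdisj : Disjoint ((Finset.univ.filter fun j : Fin n => (i : ℕ) < (j : ℕ)).image (mf lam))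
      ((Finset.range (lam i)).image (cf n lam)) := by
    rw [Finset.disjoint_left]
    rintro t ht1 ht2
    simp only [Finset.mem_image, Finset.mem_filter, Finset.mem_univ, true_and,
      Finset.mem_range] at ht1 ht2
    obtain ⟨j, hj, rfl⟩ := ht1
    obtain ⟨c, hc, hce⟩ := ht2
    have hle := conj_le (lam := lam) (c + 1)
    have hjn := j.isLt
    have hiff := conj_ge_iff hlam (c + 1) j
    unfold mf cf at hce
    rcases le_or_gt (c + 1) (lam j) with h | h
    · have := hiff.mpr h; omega
    · have : ¬ ((j : ℕ) + 1 ≤ conj n lam (c + 1)) := fun hh => by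
        have := hiff.mp hh; omega
      omega
  refine ⟨?_, hdisj⟩
  have hsub : ((Finset.univ.filter fun j : Fin n => (i : ℕ) < (j : ℕ)).image (mf lam))
        ∪ ((Finset.range (lam i)).image (cf n lam)) ⊆ Finset.Icc 1 (mf lam i - 1) := by
    intro t ht
    simp only [Finset.mem_union, Finset.mem_image, Finset.mem_filter, Finset.mem_univ,
      true_and, Finset.mem_range] at ht
    rw [Finset.mem_Icc]
    rcases ht with ⟨j, hj, rfl⟩ | ⟨c, hc, rfl⟩
    · have h1 := hlam (le_of_lt (show i < j from hj))
      have hjn := j.isLt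
      unfold mf; omega
    · have hle := conj_le (lam := lam) (c + 1)
      have hge : (i : ℕ) + 1 ≤ conj n lam (c + 1) :=
        (conj_ge_iff hlam (c + 1) i).mpr (by omega)
      unfold mf cf; omega
  have hcard1 : ((Finset.univ.filter fun j : Fin n => (i : ℕ) < (j : ℕ)).image (mf lam)).card
      = n - 1 - (i : ℕ) := by
    rw [Finset.card_image_of_injOn]
    · have he : (Finset.univ.filter fun j : Fin n => (i : ℕ) < (j : ℕ)) = Finset.Ioi i := by
        ext j
        simp only [Finset.mem_filter, Finset.mem_univ, true_and, Finset.mem_Ioi, Fin.lt_def]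
      rw [he, Fin.card_Ioi]
    · intro a _ b _ hab
      by_contra hne
      rcases lt_or_gt_of_ne hne with h | h
      · exact absurd hab (by have := mf_lt hlam h; omega)
      · exact absurd hab (by have := mf_lt hlam h; omega)
  have hcard2 : ((Finset.range (lam i)).image (cf n lam)).card = lam i := by
    rw [Finset.card_image_of_injective _ (cf_strictmono hlam).injective, Finset.card_range]
  have hcard : (Finset.Icc 1 (mf lam i - 1)).card ≤
      (((Finset.univ.filter fun j : Fin n => (i : ℕ) < (j : ℕ)).image (mf lam))
        ∪ ((Finset.range (lam i)).image (cf n lam))).card := by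
    rw [Finset.card_union_of_disjoint hdisj, hcard1, hcard2, Nat.card_Icc]
    unfold mf; omega
  exact (Finset.eq_of_subset_of_card_le hsub hcard).symm

/-! ### Part 1: vanishing -/

lemma pigeon (σ : Equiv.Perm (Fin n)) (r : Fin n) : ∃ j : Fin n, j ≤ r ∧ r ≤ σ j := by
  by_contra h
  push_neg at h
  have hm : ∀ j ∈ Finset.Iic r, σ j ∈ Finset.Iio r := fun j hj =>
    Finset.mem_Iio.mpr (h j (Finset.mem_Iic.mp hj))
  have := Finset.card_le_card_of_injOn σ hm (σ.injective.injOn)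
  rw [Fin.card_Iic, Fin.card_Iio] at this
  omega

lemma part1 {mu : Fin n → ℕ} (hlam : Antitone lam) (hmu : Antitone mu)
    (hex : ∃ i, mu i < lam i) : Gro n lam (bmu n mu) = 0 := by
  obtain ⟨r, hr⟩ := hex
  have hdet : Matrix.det (Matrix.of fun i j : Fin n =>
      fb (bmu n mu i) (lam j + (n - 1 - (j : ℕ))) * (1 + bet * bmu n mu i) ^ (j : ℕ)) = 0 := by
    rw [Matrix.det_apply]
    apply Finset.sum_eq_zero
    intro σ _
    obtain ⟨j, hj1, hj2⟩ := pigeon σ r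
    have hzero : fb (bmu n mu (σ j)) (lam j + (n - 1 - (j : ℕ))) = 0 := by
      have h1 : lam r ≤ lam j := hlam hj1
      have h2 : mu (σ j) ≤ mu r := hmu hj2
      have h3 : (j : ℕ) ≤ (r : ℕ) := hj1
      have h4 : (r : ℕ) ≤ (σ j : ℕ) := hj2
      have h5 := (σ j).isLt
      have h6 := r.isLt
      show fb (om 0 (bv (mu (σ j) + n - (σ j : ℕ)))) (lam j + (n - 1 - (j : ℕ))) = 0
      exact fb_zero (by omega) (by omega)
    have : (∏ i : Fin n, (Matrix.of fun i j : Fin n =>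
        fb (bmu n mu i) (lam j + (n - 1 - (j : ℕ))) * (1 + bet * bmu n mu i) ^ (j : ℕ)) (σ i) i)
        = 0 := by
      apply Finset.prod_eq_zero (Finset.mem_univ j)
      simp only [Matrix.of_apply, hzero, zero_mul]
    rw [this]; simp
  rw [Gro, hdet, zero_div]

/-! ### Part 2 -/

lemma swap_prod (g : Fin n → K) :
    (∏ i : Fin n, ∏ j ∈ Finset.univ.filter fun j : Fin n => (i : ℕ) < (j : ℕ), g j)
      = ∏ j : Fin n, g j ^ (j : ℕ) := by
  rw [Finset.prod_comm'
    (s' := fun j : Fin n => Finset.univ.filter fun i : Fin n => (i : ℕ) < (j : ℕ))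
    (t' := Finset.univ) (by intro i j; simp)]
  apply Finset.prod_congr rfl
  intro j _
  rw [Finset.prod_const]
  congr 1
  have he : (Finset.univ.filter fun i : Fin n => (i : ℕ) < (j : ℕ)) = Finset.Iio j := by
    ext i
    simp only [Finset.mem_filter, Finset.mem_univ, true_and, Finset.mem_Iio, Fin.lt_def]
  rw [he, Fin.card_Iio]

lemma part2 (hlam : Antitone lam) :
    Gro n lam (bmu n lam)
      = ∏ i : Fin n, ∏ c ∈ Finset.range (lam i), om (bv (cf n lam c)) (bv (mf lam i)) := by
  classical
  set P : Fin n → K := fun i =>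
    ∏ j ∈ Finset.univ.filter fun j : Fin n => (i : ℕ) < (j : ℕ),
      om (bv (mf lam j)) (bv (mf lam i)) with hP
  set Q : Fin n → K := fun i =>
    ∏ c ∈ Finset.range (lam i), om (bv (cf n lam c)) (bv (mf lam i)) with hQ
  set E : Fin n → K := fun i => ((1 + bet * bv (mf lam i))⁻¹) ^ (i : ℕ) with hE
  have hy : ∀ i : Fin n, bmu n lam i = om 0 (bv (mf lam i)) := fun i => rfl
  -- the denominator
  have hDfact : ∀ i j : Fin n, i < j →
      bmu n lam i - bmu n lam j
        = om (bv (mf lam j)) (bv (mf lam i)) * (1 + bet * bv (mf lam j))⁻¹ := by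
    intro i j _
    rw [hy i, hy j, sub_om, div_eq_mul_inv]
  have hD : (∏ i : Fin n, ∏ j ∈ Finset.univ.filter fun j : Fin n => (i : ℕ) < (j : ℕ),
        (bmu n lam i - bmu n lam j))
      = (∏ i : Fin n, P i) * ∏ i : Fin n, E i := by
    have h1 : ∀ i : Fin n,
        (∏ j ∈ Finset.univ.filter fun j : Fin n => (i : ℕ) < (j : ℕ),
          (bmu n lam i - bmu n lam j))
        = P i * ∏ j ∈ Finset.univ.filter fun j : Fin n => (i : ℕ) < (j : ℕ),
            (1 + bet * bv (mf lam j))⁻¹ := by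
      intro i
      rw [hP, ← Finset.prod_mul_distrib]
      apply Finset.prod_congr rfl
      intro j hj
      simp only [Finset.mem_filter, Finset.mem_univ, true_and] at hj
      exact hDfact i j (Fin.lt_def.mpr hj)
    calc (∏ i : Fin n, ∏ j ∈ Finset.univ.filter fun j : Fin n => (i : ℕ) < (j : ℕ),
        (bmu n lam i - bmu n lam j))
        = ∏ i : Fin n, (P i * ∏ j ∈ Finset.univ.filter fun j : Fin n => (i : ℕ) < (j : ℕ),
            (1 + bet * bv (mf lam j))⁻¹) := Finset.prod_congr rfl fun i _ => h1 i
      _ = (∏ i : Fin n, P i) * ∏ i : Fin n,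
            ∏ j ∈ Finset.univ.filter fun j : Fin n => (i : ℕ) < (j : ℕ),
              (1 + bet * bv (mf lam j))⁻¹ := Finset.prod_mul_distrib
      _ = (∏ i : Fin n, P i) * ∏ i : Fin n, E i := by
            rw [swap_prod fun j => (1 + bet * bv (mf lam j))⁻¹]
  -- nonvanishing of the denominator pieces
  have hPne : ∀ i, P i ≠ 0 := by
    intro i
    rw [hP]
    apply Finset.prod_ne_zero_iff.mpr
    intro j hj
    simp only [Finset.mem_filter, Finset.mem_univ, true_and] at hj
    exact om_ne (Nat.ne_of_lt (mf_lt hlam (Fin.lt_def.mpr hj)))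
  have hEne : ∀ i, E i ≠ 0 := fun i =>
    pow_ne_zero _ (inv_ne_zero (one_add_ne _))
  have hDne : (∏ i : Fin n, P i) * (∏ i : Fin n, E i) ≠ 0 :=
    mul_ne_zero (Finset.prod_ne_zero_iff.mpr fun i _ => hPne i)
      (Finset.prod_ne_zero_iff.mpr fun i _ => hEne i)
  -- the determinant is upper triangular
  have htri : (Matrix.of fun i j : Fin n =>
      fb (bmu n lam i) (lam j + (n - 1 - (j : ℕ)))
        * (1 + bet * bmu n lam i) ^ (j : ℕ)).BlockTriangular id := by
    intro i j hj
    have hij : j < i := hj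
    have h1 : lam i ≤ lam j := hlam hij.le
    have h2 : (j : ℕ) < (i : ℕ) := hij
    have h3 := i.isLt
    simp only [Matrix.of_apply]
    rw [hy i]
    rw [fb_zero (m := mf lam i) (by unfold mf; omega) (by unfold mf; omega), zero_mul]
  have hdiag : ∀ i : Fin n,
      (Matrix.of fun i j : Fin n =>
        fb (bmu n lam i) (lam j + (n - 1 - (j : ℕ)))
          * (1 + bet * bmu n lam i) ^ (j : ℕ)) i i = P i * Q i * E i := by
    intro i
    have hin := i.isLt
    simp only [Matrix.of_apply]
    rw [hy i, one_add_bet_om]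
    rw [show lam i + (n - 1 - (i : ℕ)) = mf lam i - 1 by unfold mf; omega]
    rw [fb_om]
    obtain ⟨hun, hdis⟩ := partition_lemma hlam i
    rw [hun, Finset.prod_union hdis]
    congr 1
    congr 1
    · rw [Finset.prod_image]
      intro a _ b _ hab
      by_contra hne
      rcases lt_or_gt_of_ne hne with h | h
      · exact absurd hab (by have := mf_lt hlam h; omega)
      · exact absurd hab (by have := mf_lt hlam h; omega)
    · rw [Finset.prod_image fun a _ b _ hab => (cf_strictmono hlam).injective hab]
  -- put it together
  rw [Gro, Matrix.det_of_upperTriangular htri]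
  rw [Finset.prod_congr rfl fun i _ => hdiag i, hD]
  rw [Finset.prod_mul_distrib, Finset.prod_mul_distrib]
  rw [show (∏ i : Fin n, P i) * (∏ i : Fin n, Q i) * (∏ i : Fin n, E i)
      = (∏ i : Fin n, Q i) * ((∏ i : Fin n, P i) * (∏ i : Fin n, E i)) by ring]
  rw [mul_div_assoc, div_self hDne, mul_one]


theorem statement4 (n : ℕ) (lam mu : Fin n → ℕ)
    (hlam : Antitone lam) (hmu : Antitone mu) :
    ((∃ i, mu i < lam i) → Gro n lam (bmu n mu) = 0) ∧
    Gro n lam (bmu n lam)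
      = ∏ i : Fin n, ∏ j ∈ Finset.range (lam i),
          om (bv (n + (j + 1) - conj n lam (j + 1))) (bv (lam i + n - (i : ℕ))) := by
  exact ⟨fun hex => part1 hlam hmu hex, part2 hlam⟩

end Stmt4
end
end

section
/- For every n ≥ 1, with ρ_k := (k, k−1, …, 2, 1): GP_{ρ_{n−1}}(x_1,…,x_n|b) = GP_{ρ_{n−1}}(x_1,…,x_n) = Π_{1≤i<j≤n} (x_i ⊕ x_j), and GQ_{ρ_n}(x_1,…,x_n|b) = GQ_{ρ_n}(x_1,…,x_n) = Π_{1≤i≤j≤n} (x_i ⊕ x_j); in particular these polynomials do not depend on the parameters b. -/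
set_option maxHeartbeats 1000000
set_option synthInstance.maxHeartbeats 1000000


/-!
STATEMENT 7: For every n ≥ 1, with ρ_k = (k, k−1, …, 2, 1):
GP_{ρ_{n−1}}(x_1,…,x_n|b) = GP_{ρ_{n−1}}(x_1,…,x_n) = Π_{1≤i<j≤n} (x_i ⊕ x_j), and
GQ_{ρ_n}(x_1,…,x_n|b) = GQ_{ρ_n}(x_1,…,x_n) = Π_{1≤i≤j≤n} (x_i ⊕ x_j);
in particular these polynomials do not depend on the parameters b.
(Specializing all b_i = 0 amounts to using the zero parameter sequence.)
-/

noncomputable section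

namespace Stmt7

variable {F : Type} [Field F]

/-- x ⊕ y = x + y + βxy, for a fixed element `be` playing the role of β. -/
def op (be a c : F) : F := a + c + be * a * c

/-- x ⊖ y = (x − y)/(1 + βy). -/
def om (be a c : F) : F := (a - c) / (1 + be * c)

/-- `[x|c]^k = (x ⊕ c 1)(x ⊕ c 2)⋯(x ⊕ c k)`. -/
def fb (be : F) (c : ℕ → F) (xx : F) (k : ℕ) : F :=
  ∏ t ∈ Finset.range k, op be xx (c (t + 1))

/-- `[[x|c]]^k = (x ⊕ x)(x ⊕ c 1)⋯(x ⊕ c (k−1))`. -/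
def db (be : F) (c : ℕ → F) (xx : F) (k : ℕ) : F :=
  ∏ t ∈ Finset.range k, if t = 0 then op be xx xx else op be xx (c t)

/-- `Π_{i=1}^r Π_{j=i+1}^N (y_i ⊕ y_j)/(y_i ⊖ y_j)`. -/
def Phi (be : F) {N : ℕ} (y : Fin N → F) (r : ℕ) (hr : r ≤ N) : F :=
  ∏ i : Fin r, ∏ j ∈ Finset.univ.filter fun j : Fin N => (i : ℕ) < (j : ℕ),
    op be (y (Fin.castLE hr i)) (y j) / om be (y (Fin.castLE hr i)) (y j)

/-- The Hall–Littlewood-type expression defining `GP_λ(y_1,…,y_N | c)`. -/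
def GP (be : F) (c : ℕ → F) {N : ℕ} (y : Fin N → F) {r : ℕ} (hr : r ≤ N)
    (lam : Fin r → ℕ) : F :=
  (((N - r).factorial : F))⁻¹ *
    ∑ w : Equiv.Perm (Fin N),
      (∏ j : Fin r, fb be c (y (w (Fin.castLE hr j))) (lam j)) *
        Phi be (fun k => y (w k)) r hr

/-- The Hall–Littlewood-type expression defining `GQ_λ(y_1,…,y_N | c)`. -/
def GQ (be : F) (c : ℕ → F) {N : ℕ} (y : Fin N → F) {r : ℕ} (hr : r ≤ N)
    (lam : Fin r → ℕ) : F :=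
  (((N - r).factorial : F))⁻¹ *
    ∑ w : Equiv.Perm (Fin N),
      (∏ j : Fin r, db be c (y (w (Fin.castLE hr j))) (lam j)) *
        Phi be (fun k => y (w k)) r hr

/-- Rational function field in the variables x_1,…,x_n (= `Sum.inl i`),
β (= `Sum.inr 0`) and b_1, b_2, … (= `Sum.inr k`, k ≥ 1), over ℚ. -/
abbrev K (n : ℕ) : Type := FractionRing (MvPolynomial (Fin n ⊕ ℕ) ℚ)

def xv (n : ℕ) (i : Fin n) : K n :=
  algebraMap (MvPolynomial (Fin n ⊕ ℕ) ℚ) (K n) (MvPolynomial.X (Sum.inl i))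

def bet (n : ℕ) : K n :=
  algebraMap (MvPolynomial (Fin n ⊕ ℕ) ℚ) (K n) (MvPolynomial.X (Sum.inr 0))

/-- The parameters b_k (k ≥ 1), with the convention b_0 = 0. -/
def bv (n : ℕ) (k : ℕ) : K n :=
  if k = 0 then 0 else
    algebraMap (MvPolynomial (Fin n ⊕ ℕ) ℚ) (K n) (MvPolynomial.X (Sum.inr k))

open Finset

def pairs (N : ℕ) : Finset (Fin N × Fin N) := univ.filter fun p => p.1 < p.2

lemma filter_lt_eq_Ioi {N : ℕ} (i : Fin N) :
    (univ.filter fun j : Fin N => (i : ℕ) < (j : ℕ)) = Ioi i := by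
  ext j
  simp only [mem_filter, mem_univ, true_and, mem_Ioi, Fin.lt_def]

lemma prod_pairs {N : ℕ} (f : Fin N → Fin N → F) :
    ∏ i : Fin N, ∏ j ∈ Ioi i, f i j = ∏ p ∈ pairs N, f p.1 p.2 := by
  rw [pairs, prod_filter, ← Finset.univ_product_univ,
    prod_product' (f := fun i j : Fin N => if i < j then f i j else 1)]
  refine prod_congr rfl fun i _ => ?_
  rw [← prod_filter]
  congr 1
  ext j; simp

lemma prod_pairs_snd {N : ℕ} (g : Fin N → F) :
    ∏ p ∈ pairs N, g p.2 = ∏ j : Fin N, g j ^ (j : ℕ) := by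
  rw [pairs, prod_filter, ← Finset.univ_product_univ,
    prod_product_right' (f := fun i j : Fin N => if i < j then g j else 1)]
  refine prod_congr rfl fun j _ => ?_
  rw [← prod_filter, prod_const]
  congr 1
  have h : (univ.filter fun i : Fin N => i < j) = Iio j := by ext i; simp
  rw [h, Fin.card_Iio]

lemma prod_pairs_symm_perm {N : ℕ} (w : Equiv.Perm (Fin N)) (f : Fin N → Fin N → F)
    (hsym : ∀ i j, f i j = f j i) :
    ∏ p ∈ pairs N, f (w p.1) (w p.2) = ∏ p ∈ pairs N, f p.1 p.2 := by
  refine prod_nbij' (fun p => if w p.1 < w p.2 then (w p.1, w p.2) else (w p.2, w p.1))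
    (fun p => if w⁻¹ p.1 < w⁻¹ p.2 then (w⁻¹ p.1, w⁻¹ p.2) else (w⁻¹ p.2, w⁻¹ p.1))
    ?_ ?_ ?_ ?_ ?_
  · intro p hp
    simp only [pairs, mem_filter, mem_univ, true_and] at hp ⊢
    split_ifs with h
    · exact h
    · have hne : w p.2 ≠ w p.1 := w.injective.ne hp.ne'
      exact (not_lt.mp h).lt_of_ne hne
  · intro p hp
    simp only [pairs, mem_filter, mem_univ, true_and] at hp ⊢
    split_ifs with h
    · exact h
    · have hne : w⁻¹ p.2 ≠ w⁻¹ p.1 := w⁻¹.injective.ne hp.ne'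
      exact (not_lt.mp h).lt_of_ne hne
  · intro p hp
    simp only [pairs, mem_filter, mem_univ, true_and] at hp
    split_ifs with h1 h2 h3
    · simp
    · exact absurd hp (by simpa using h2)
    · exact absurd (show p.2 < p.1 by simpa using h3) (asymm hp)
    · simp
  · intro p hp
    simp only [pairs, mem_filter, mem_univ, true_and] at hp
    split_ifs with h1 h2 h3
    · simp
    · exact absurd hp (by simpa using h2)
    · exact absurd (show p.2 < p.1 by simpa using h3) (asymm hp)
    · simp
  · intro p hp
    split_ifs with h
    · rfl
    · exact hsym _ _

lemma prod_pairs_sub_perm {N : ℕ} (w : Equiv.Perm (Fin N)) (y : Fin N → F) :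
    ∏ p ∈ pairs N, (y (w p.1) - y (w p.2))
      = ((Equiv.Perm.sign w : ℤ) : F) * ∏ p ∈ pairs N, (y p.1 - y p.2) := by
  have h0 : (Matrix.vandermonde y).submatrix w id = Matrix.vandermonde fun i => y (w i) := by
    ext i j
    simp [Matrix.vandermonde, Matrix.submatrix]
  have h1 := Matrix.det_permute w (Matrix.vandermonde y)
  rw [h0, Matrix.det_vandermonde, Matrix.det_vandermonde] at h1
  rw [prod_pairs (f := fun i j => y (w j) - y (w i)),
    prod_pairs (f := fun i j => y j - y i)] at h1
  have hflip : ∀ z : Fin N → F, ∏ p ∈ pairs N, (z p.1 - z p.2)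
      = (-1 : F) ^ (pairs N).card * ∏ p ∈ pairs N, (z p.2 - z p.1) := by
    intro z
    rw [← prod_const, ← prod_mul_distrib]
    exact prod_congr rfl fun p _ => by ring
  rw [hflip (fun i => y (w i)), hflip y, h1]
  ring

lemma sign_sq {N : ℕ} (w : Equiv.Perm (Fin N)) :
    ((Equiv.Perm.sign w : ℤ) : F) * ((Equiv.Perm.sign w : ℤ) : F) = 1 := by
  rcases Int.units_eq_one_or (Equiv.Perm.sign w) with h | h <;> rw [h] <;> norm_num

open Polynomial Finset in
lemma det_staircase {N : ℕ} (be : F) (hbe : be ≠ 0) (b : ℕ → F) (y : Fin N → F) :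
    Matrix.det (Matrix.of fun i j : Fin N =>
      fb be b (y i) (N - 1 - (j : ℕ)) * (1 + be * y i) ^ (j : ℕ))
    = ∏ i : Fin N, ∏ j ∈ Finset.Ioi i, (y i - y j) := by
  set P : Fin N → F[X] := fun j =>
    (∏ t ∈ range (N - 1 - (j : ℕ)), (C ((1 + be * b (t+1))/be) * X + C (-(1/be)))) * X ^ (j : ℕ)
    with hP
  have hdeg : ∀ j : Fin N, (P j).natDegree < N := by
    intro j
    have h1 : (∏ t ∈ range (N - 1 - (j : ℕ)),
        (C ((1 + be * b (t+1))/be) * X + C (-(1/be)))).natDegree ≤ N - 1 - (j : ℕ) := by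
      refine le_trans (natDegree_prod_le _ _) ?_
      calc ∑ t ∈ range (N - 1 - (j : ℕ)), (C ((1 + be * b (t+1))/be) * X + C (-(1/be))).natDegree
          ≤ ∑ _t ∈ range (N - 1 - (j : ℕ)), 1 := by
            exact Finset.sum_le_sum fun t _ => natDegree_linear_le
        _ = N - 1 - (j : ℕ) := by simp
    have h2 : (P j).natDegree ≤ N - 1 - (j : ℕ) + (j : ℕ) := by
      rw [hP]
      refine le_trans natDegree_mul_le ?_
      rw [natDegree_X_pow]
      exact Nat.add_le_add_right h1 _
    have := j.2
    omega
  have heval : ∀ (i j : Fin N), (P j).eval (1 + be * y i)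
      = fb be b (y i) (N - 1 - (j : ℕ)) * (1 + be * y i) ^ (j : ℕ) := by
    intro i j
    rw [hP]
    simp only [eval_mul, eval_pow, eval_X, eval_prod, eval_add, eval_C]
    congr 1
    unfold fb
    refine Finset.prod_congr rfl fun t _ => ?_
    unfold op
    field_simp
    ring
  have hGM : (Matrix.of fun i j : Fin N =>
      fb be b (y i) (N - 1 - (j : ℕ)) * (1 + be * y i) ^ (j : ℕ))
      = Matrix.vandermonde (fun i => 1 + be * y i) *
        Matrix.of (fun k j : Fin N => (P j).coeff k) := by
    ext i j
    rw [Matrix.mul_apply, Matrix.of_apply, ← heval i j,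
      eval_eq_sum_range' (hdeg j), ← Fin.sum_univ_eq_sum_range]
    refine Finset.sum_congr rfl fun k _ => ?_
    rw [Matrix.vandermonde_apply, Matrix.of_apply, mul_comm]
  rw [hGM, Matrix.det_mul, Matrix.det_vandermonde]
  have hdetM : (Matrix.of (fun k j : Fin N => (P j).coeff k)).det
      = ∏ j : Fin N, (-(1/be)) ^ (N - 1 - (j : ℕ)) := by
    rw [Matrix.det_of_lowerTriangular]
    · refine Finset.prod_congr rfl fun j _ => ?_
      rw [Matrix.of_apply, hP]
      simp only [coeff_mul_X_pow', le_refl, if_pos, Nat.sub_self]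
      rw [coeff_zero_eq_eval_zero]
      simp [eval_prod]
    · intro k j h
      rw [Matrix.of_apply, hP, coeff_mul_X_pow']
      rw [if_neg]
      exact not_le.mpr h
  rw [hdetM, ← Finset.prod_mul_distrib]
  refine Finset.prod_congr rfl fun i _ => ?_
  have hc : ((-(1/be)) : F) ^ (N - 1 - (i : ℕ)) = ∏ _j ∈ Finset.Ioi i, (-(1/be)) := by
    rw [Finset.prod_const, Fin.card_Ioi]
  rw [hc, ← Finset.prod_mul_distrib]
  refine Finset.prod_congr rfl fun j _ => ?_
  have : (1 + be * y j) - (1 + be * y i) = be * (y j - y i) := by ring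
  rw [this]
  field_simp
  ring


lemma core {N : ℕ} (be : F) (hbe : be ≠ 0) (b : ℕ → F) (y : Fin N → F)
    (hy : Function.Injective y) :
    ∑ w : Equiv.Perm (Fin N),
      (∏ j : Fin N, fb be b (y (w j)) (N - 1 - (j : ℕ))) *
        Phi be (fun k => y (w k)) N (le_refl N)
    = ∏ p ∈ pairs N, op be (y p.1) (y p.2) := by
  set Δ : F := ∏ p ∈ pairs N, (y p.1 - y p.2) with hΔdef
  have hΔ : Δ ≠ 0 := by
    rw [hΔdef]
    refine prod_ne_zero_iff.mpr fun p hp => ?_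
    simp only [pairs, mem_filter, mem_univ, true_and] at hp
    exact sub_ne_zero.mpr fun hEq => absurd (hy hEq) hp.ne
  have hterm : ∀ w : Equiv.Perm (Fin N),
      (∏ j : Fin N, fb be b (y (w j)) (N - 1 - (j : ℕ))) *
        Phi be (fun k => y (w k)) N (le_refl N)
      = (∏ p ∈ pairs N, op be (y p.1) (y p.2)) / Δ * (((Equiv.Perm.sign w : ℤ) : F) *
          ∏ j : Fin N, (fb be b (y (w j)) (N - 1 - (j : ℕ)) * (1 + be * y (w j)) ^ (j : ℕ))) := by
    intro w
    have hPhi : Phi be (fun k => y (w k)) N (le_refl N)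
        = (∏ p ∈ pairs N, op be (y p.1) (y p.2)) *
            (∏ j : Fin N, (1 + be * y (w j)) ^ (j : ℕ)) /
          (((Equiv.Perm.sign w : ℤ) : F) * Δ) := by
      unfold Phi
      simp only [Fin.castLE_rfl, id_eq]
      simp only [filter_lt_eq_Ioi]
      simp only [om, div_div_eq_mul_div]
      rw [prod_pairs (f := fun i j =>
        op be (y (w i)) (y (w j)) * (1 + be * y (w j)) / (y (w i) - y (w j)))]
      rw [prod_div_distrib, prod_mul_distrib]
      rw [prod_pairs_symm_perm w (fun a c => op be (y a) (y c))
        (fun a c => by unfold op; ring)]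
      rw [prod_pairs_snd (g := fun j => 1 + be * y (w j))]
      rw [prod_pairs_sub_perm w y]
    rw [hPhi, prod_mul_distrib]
    have hsinv : (((Equiv.Perm.sign w : ℤ) : F))⁻¹ = ((Equiv.Perm.sign w : ℤ) : F) :=
      inv_eq_of_mul_eq_one_right (sign_sq w)
    rw [div_eq_mul_inv, div_eq_mul_inv, mul_inv, hsinv]
    ring
  calc ∑ w : Equiv.Perm (Fin N),
      (∏ j : Fin N, fb be b (y (w j)) (N - 1 - (j : ℕ))) *
        Phi be (fun k => y (w k)) N (le_refl N)
      = ∑ w : Equiv.Perm (Fin N), (∏ p ∈ pairs N, op be (y p.1) (y p.2)) / Δ *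
          (((Equiv.Perm.sign w : ℤ) : F) *
          ∏ j : Fin N, (fb be b (y (w j)) (N - 1 - (j : ℕ)) * (1 + be * y (w j)) ^ (j : ℕ))) :=
        Finset.sum_congr rfl fun w _ => hterm w
    _ = (∏ p ∈ pairs N, op be (y p.1) (y p.2)) / Δ *
        ∑ w : Equiv.Perm (Fin N), (((Equiv.Perm.sign w : ℤ) : F) *
          ∏ j : Fin N, (fb be b (y (w j)) (N - 1 - (j : ℕ)) * (1 + be * y (w j)) ^ (j : ℕ))) := by
        rw [mul_sum]
    _ = (∏ p ∈ pairs N, op be (y p.1) (y p.2)) / Δ *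
        (Matrix.of fun i j : Fin N =>
          fb be b (y i) (N - 1 - (j : ℕ)) * (1 + be * y i) ^ (j : ℕ)).det := by
        rw [Matrix.det_apply']
        rfl
    _ = (∏ p ∈ pairs N, op be (y p.1) (y p.2)) / Δ * Δ := by
        rw [det_staircase be hbe b y, hΔdef, prod_pairs (f := fun i j => y i - y j)]
    _ = ∏ p ∈ pairs N, op be (y p.1) (y p.2) := div_mul_cancel₀ _ hΔ

lemma db_succ (be : F) (c : ℕ → F) (x : F) (k : ℕ) :
    db be c x (k + 1) = op be x x * fb be c x k := by
  unfold db fb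
  rw [Finset.prod_range_succ']
  simp only [Nat.succ_ne_zero, if_false, if_true, ite_true]
  ring

lemma Phi_extend {m : ℕ} (be : F) (z : Fin (m + 1) → F) (h : m ≤ m + 1) :
    Phi be z m h = Phi be z (m + 1) (le_refl (m + 1)) := by
  unfold Phi
  rw [Fin.prod_univ_castSucc (f := fun i : Fin (m + 1) =>
    ∏ j ∈ Finset.univ.filter fun j : Fin (m + 1) => (i : ℕ) < (j : ℕ),
      op be (z (Fin.castLE (le_refl (m + 1)) i)) (z j) /
        om be (z (Fin.castLE (le_refl (m + 1)) i)) (z j))]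
  have hlast : (Finset.univ.filter fun j : Fin (m + 1) =>
      ((Fin.last m : Fin (m + 1)) : ℕ) < (j : ℕ)) = ∅ := by
    ext j
    simp only [Finset.mem_filter, Finset.mem_univ, true_and, Fin.val_last,
      Finset.notMem_empty, iff_false, not_lt]
    omega
  rw [hlast, Finset.prod_empty, mul_one]
  refine Finset.prod_congr rfl fun i _ => ?_
  have h1 : Fin.castLE (le_refl (m + 1)) (Fin.castSucc i) = Fin.castLE h i := by
    ext; simp
  have h2 : ((Fin.castSucc i : Fin (m + 1)) : ℕ) = (i : ℕ) := by simp
  rw [h1, h2]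

open Finset in
lemma GP_eval {m : ℕ} (be : F) (hbe : be ≠ 0) (b : ℕ → F) (y : Fin (m + 1) → F)
    (hy : Function.Injective y) (hr : m ≤ m + 1) :
    GP be b y hr (fun j : Fin m => m - (j : ℕ))
    = ∏ p ∈ pairs (m + 1), op be (y p.1) (y p.2) := by
  unfold GP
  rw [show m + 1 - m = 1 by omega]
  simp only [Nat.factorial_one, Nat.cast_one, inv_one, one_mul]
  rw [← core be hbe b y hy]
  refine Finset.sum_congr rfl fun w _ => ?_
  rw [Phi_extend be (fun k => y (w k)) hr]
  congr 1
  rw [Fin.prod_univ_castSucc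
    (f := fun j : Fin (m + 1) => fb be b (y (w j)) (m + 1 - 1 - (j : ℕ)))]
  simp only [Fin.coe_castSucc, Fin.val_last]
  rw [show m + 1 - 1 - m = 0 by omega]
  have h0 : fb be b (y (w (Fin.last m))) 0 = 1 := by unfold fb; simp
  rw [h0, mul_one]
  refine Finset.prod_congr rfl fun j _ => ?_
  have hc : Fin.castSucc j = Fin.castLE hr j := by ext; simp
  rw [← hc]
  exact congrArg (fb be b (y (w j.castSucc))) (by omega)

open Finset in
lemma GQ_eval {m : ℕ} (be : F) (hbe : be ≠ 0) (b : ℕ → F) (y : Fin (m + 1) → F)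
    (hy : Function.Injective y) :
    GQ be b y (le_refl (m + 1)) (fun j : Fin (m + 1) => m + 1 - (j : ℕ))
    = (∏ i : Fin (m + 1), op be (y i) (y i)) *
        ∏ p ∈ pairs (m + 1), op be (y p.1) (y p.2) := by
  unfold GQ
  rw [Nat.sub_self]
  simp only [Nat.factorial_zero, Nat.cast_one, inv_one, one_mul, Fin.castLE_rfl, id_eq]
  have hterm : ∀ w : Equiv.Perm (Fin (m + 1)),
      (∏ j : Fin (m + 1), db be b (y (w j)) (m + 1 - (j : ℕ)))
      = (∏ i : Fin (m + 1), op be (y i) (y i)) *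
        ∏ j : Fin (m + 1), fb be b (y (w j)) (m + 1 - 1 - (j : ℕ)) := by
    intro w
    calc ∏ j : Fin (m + 1), db be b (y (w j)) (m + 1 - (j : ℕ))
        = ∏ j : Fin (m + 1),
            (op be (y (w j)) (y (w j)) * fb be b (y (w j)) (m + 1 - 1 - (j : ℕ))) := by
          refine Finset.prod_congr rfl fun j _ => ?_
          rw [show m + 1 - (j : ℕ) = (m + 1 - 1 - (j : ℕ)) + 1 by omega, db_succ]
      _ = (∏ j : Fin (m + 1), op be (y (w j)) (y (w j))) *
          ∏ j : Fin (m + 1), fb be b (y (w j)) (m + 1 - 1 - (j : ℕ)) :=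
        Finset.prod_mul_distrib
      _ = _ := by rw [Equiv.prod_comp w (fun i => op be (y i) (y i))]
  simp_rw [hterm, mul_assoc]
  rw [← Finset.mul_sum, core be hbe b y hy]

open Finset in
lemma prod_le_split {N : ℕ} (f : Fin N → Fin N → F) :
    ∏ i : Fin N, ∏ j ∈ Finset.univ.filter (fun j : Fin N => (i : ℕ) ≤ (j : ℕ)), f i j
    = (∏ i : Fin N, f i i) * ∏ p ∈ pairs N, f p.1 p.2 := by
  rw [← prod_pairs, ← Finset.prod_mul_distrib]
  refine Finset.prod_congr rfl fun i _ => ?_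
  have h : (Finset.univ.filter fun j : Fin N => (i : ℕ) ≤ (j : ℕ)) = insert i (Ioi i) := by
    ext j
    simp only [mem_filter, mem_univ, true_and, mem_insert, mem_Ioi, Fin.lt_def, Fin.ext_iff]
    omega
  rw [h, Finset.prod_insert (by simp)]

theorem statement7 (n : ℕ) (hn : 1 ≤ n) :
    (GP (bet n) (bv n) (xv n) (show n - 1 ≤ n by omega)
        (fun j : Fin (n - 1) => n - 1 - (j : ℕ))
      = GP (bet n) (fun _ => 0) (xv n) (show n - 1 ≤ n by omega)
        (fun j : Fin (n - 1) => n - 1 - (j : ℕ)) ∧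
     GP (bet n) (bv n) (xv n) (show n - 1 ≤ n by omega)
        (fun j : Fin (n - 1) => n - 1 - (j : ℕ))
      = ∏ i : Fin n, ∏ j ∈ Finset.univ.filter fun j : Fin n => (i : ℕ) < (j : ℕ),
          op (bet n) (xv n i) (xv n j)) ∧
    (GQ (bet n) (bv n) (xv n) (le_refl n) (fun j : Fin n => n - (j : ℕ))
      = GQ (bet n) (fun _ => 0) (xv n) (le_refl n) (fun j : Fin n => n - (j : ℕ)) ∧
     GQ (bet n) (bv n) (xv n) (le_refl n) (fun j : Fin n => n - (j : ℕ))
      = ∏ i : Fin n, ∏ j ∈ Finset.univ.filter fun j : Fin n => (i : ℕ) ≤ (j : ℕ),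
          op (bet n) (xv n i) (xv n j)) := by
  obtain ⟨m, rfl⟩ : ∃ m, n = m + 1 := ⟨n - 1, by omega⟩
  have hbe : bet (m + 1) ≠ 0 := by
    rw [bet]
    exact (map_ne_zero_iff _
      (IsFractionRing.injective (MvPolynomial (Fin (m + 1) ⊕ ℕ) ℚ) (K (m + 1)))).mpr
      (MvPolynomial.X_ne_zero _)
  have hy : Function.Injective (xv (m + 1)) := by
    have : Function.Injective fun i : Fin (m + 1) =>
        algebraMap (MvPolynomial (Fin (m + 1) ⊕ ℕ) ℚ) (K (m + 1))
          (MvPolynomial.X (Sum.inl i)) :=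
      (IsFractionRing.injective (MvPolynomial (Fin (m + 1) ⊕ ℕ) ℚ) (K (m + 1))).comp
        (MvPolynomial.X_injective.comp Sum.inl_injective)
    exact this
  refine ⟨⟨?_, ?_⟩, ?_, ?_⟩
  · exact (GP_eval (bet _) hbe (bv _) (xv _) hy (by omega)).trans
      (GP_eval (bet _) hbe (fun _ => 0) (xv _) hy (by omega)).symm
  · refine (GP_eval (bet _) hbe (bv _) (xv _) hy (by omega)).trans ?_
    simp only [filter_lt_eq_Ioi]
    exact (prod_pairs (fun i j => op (bet (m + 1)) (xv (m + 1) i) (xv (m + 1) j))).symm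
  · exact (GQ_eval (bet _) hbe (bv _) (xv _) hy).trans
      (GQ_eval (bet _) hbe (fun _ => 0) (xv _) hy).symm
  · refine (GQ_eval (bet _) hbe (bv _) (xv _) hy).trans ?_
    exact (prod_le_split (fun i j => op (bet (m + 1)) (xv (m + 1) i) (xv (m + 1) j))).symm


end Stmt7
end
end

section
/- (Factorization formula) Let n ≥ 1 and λ = (λ_1 ≥ ⋯ ≥ λ_n ≥ 0) be a partition in P_n, and set ρ_k := (k, k−1, …, 2, 1). Then GP_{ρ_{n−1}+λ}(x_1,…,x_n|b) = Π_{1≤i<j≤n} (x_i ⊕ x_j) · G_λ(x_1,…,x_n|b), and GQ_{ρ_n+λ}(x_1,…,x_n|b) = Π_{1≤i≤j≤n} (x_i ⊕ x_j) · G_λ(x_1,…,x_n|b), where ρ_{n−1}+λ = (n−1+λ_1, n−2+λ_2, …, λ_n) (a strict partition of length n−1 or n) and ρ_n+λ = (n+λ_1, n−1+λ_2, …, 1+λ_n). -/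
/-!
STATEMENT 8 (Factorization formula): For n ≥ 1 and a partition
λ = (λ_1 ≥ ⋯ ≥ λ_n ≥ 0) in P_n, with ρ_k = (k,…,1):
GP_{ρ_{n−1}+λ}(x_1,…,x_n|b) = Π_{1≤i<j≤n}(x_i ⊕ x_j) · G_λ(x_1,…,x_n|b) and
GQ_{ρ_n+λ}(x_1,…,x_n|b) = Π_{1≤i≤j≤n}(x_i ⊕ x_j) · G_λ(x_1,…,x_n|b),
where G_λ is the factorial Grothendieck polynomial (determinant ratio).
In 1-indexed terms (ρ_{n−1}+λ)_j = (n−j)+λ_j and (ρ_n+λ)_j = (n+1−j)+λ_j.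
-/

noncomputable section

namespace Stmt8

variable {F : Type} [Field F]

/-- x ⊕ y = x + y + βxy, for a fixed element `be` playing the role of β. -/
def op (be a c : F) : F := a + c + be * a * c

/-- x ⊖ y = (x − y)/(1 + βy). -/
def om (be a c : F) : F := (a - c) / (1 + be * c)

/-- `[x|c]^k = (x ⊕ c 1)(x ⊕ c 2)⋯(x ⊕ c k)`. -/
def fb (be : F) (c : ℕ → F) (xx : F) (k : ℕ) : F :=
  ∏ t ∈ Finset.range k, op be xx (c (t + 1))

/-- `[[x|c]]^k = (x ⊕ x)(x ⊕ c 1)⋯(x ⊕ c (k−1))`. -/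
def db (be : F) (c : ℕ → F) (xx : F) (k : ℕ) : F :=
  ∏ t ∈ Finset.range k, if t = 0 then op be xx xx else op be xx (c t)

/-- `Π_{i=1}^r Π_{j=i+1}^N (y_i ⊕ y_j)/(y_i ⊖ y_j)`. -/
def Phi (be : F) {N : ℕ} (y : Fin N → F) (r : ℕ) (hr : r ≤ N) : F :=
  ∏ i : Fin r, ∏ j ∈ Finset.univ.filter fun j : Fin N => (i : ℕ) < (j : ℕ),
    op be (y (Fin.castLE hr i)) (y j) / om be (y (Fin.castLE hr i)) (y j)

/-- The Hall–Littlewood-type expression defining `GP_λ(y_1,…,y_N | c)`. -/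
def GP (be : F) (c : ℕ → F) {N : ℕ} (y : Fin N → F) {r : ℕ} (hr : r ≤ N)
    (lam : Fin r → ℕ) : F :=
  (((N - r).factorial : F))⁻¹ *
    ∑ w : Equiv.Perm (Fin N),
      (∏ j : Fin r, fb be c (y (w (Fin.castLE hr j))) (lam j)) *
        Phi be (fun k => y (w k)) r hr

/-- The Hall–Littlewood-type expression defining `GQ_λ(y_1,…,y_N | c)`. -/
def GQ (be : F) (c : ℕ → F) {N : ℕ} (y : Fin N → F) {r : ℕ} (hr : r ≤ N)
    (lam : Fin r → ℕ) : F :=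
  (((N - r).factorial : F))⁻¹ *
    ∑ w : Equiv.Perm (Fin N),
      (∏ j : Fin r, db be c (y (w (Fin.castLE hr j))) (lam j)) *
        Phi be (fun k => y (w k)) r hr

/-- Rational function field in the variables x_1,…,x_n (= `Sum.inl i`),
β (= `Sum.inr 0`) and b_1, b_2, … (= `Sum.inr k`, k ≥ 1), over ℚ. -/
abbrev K (n : ℕ) : Type := FractionRing (MvPolynomial (Fin n ⊕ ℕ) ℚ)

def xv (n : ℕ) (i : Fin n) : K n :=
  algebraMap (MvPolynomial (Fin n ⊕ ℕ) ℚ) (K n) (MvPolynomial.X (Sum.inl i))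

def bet (n : ℕ) : K n :=
  algebraMap (MvPolynomial (Fin n ⊕ ℕ) ℚ) (K n) (MvPolynomial.X (Sum.inr 0))

/-- The parameters b_k (k ≥ 1), with the convention b_0 = 0. -/
def bv (n : ℕ) (k : ℕ) : K n :=
  if k = 0 then 0 else
    algebraMap (MvPolynomial (Fin n ⊕ ℕ) ℚ) (K n) (MvPolynomial.X (Sum.inr k))

/-- The factorial Grothendieck polynomial
`G_λ(x_1,…,x_n|b) = det([x_i|b]^{λ_j+n−j}(1+βx_i)^{j−1}) / Π_{i<j}(x_i − x_j)`. -/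
def Gro (n : ℕ) (lam : Fin n → ℕ) : K n :=
  Matrix.det (Matrix.of fun i j : Fin n =>
      fb (bet n) (bv n) (xv n i) (lam j + (n - 1 - (j : ℕ))) *
        (1 + bet n * xv n i) ^ (j : ℕ)) /
    ∏ i : Fin n, ∏ j ∈ Finset.univ.filter fun j : Fin n => (i : ℕ) < (j : ℕ),
      (xv n i - xv n j)

open Finset

lemma prod_pairs {n : ℕ} (f : Fin n → Fin n → F) :
    (∏ i : Fin n, ∏ j ∈ univ.filter fun j : Fin n => (i:ℕ) < (j:ℕ), f i j)
      = ∏ p ∈ (univ ×ˢ univ).filter (fun p : Fin n × Fin n => (p.1:ℕ) < (p.2:ℕ)), f p.1 p.2 := by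
  rw [Finset.prod_filter, Finset.prod_product]
  simp [Finset.prod_filter]

lemma prod_pairs_sym {n : ℕ} (w : Equiv.Perm (Fin n)) (g : Fin n → Fin n → F)
    (hg : ∀ a b, g a b = g b a) :
    (∏ p ∈ (univ ×ˢ univ).filter (fun p : Fin n × Fin n => (p.1:ℕ) < (p.2:ℕ)),
        g (w p.1) (w p.2))
      = ∏ p ∈ (univ ×ˢ univ).filter (fun p : Fin n × Fin n => (p.1:ℕ) < (p.2:ℕ)), g p.1 p.2 := by
  refine Finset.prod_nbij'
    (fun p => if (w p.1 : ℕ) < (w p.2 : ℕ) then (w p.1, w p.2) else (w p.2, w p.1))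
    (fun p => if (w⁻¹ p.1 : ℕ) < (w⁻¹ p.2 : ℕ) then (w⁻¹ p.1, w⁻¹ p.2) else (w⁻¹ p.2, w⁻¹ p.1))
    ?_ ?_ ?_ ?_ ?_
  · rintro ⟨a, b⟩ hp
    simp only [mem_filter, mem_product, mem_univ, true_and] at hp ⊢
    have hab : a ≠ b := fun h => by simp [h] at hp
    have hne : (w a : ℕ) ≠ (w b : ℕ) := fun h => hab (w.injective (Fin.ext h))
    rcases lt_or_gt_of_ne hne with h | h
    · simp [h]
    · have h2 : ¬ (w a:ℕ) < (w b:ℕ) := by omega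
      simpa [h2] using h
  · rintro ⟨a, b⟩ hp
    simp only [mem_filter, mem_product, mem_univ, true_and] at hp ⊢
    have hab : a ≠ b := fun h => by simp [h] at hp
    have hne : (w⁻¹ a : ℕ) ≠ (w⁻¹ b : ℕ) := fun h => hab (w⁻¹.injective (Fin.ext h))
    rcases lt_or_gt_of_ne hne with h | h
    · simp only [Equiv.Perm.inv_def, Fin.val_fin_lt] at h; simp [h]
    · have h2 : ¬ (w⁻¹ a:ℕ) < (w⁻¹ b:ℕ) := by omega
      simp only [Equiv.Perm.inv_def, Fin.val_fin_lt] at h h2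
      simpa [h2] using h
  · rintro ⟨a, b⟩ hp
    simp only [mem_filter, mem_product, mem_univ, true_and] at hp
    by_cases h : (w a : ℕ) < (w b : ℕ) <;> simp only [Fin.val_fin_lt] at h hp <;>
      simp [h, Equiv.symm_apply_apply, hp, not_lt_of_gt hp]
  · rintro ⟨a, b⟩ hp
    simp only [mem_filter, mem_product, mem_univ, true_and] at hp
    by_cases h : (w⁻¹ a : ℕ) < (w⁻¹ b : ℕ) <;>
      simp only [Equiv.Perm.inv_def, Fin.val_fin_lt] at h hp <;>
      simp [h, Equiv.apply_symm_apply, hp, not_lt_of_gt hp]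
  · rintro ⟨a, b⟩ hp
    by_cases h : (w a : ℕ) < (w b : ℕ) <;> simp [h, hg]

lemma prod_count {n : ℕ} (h : Fin n → F) :
    (∏ i : Fin n, ∏ j ∈ univ.filter fun j : Fin n => (i:ℕ) < (j:ℕ), h j)
      = ∏ j : Fin n, h j ^ (j : ℕ) := by
  rw [Finset.prod_comm' (t' := (univ : Finset (Fin n)))
    (s' := fun j => univ.filter fun i : Fin n => (i:ℕ) < (j:ℕ)) (by intro x y; simp)]
  refine Finset.prod_congr rfl fun j _ => ?_
  rw [Finset.prod_const]
  congr 1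
  have : (univ.filter fun i : Fin n => (i:ℕ) < (j:ℕ)) = Finset.Iio j := by
    ext i
    simp only [Finset.mem_filter, Finset.mem_univ, true_and, Finset.mem_Iio, Fin.lt_def]
  rw [this, Fin.card_Iio]

lemma prod_pairs_perm_sub {n : ℕ} (w : Equiv.Perm (Fin n)) (x : Fin n → F) :
    (∏ i : Fin n, ∏ j ∈ univ.filter fun j : Fin n => (i:ℕ) < (j:ℕ), (x (w i) - x (w j)))
      = ((Equiv.Perm.sign w : ℤ) : F) *
        ∏ i : Fin n, ∏ j ∈ univ.filter fun j : Fin n => (i:ℕ) < (j:ℕ), (x i - x j) := by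
  have hfilter : ∀ i : Fin n, (univ.filter fun j : Fin n => (i:ℕ) < (j:ℕ)) = Finset.Ioi i := by
    intro i; ext j
    simp only [Finset.mem_filter, Finset.mem_univ, true_and, Finset.mem_Ioi, Fin.lt_def]
  have key : ∀ v : Fin n → F,
      (∏ i : Fin n, ∏ j ∈ Finset.Ioi i, (v j - v i)) = Matrix.det (Matrix.vandermonde v) :=
    fun v => (Matrix.det_vandermonde v).symm
  have hperm : (∏ i : Fin n, ∏ j ∈ Finset.Ioi i, (x (w j) - x (w i)))
      = ((Equiv.Perm.sign w : ℤ) : F) * ∏ i : Fin n, ∏ j ∈ Finset.Ioi i, (x j - x i) := by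
    rw [key (fun i => x (w i)), key x]
    have : Matrix.vandermonde (fun i => x (w i)) = (Matrix.vandermonde x).submatrix w id := by
      ext i j; simp [Matrix.vandermonde, Matrix.submatrix]
    rw [this, Matrix.det_permute]
  simp only [hfilter]
  have flip : ∀ v : Fin n → F, (∏ i : Fin n, ∏ j ∈ Finset.Ioi i, (v i - v j))
      = (∏ i : Fin n, ∏ j ∈ Finset.Ioi i, (-1 : F)) *
        ∏ i : Fin n, ∏ j ∈ Finset.Ioi i, (v j - v i) := by
    intro v
    rw [← Finset.prod_mul_distrib]
    refine Finset.prod_congr rfl fun i _ => ?_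
    rw [← Finset.prod_mul_distrib]
    exact Finset.prod_congr rfl fun j _ => by ring
  rw [flip (fun i => x (w i)), flip x, hperm]
  ring

lemma phi_top {n : ℕ} (be : F) (y : Fin n → F) :
    Phi be y n (le_refl n)
      = (∏ i : Fin n, ∏ j ∈ univ.filter fun j : Fin n => (i:ℕ) < (j:ℕ), op be (y i) (y j))
        * (∏ i : Fin n, ∏ j ∈ univ.filter fun j : Fin n => (i:ℕ) < (j:ℕ), (1 + be * y j))
        / (∏ i : Fin n, ∏ j ∈ univ.filter fun j : Fin n => (i:ℕ) < (j:ℕ), (y i - y j)) := by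
  unfold Phi om
  simp only [show ∀ i : Fin n, Fin.castLE (le_refl n) i = i from fun _ => rfl]
  calc (∏ i : Fin n, ∏ j ∈ univ.filter fun j : Fin n => (i:ℕ) < (j:ℕ),
          op be (y i) (y j) / ((y i - y j) / (1 + be * y j)))
      = ∏ i : Fin n, ∏ j ∈ univ.filter fun j : Fin n => (i:ℕ) < (j:ℕ),
          (op be (y i) (y j) * (1 + be * y j)) / (y i - y j) :=
        Finset.prod_congr rfl fun i _ => Finset.prod_congr rfl fun j _ =>
          div_div_eq_mul_div _ _ _
    _ = _ := by
        simp only [Finset.prod_div_distrib, Finset.prod_mul_distrib]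

lemma GP_top {n : ℕ} (be : F) (c : ℕ → F) (x : Fin n → F) (mu : Fin n → ℕ) :
    GP be c x (le_refl n) mu
      = (∏ i : Fin n, ∏ j ∈ univ.filter fun j : Fin n => (i:ℕ) < (j:ℕ), op be (x i) (x j)) *
        (Matrix.det (Matrix.of fun i j : Fin n =>
            fb be c (x i) (mu j) * (1 + be * x i) ^ (j:ℕ)) /
          ∏ i : Fin n, ∏ j ∈ univ.filter fun j : Fin n => (i:ℕ) < (j:ℕ), (x i - x j)) := by
  unfold GP
  simp only [Nat.sub_self, Nat.factorial_zero, Nat.cast_one, inv_one, one_mul,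
    show ∀ j : Fin n, Fin.castLE (le_refl n) j = j from fun _ => rfl]
  have hterm : ∀ w : Equiv.Perm (Fin n),
      (∏ j : Fin n, fb be c (x (w j)) (mu j)) * Phi be (fun k => x (w k)) n (le_refl n)
        = (∏ i : Fin n, ∏ j ∈ univ.filter fun j : Fin n => (i:ℕ) < (j:ℕ), op be (x i) (x j)) *
          (((Equiv.Perm.sign w : ℤ) : F) *
            ∏ j : Fin n, (fb be c (x (w j)) (mu j) * (1 + be * x (w j)) ^ (j:ℕ))) /
          (∏ i : Fin n, ∏ j ∈ univ.filter fun j : Fin n => (i:ℕ) < (j:ℕ), (x i - x j)) := by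
    intro w
    rw [phi_top]
    rw [prod_pairs (fun i j => op be (x (w i)) (x (w j))),
      prod_pairs_sym w (fun a b => op be (x a) (x b)) (fun a b => by unfold op; ring),
      ← prod_pairs (fun i j : Fin n => op be (x i) (x j))]
    rw [prod_count (fun j => 1 + be * x (w j))]
    rw [prod_pairs_perm_sub w x]
    rw [Finset.prod_mul_distrib]
    rcases Int.units_eq_one_or (Equiv.Perm.sign w) with h | h <;> rw [h]
    · push_cast
      rw [one_mul, one_mul]
      ring
    · push_cast
      rw [neg_one_mul, div_neg]
      ring
  rw [Finset.sum_congr rfl fun w _ => hterm w]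
  rw [← Finset.sum_div, ← Finset.mul_sum, Matrix.det_apply]
  simp only [Units.smul_def, zsmul_eq_mul, Matrix.of_apply, mul_div_assoc]

lemma db_succ (be : F) (c : ℕ → F) (xx : F) (k : ℕ) :
    db be c xx (k + 1) = fb be c xx k * op be xx xx := by
  unfold db fb
  rw [Finset.prod_range_succ']
  simp

lemma GQ_eq_GP {n : ℕ} (be : F) (c : ℕ → F) (x : Fin n → F) (mu : Fin n → ℕ) :
    GQ be c x (le_refl n) (fun j => mu j + 1)
      = (∏ j : Fin n, op be (x j) (x j)) * GP be c x (le_refl n) mu := by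
  unfold GQ GP
  simp only [Nat.sub_self, Nat.factorial_zero, Nat.cast_one, inv_one, one_mul,
    show ∀ j : Fin n, Fin.castLE (le_refl n) j = j from fun _ => rfl]
  rw [Finset.mul_sum]
  refine Finset.sum_congr rfl fun w _ => ?_
  simp only [db_succ, Finset.prod_mul_distrib]
  rw [show (∏ j : Fin n, op be (x (w j)) (x (w j))) = ∏ j : Fin n, op be (x j) (x j) from
    Equiv.prod_comp w (fun j => op be (x j) (x j))]
  ring

lemma prod_le_split {n : ℕ} (g : Fin n → Fin n → F) :
    (∏ i : Fin n, ∏ j ∈ univ.filter fun j : Fin n => (i:ℕ) ≤ (j:ℕ), g i j)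
      = (∏ i : Fin n, g i i) *
        ∏ i : Fin n, ∏ j ∈ univ.filter fun j : Fin n => (i:ℕ) < (j:ℕ), g i j := by
  rw [← Finset.prod_mul_distrib]
  refine Finset.prod_congr rfl fun i _ => ?_
  have hset : (univ.filter fun j : Fin n => (i:ℕ) ≤ (j:ℕ))
      = insert i (univ.filter fun j : Fin n => (i:ℕ) < (j:ℕ)) := by
    ext j
    simp only [Finset.mem_filter, Finset.mem_univ, true_and, Finset.mem_insert, Fin.ext_iff]
    omega
  rw [hset, Finset.prod_insert (by simp)]


theorem statement8 (n : ℕ) (hn : 1 ≤ n) (lam : Fin n → ℕ) (hlam : Antitone lam) :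
    GP (bet n) (bv n) (xv n) (le_refl n)
        (fun j : Fin n => (n - 1 - (j : ℕ)) + lam j)
      = (∏ i : Fin n, ∏ j ∈ Finset.univ.filter fun j : Fin n => (i : ℕ) < (j : ℕ),
          op (bet n) (xv n i) (xv n j)) * Gro n lam ∧
    GQ (bet n) (bv n) (xv n) (le_refl n)
        (fun j : Fin n => (n - (j : ℕ)) + lam j)
      = (∏ i : Fin n, ∏ j ∈ Finset.univ.filter fun j : Fin n => (i : ℕ) ≤ (j : ℕ),
          op (bet n) (xv n i) (xv n j)) * Gro n lam := by
  constructor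
  · rw [GP_top]
    have hM : (Matrix.of fun i j : Fin n =>
          fb (bet n) (bv n) (xv n i) ((n - 1 - (j:ℕ)) + lam j) * (1 + bet n * xv n i) ^ (j:ℕ))
        = Matrix.of fun i j : Fin n =>
          fb (bet n) (bv n) (xv n i) (lam j + (n - 1 - (j:ℕ))) * (1 + bet n * xv n i) ^ (j:ℕ) := by
      ext i j
      rw [Matrix.of_apply, Matrix.of_apply, Nat.add_comm]
    rw [hM]
    rfl
  · have hmu : (fun j : Fin n => (n - (j:ℕ)) + lam j)
        = fun j : Fin n => ((n - 1 - (j:ℕ)) + lam j) + 1 := by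
      funext j
      have := j.isLt
      omega
    rw [hmu, GQ_eq_GP, GP_top,
      prod_le_split (fun i j => op (bet n) (xv n i) (xv n j))]
    have hM : (Matrix.of fun i j : Fin n =>
          fb (bet n) (bv n) (xv n i) ((n - 1 - (j:ℕ)) + lam j) * (1 + bet n * xv n i) ^ (j:ℕ))
        = Matrix.of fun i j : Fin n =>
          fb (bet n) (bv n) (xv n i) (lam j + (n - 1 - (j:ℕ))) * (1 + bet n * xv n i) ^ (j:ℕ) := by
      ext i j
      rw [Matrix.of_apply, Matrix.of_apply, Nat.add_comm]
    rw [hM]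
    show _ = _ * _ * Gro n lam
    rw [mul_assoc]
    rfl


end Stmt8
end
end

section
/- Let A be a unique factorization domain and let β, x, y be independent indeterminates over A. If f(β, x, y) ∈ A[β, x, y] vanishes under the substitution x = ⊖y = −y/(1+βy) (i.e., f(β, −y/(1+βy), y) = 0 as a rational function in β and y), then f is divisible by x ⊕ y = x + y + βxy in A[β, x, y]. -/
/-!
STATEMENT 12: Let A be a UFD and β, x, y indeterminates over A.
If f(β,x,y) ∈ A[β,x,y] vanishes under the substitution x = ⊖y = −y/(1+βy)
(as a rational function in β and y), then f is divisible by
x ⊕ y = x + y + βxy in A[β,x,y].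

We model A[β,x,y] as `MvPolynomial (Fin 3) A` with β = X 0, x = X 1, y = X 2,
and the substitution is performed in the fraction field of this ring
(the result being a rational function not involving x).
-/

noncomputable section

namespace Stmt12

set_option linter.unusedSectionVars false
set_option synthInstance.maxHeartbeats 1000000
set_option maxHeartbeats 1600000


variable (A : Type) [CommRing A] [IsDomain A] [UniqueFactorizationMonoid A]

def σe : MvPolynomial (Fin 3) A ≃ₐ[A] Polynomial (MvPolynomial (Fin 2) A) :=
  (MvPolynomial.renameEquiv A (Equiv.swap 0 1)).trans (MvPolynomial.finSuccEquiv A 2)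

lemma σe_X0 : σe A (MvPolynomial.X 0) = Polynomial.C (MvPolynomial.X 0) := by
  rw [σe, AlgEquiv.trans_apply, MvPolynomial.renameEquiv_apply, MvPolynomial.rename_X,
    Equiv.swap_apply_left]
  exact MvPolynomial.finSuccEquiv_X_succ (j := 0)

lemma σe_X1 : σe A (MvPolynomial.X 1) = Polynomial.X := by
  simp [σe, AlgEquiv.trans_apply, MvPolynomial.renameEquiv_apply, MvPolynomial.rename_X,
    Equiv.swap_apply_right, MvPolynomial.finSuccEquiv_X_zero]

lemma σe_X2 : σe A (MvPolynomial.X 2) = Polynomial.C (MvPolynomial.X 1) := by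
  have hs : Equiv.swap (0 : Fin 3) 1 2 = 2 :=
    Equiv.swap_apply_of_ne_of_ne (by decide) (by decide)
  rw [σe, AlgEquiv.trans_apply, MvPolynomial.renameEquiv_apply, MvPolynomial.rename_X, hs]
  exact MvPolynomial.finSuccEquiv_X_succ (j := 1)

lemma σe_C (a : A) : σe A (MvPolynomial.C a) = Polynomial.C (MvPolynomial.C a) := by
  have := (σe A).commutes a
  simpa [MvPolynomial.algebraMap_eq, Polynomial.algebraMap_apply] using this

/-- embedding A[β,y] → A[β,x,y] sending X0 ↦ X0, X1 ↦ X2 -/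
def ι : MvPolynomial (Fin 2) A →ₐ[A] MvPolynomial (Fin 3) A :=
  MvPolynomial.rename ![0, 2]

lemma ι_inj : Function.Injective (ι A) :=
  MvPolynomial.rename_injective _ (by decide)

lemma gmap_inj : Function.Injective
    ((algebraMap (MvPolynomial (Fin 3) A) (FractionRing (MvPolynomial (Fin 3) A))).comp
      (ι A).toRingHom) :=
  fun a b h => ι_inj A (IsFractionRing.injective _ _ h)

/-- the embedding Frac(A[β,y]) → Frac(A[β,x,y]) -/
def jmap : FractionRing (MvPolynomial (Fin 2) A) →+* FractionRing (MvPolynomial (Fin 3) A) :=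
  IsFractionRing.lift (gmap_inj A)

/-- the substitution hom A[β,x,y] → Frac(A[β,y]), x ↦ -y/(1+βy) -/
def Φm : MvPolynomial (Fin 3) A →+* FractionRing (MvPolynomial (Fin 2) A) :=
  ((Polynomial.evalRingHom
      (-(algebraMap (MvPolynomial (Fin 2) A) (FractionRing (MvPolynomial (Fin 2) A))
          (MvPolynomial.X 1)) /
        (1 + algebraMap (MvPolynomial (Fin 2) A) _ (MvPolynomial.X 0) *
          algebraMap (MvPolynomial (Fin 2) A) _ (MvPolynomial.X 1)))).comp
    (Polynomial.mapRingHom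
      (algebraMap (MvPolynomial (Fin 2) A) (FractionRing (MvPolynomial (Fin 2) A))))).comp
    (σe A).toAlgHom.toRingHom

lemma jmap_alg (p : MvPolynomial (Fin 2) A) :
    jmap A (algebraMap (MvPolynomial (Fin 2) A) (FractionRing (MvPolynomial (Fin 2) A)) p) =
      algebraMap (MvPolynomial (Fin 3) A) (FractionRing (MvPolynomial (Fin 3) A)) (ι A p) :=
  IsFractionRing.lift_algebraMap (gmap_inj A) p

lemma Φm_C (a : A) : Φm A (MvPolynomial.C a) =
    algebraMap (MvPolynomial (Fin 2) A) (FractionRing (MvPolynomial (Fin 2) A))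
      (MvPolynomial.C a) := by
  simp [Φm, σe_C]

lemma Φm_X0 : Φm A (MvPolynomial.X 0) =
    algebraMap (MvPolynomial (Fin 2) A) (FractionRing (MvPolynomial (Fin 2) A))
      (MvPolynomial.X 0) := by
  simp [Φm, σe_X0]

lemma Φm_X2 : Φm A (MvPolynomial.X 2) =
    algebraMap (MvPolynomial (Fin 2) A) (FractionRing (MvPolynomial (Fin 2) A))
      (MvPolynomial.X 1) := by
  simp [Φm, σe_X2]

lemma Φm_X1 : Φm A (MvPolynomial.X 1) =
    -(algebraMap (MvPolynomial (Fin 2) A) (FractionRing (MvPolynomial (Fin 2) A))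
        (MvPolynomial.X 1)) /
      (1 + algebraMap (MvPolynomial (Fin 2) A) _ (MvPolynomial.X 0) *
        algebraMap (MvPolynomial (Fin 2) A) _ (MvPolynomial.X 1)) := by
  simp [Φm, σe_X1]

lemma ι_X0 : ι A (MvPolynomial.X 0) = MvPolynomial.X 0 := by
  simp [ι, MvPolynomial.rename_X]

lemma ι_X1 : ι A (MvPolynomial.X 1) = MvPolynomial.X 2 := by
  simp [ι, MvPolynomial.rename_X]

lemma ι_C (a : A) : ι A (MvPolynomial.C a) = MvPolynomial.C a := by
  simp [ι, MvPolynomial.rename_C]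

lemma key : (jmap A).comp (Φm A) =
    MvPolynomial.eval₂Hom
      ((algebraMap (MvPolynomial (Fin 3) A) (FractionRing (MvPolynomial (Fin 3) A))).comp
        MvPolynomial.C)
      (fun k : Fin 3 =>
        if k = 1 then
          -(algebraMap (MvPolynomial (Fin 3) A) _ (MvPolynomial.X 2)) /
            (1 + algebraMap (MvPolynomial (Fin 3) A) _ (MvPolynomial.X 0) *
              algebraMap (MvPolynomial (Fin 3) A) _ (MvPolynomial.X 2))
        else
          algebraMap (MvPolynomial (Fin 3) A)
            (FractionRing (MvPolynomial (Fin 3) A)) (MvPolynomial.X k)) := by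
  apply MvPolynomial.ringHom_ext
  · intro a
    rw [RingHom.comp_apply, Φm_C, jmap_alg, ι_C]
    simp
  · intro i
    fin_cases i
    · show (jmap A) ((Φm A) (MvPolynomial.X 0)) = _
      rw [Φm_X0, jmap_alg, ι_X0]
      simp
    · show (jmap A) ((Φm A) (MvPolynomial.X 1)) = _
      rw [Φm_X1, map_div₀, map_neg, map_add, map_one, map_mul,
        jmap_alg, jmap_alg, ι_X0, ι_X1]
      simp
    · show (jmap A) ((Φm A) (MvPolynomial.X 2)) = _
      rw [Φm_X2, jmap_alg, ι_X1]
      simp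




theorem statement12 (A : Type) [CommRing A] [IsDomain A] [UniqueFactorizationMonoid A]
    (f : MvPolynomial (Fin 3) A)
    (hf :
      MvPolynomial.eval₂
        ((algebraMap (MvPolynomial (Fin 3) A) (FractionRing (MvPolynomial (Fin 3) A))).comp
          MvPolynomial.C)
        (fun k : Fin 3 =>
          if k = 1 then
            -(algebraMap (MvPolynomial (Fin 3) A) _ (MvPolynomial.X 2)) /
              (1 + algebraMap (MvPolynomial (Fin 3) A) _ (MvPolynomial.X 0) *
                algebraMap (MvPolynomial (Fin 3) A) _ (MvPolynomial.X 2))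
          else
            algebraMap (MvPolynomial (Fin 3) A)
              (FractionRing (MvPolynomial (Fin 3) A)) (MvPolynomial.X k))
        f = 0) :
    (MvPolynomial.X 1 + MvPolynomial.X 2 +
        MvPolynomial.X 0 * MvPolynomial.X 1 * MvPolynomial.X 2 : MvPolynomial (Fin 3) A) ∣ f := by
  classical
  by_cases hf0 : f = 0
  · exact hf0 ▸ dvd_zero _
  letI : NormalizationMonoid (MvPolynomial (Fin 2) A) :=
    UniqueFactorizationMonoid.normalizationMonoid.toNormalizationMonoid
  letI : NormalizedGCDMonoid (MvPolynomial (Fin 2) A) :=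
    UniqueFactorizationMonoid.toNormalizedGCDMonoid _
  -- notation
  set K := FractionRing (MvPolynomial (Fin 2) A) with hK
  set ar : MvPolynomial (Fin 2) A →+* K := algebraMap (MvPolynomial (Fin 2) A) K with har
  set aB : K := ar (MvPolynomial.X 0) with haB
  set aY : K := ar (MvPolynomial.X 1) with haY
  set u : K := 1 + aB * aY with hu_def
  set r0 : K := -aY / u with hr0
  -- step 1 : Φm A f = 0
  have hΦf : Φm A f = 0 := by
    apply (jmap A).injective
    have hk := congrArg (fun (h : MvPolynomial (Fin 3) A →+* _) => h f) (key A)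
    simp only [RingHom.comp_apply] at hk
    rw [map_zero, hk]
    exact hf
  -- step 2 : root statement
  have hroot : Polynomial.eval r0 ((σe A f).map ar) = 0 := by
    rw [Φm, RingHom.comp_apply, RingHom.comp_apply] at hΦf
    exact hΦf
  have hdvd1 : (Polynomial.X - Polynomial.C r0) ∣ (σe A f).map ar :=
    Polynomial.dvd_iff_isRoot.mpr hroot
  -- nonvanishing of the denominator
  have hu0 : (1 + MvPolynomial.X 0 * MvPolynomial.X 1 : MvPolynomial (Fin 2) A) ≠ 0 := by
    intro h
    have := congrArg (MvPolynomial.eval (fun _ => (0 : A))) h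
    simp at this
  have hu : u ≠ 0 := by
    intro h
    apply hu0
    apply IsFractionRing.injective (MvPolynomial (Fin 2) A) K
    rw [map_add, map_one, map_mul, map_zero]
    exact h
  -- the divisor polynomial on the R[X] side
  set G : Polynomial (MvPolynomial (Fin 2) A) :=
    Polynomial.C (1 + MvPolynomial.X 0 * MvPolynomial.X 1) * Polynomial.X +
      Polynomial.C (MvPolynomial.X 1) with hG
  have hσg : σe A (MvPolynomial.X 1 + MvPolynomial.X 2 +
      MvPolynomial.X 0 * MvPolynomial.X 1 * MvPolynomial.X 2 : MvPolynomial (Fin 3) A) = G := by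
    rw [map_add, map_add, map_mul, map_mul, σe_X0, σe_X1, σe_X2, hG,
      Polynomial.C_add, Polynomial.C_mul, Polynomial.C_1]
    ring
  have hGmap : G.map ar = Polynomial.C u * (Polynomial.X - Polynomial.C r0) := by
    have h1 : u * r0 = -aY := by
      rw [hr0, mul_div_assoc', mul_comm, mul_div_assoc, div_self hu, mul_one]
    rw [hG, Polynomial.map_add, Polynomial.map_mul, Polynomial.map_C, Polynomial.map_X,
      Polynomial.map_C, mul_sub, ← Polynomial.C_mul, h1]
    rw [map_add, map_one, map_mul]
    push_cast [Polynomial.C_neg]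
    ring
  -- G is primitive
  have hGprim : G.IsPrimitive := by
    intro r hr
    rw [Polynomial.C_dvd_iff_dvd_coeff] at hr
    have h0 := hr 0
    have h1 := hr 1
    simp [hG, Polynomial.coeff_add, Polynomial.coeff_C_mul, Polynomial.coeff_X_zero,
      Polynomial.coeff_X_one, Polynomial.coeff_C] at h0 h1
    have hr1 : r ∣ 1 := by
      have := dvd_sub h1 (h0.mul_left (MvPolynomial.X 0))
      simpa using this
    exact isUnit_of_dvd_one hr1
  -- divisibility over K
  have hGF : G.map ar ∣ (σe A f).map ar := by
    rw [hGmap]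
    exact (IsUnit.mul_left_dvd (Polynomial.isUnit_C.mpr (isUnit_iff_ne_zero.mpr hu))).mpr hdvd1
  -- strip content
  have hF0 : σe A f ≠ 0 := by
    intro h
    apply hf0
    have := congrArg (σe A).symm h
    simpa using this
  have hc0 : ar (σe A f).content ≠ 0 := by
    intro h
    exact hF0 (Polynomial.content_eq_zero_iff.mp (IsFractionRing.injective _ _ (by rw [h, map_zero])))
  have hcu : IsUnit (Polynomial.C (ar (σe A f).content)) :=
    Polynomial.isUnit_C.mpr (isUnit_iff_ne_zero.mpr hc0)
  have hGP : G.map ar ∣ ((σe A f).primPart).map ar := by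
    have hsplit : (σe A f).map ar =
        Polynomial.C (ar (σe A f).content) * ((σe A f).primPart.map ar) := by
      conv_lhs => rw [(σe A f).eq_C_content_mul_primPart]
      rw [Polynomial.map_mul, Polynomial.map_C]
    rw [hsplit] at hGF
    exact (IsUnit.dvd_mul_left hcu).mp hGF
  have hGdvd : G ∣ σe A f :=
    (hGprim.dvd_of_fraction_map_dvd_fraction_map hGP).trans
      ((σe A f).primPart_dvd)
  -- transfer back
  obtain ⟨q, hq⟩ := hGdvd
  refine ⟨(σe A).symm q, ?_⟩
  have hfe : f = (σe A).symm (G * q) := by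
    rw [← hq]
    exact ((σe A).symm_apply_apply f).symm
  rw [hfe, map_mul, ← hσg, (σe A).symm_apply_apply]


end Stmt12
end
end

section
/- (Stability) Let λ be a strict partition of length r ≤ n. Then GQ_λ(x_1,…,x_{n−1}, 0) = GQ_λ(x_1,…,x_{n−1}) and GP_λ(x_1,…,x_{n−1}, 0) = GP_λ(x_1,…,x_{n−1}), where the right-hand sides are understood as 0 when r = n. -/
/-!
STATEMENT 14 (Stability): Let λ be a strict partition of length r ≤ n. Then
GQ_λ(x_1,…,x_{n−1}, 0) = GQ_λ(x_1,…,x_{n−1}) and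
GP_λ(x_1,…,x_{n−1}, 0) = GP_λ(x_1,…,x_{n−1})
(all parameters b_i specialized to 0), where the right-hand sides are 0 when r = n.
Both sides are interpreted in the rational function field in x_1,…,x_{n−1},
the left-hand sides being the defining expressions in n variables with the
last variable set equal to 0.
-/

noncomputable section

namespace Stmt14

variable {F : Type} [Field F]

/-- x ⊕ y = x + y + βxy, for a fixed element `be` playing the role of β. -/
def op (be a c : F) : F := a + c + be * a * c

/-- x ⊖ y = (x − y)/(1 + βy). -/
def om (be a c : F) : F := (a - c) / (1 + be * c)

/-- `[x|c]^k = (x ⊕ c 1)(x ⊕ c 2)⋯(x ⊕ c k)`. -/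
def fb (be : F) (c : ℕ → F) (xx : F) (k : ℕ) : F :=
  ∏ t ∈ Finset.range k, op be xx (c (t + 1))

/-- `[[x|c]]^k = (x ⊕ x)(x ⊕ c 1)⋯(x ⊕ c (k−1))`. -/
def db (be : F) (c : ℕ → F) (xx : F) (k : ℕ) : F :=
  ∏ t ∈ Finset.range k, if t = 0 then op be xx xx else op be xx (c t)

/-- `Π_{i=1}^r Π_{j=i+1}^N (y_i ⊕ y_j)/(y_i ⊖ y_j)`. -/
def Phi (be : F) {N : ℕ} (y : Fin N → F) (r : ℕ) (hr : r ≤ N) : F :=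
  ∏ i : Fin r, ∏ j ∈ Finset.univ.filter fun j : Fin N => (i : ℕ) < (j : ℕ),
    op be (y (Fin.castLE hr i)) (y j) / om be (y (Fin.castLE hr i)) (y j)

/-- The Hall–Littlewood-type expression defining `GP_λ(y_1,…,y_N | c)`. -/
def GP (be : F) (c : ℕ → F) {N : ℕ} (y : Fin N → F) {r : ℕ} (hr : r ≤ N)
    (lam : Fin r → ℕ) : F :=
  (((N - r).factorial : F))⁻¹ *
    ∑ w : Equiv.Perm (Fin N),
      (∏ j : Fin r, fb be c (y (w (Fin.castLE hr j))) (lam j)) *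
        Phi be (fun k => y (w k)) r hr

/-- The Hall–Littlewood-type expression defining `GQ_λ(y_1,…,y_N | c)`. -/
def GQ (be : F) (c : ℕ → F) {N : ℕ} (y : Fin N → F) {r : ℕ} (hr : r ≤ N)
    (lam : Fin r → ℕ) : F :=
  (((N - r).factorial : F))⁻¹ *
    ∑ w : Equiv.Perm (Fin N),
      (∏ j : Fin r, db be c (y (w (Fin.castLE hr j))) (lam j)) *
        Phi be (fun k => y (w k)) r hr

/-- Rational function field in the variables x_1,…,x_n (= `Sum.inl i`),
β (= `Sum.inr 0`) and b_1, b_2, … (= `Sum.inr k`, k ≥ 1), over ℚ. -/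
abbrev K (n : ℕ) : Type := FractionRing (MvPolynomial (Fin n ⊕ ℕ) ℚ)

def xv (n : ℕ) (i : Fin n) : K n :=
  algebraMap (MvPolynomial (Fin n ⊕ ℕ) ℚ) (K n) (MvPolynomial.X (Sum.inl i))

def bet (n : ℕ) : K n :=
  algebraMap (MvPolynomial (Fin n ⊕ ℕ) ℚ) (K n) (MvPolynomial.X (Sum.inr 0))

/-- The parameters b_k (k ≥ 1), with the convention b_0 = 0. -/
def bv (n : ℕ) (k : ℕ) : K n :=
  if k = 0 then 0 else
    algebraMap (MvPolynomial (Fin n ⊕ ℕ) ℚ) (K n) (MvPolynomial.X (Sum.inr k))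


section Helpers
open Finset
variable {F : Type} [Field F]

def extLast {m : ℕ} (v : Equiv.Perm (Fin m)) : Equiv.Perm (Fin (m+1)) :=
  finSuccEquivLast.trans ((v.optionCongr).trans finSuccEquivLast.symm)

@[simp] lemma extLast_castSucc {m : ℕ} (v : Equiv.Perm (Fin m)) (j : Fin m) :
    extLast v (Fin.castSucc j) = Fin.castSucc (v j) := by
  simp [extLast]

@[simp] lemma extLast_last {m : ℕ} (v : Equiv.Perm (Fin m)) :
    extLast v (Fin.last m) = Fin.last m := by
  simp [extLast]

def cP {m : ℕ} (p : Fin (m+1)) : Equiv.Perm (Fin (m+1)) :=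
  finSuccEquivLast.trans (finSuccEquiv' p).symm

@[simp] lemma cP_last {m : ℕ} (p : Fin (m+1)) : cP p (Fin.last m) = p := by
  simp [cP]

@[simp] lemma cP_castSucc {m : ℕ} (p : Fin (m+1)) (j : Fin m) :
    cP p (Fin.castSucc j) = p.succAbove j := by
  simp [cP, finSuccEquiv'_symm_some]

def EE {m : ℕ} (p : Fin (m+1)) (v : Equiv.Perm (Fin m)) : Equiv.Perm (Fin (m+1)) :=
  (cP p).symm.trans (extLast v)

@[simp] lemma EE_apply_p {m : ℕ} (p : Fin (m+1)) (v : Equiv.Perm (Fin m)) :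
    EE p v p = Fin.last m := by
  have h : (cP p).symm p = Fin.last m := by
    rw [Equiv.symm_apply_eq]; simp
  simp [EE, h]

@[simp] lemma EE_apply_succAbove {m : ℕ} (p : Fin (m+1)) (v : Equiv.Perm (Fin m)) (j : Fin m) :
    EE p v (p.succAbove j) = Fin.castSucc (v j) := by
  have h : (cP p).symm (p.succAbove j) = Fin.castSucc j := by
    rw [Equiv.symm_apply_eq]; simp
  simp [EE, h]

lemma EE_bijective {m : ℕ} :
    Function.Bijective (fun pv : Fin (m+1) × Equiv.Perm (Fin m) => EE pv.1 pv.2) := by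
  rw [Fintype.bijective_iff_injective_and_card]
  constructor
  · rintro ⟨p, v⟩ ⟨q, u⟩ h
    simp only at h
    have hpq : p = q := by
      have h1 : EE p v p = Fin.last m := EE_apply_p p v
      have h2 : EE p v q = Fin.last m := by rw [h]; exact EE_apply_p q u
      exact (EE p v).injective (h1.trans h2.symm)
    subst hpq
    have hvu : v = u := by
      ext j
      have := congrArg (fun σ : Equiv.Perm (Fin (m+1)) => σ (p.succAbove j)) h
      have h2 : Fin.castSucc (v j) = Fin.castSucc (u j) := by simpa using this
      exact congrArg Fin.val (Fin.castSucc_inj.mp h2)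
    simp [hvu]
  · simp [Fintype.card_perm, Fintype.card_prod, Nat.factorial_succ]

lemma filter_eq {m r : ℕ} (p : Fin (m+1)) (hp : r ≤ (p : ℕ)) (i : Fin r) :
    (Finset.univ.filter fun j : Fin (m+1) => (i : ℕ) < (j : ℕ)) =
      insert p ((Finset.univ.filter fun j : Fin m => (i : ℕ) < (j : ℕ)).image p.succAbove) := by
  have hir : (i : ℕ) < r := i.isLt
  ext j
  simp only [mem_filter, mem_univ, true_and, mem_insert, mem_image]
  constructor
  · intro hij
    by_cases hjp : j = p
    · exact Or.inl hjp
    · right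
      obtain ⟨j', rfl⟩ := Fin.exists_succAbove_eq hjp
      refine ⟨j', ?_, rfl⟩
      rcases lt_or_ge (Fin.castSucc j') p with h | h
      · rw [Fin.succAbove_of_castSucc_lt _ _ h] at hij
        simpa using hij
      · rw [Fin.le_def] at h
        simp only [Fin.coe_castSucc] at h
        omega
  · rintro (rfl | ⟨j', hj', rfl⟩)
    · omega
    · rcases lt_or_ge (Fin.castSucc j') p with h | h
      · rw [Fin.succAbove_of_castSucc_lt _ _ h]
        simpa using hj'
      · rw [Fin.succAbove_of_le_castSucc _ _ h]
        simp only [Fin.val_succ]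
        omega

lemma op_om_zero (be a : F) (ha : a ≠ 0) : op be a 0 / om be a 0 = 1 := by
  have h1 : op be a 0 = a := by simp [op]
  have h2 : om be a 0 = a := by simp [om]
  rw [h1, h2, div_self ha]

lemma castLE_eq_succAbove {m r : ℕ} (hr : r ≤ m+1) (h' : r ≤ m) (p : Fin (m+1))
    (hp : r ≤ (p : ℕ)) (i : Fin r) :
    Fin.castLE hr i = p.succAbove (Fin.castLE h' i) := by
  rw [Fin.succAbove_of_castSucc_lt]
  · exact Fin.ext rfl
  · rw [Fin.lt_def]
    simpa using lt_of_lt_of_le i.isLt hp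

lemma Phi_EE (be : F) {m r : ℕ} (hr : r ≤ m+1) (h' : r ≤ m) (x : Fin m → F)
    (hx : ∀ i, x i ≠ 0) (p : Fin (m+1)) (hp : r ≤ (p : ℕ)) (v : Equiv.Perm (Fin m)) :
    Phi be (fun k => (Fin.snoc x 0 : Fin (m+1) → F) (EE p v k)) r hr
      = Phi be (fun k => x (v k)) r h' := by
  unfold Phi
  refine Finset.prod_congr rfl fun i _ => ?_
  have hcast : EE p v (Fin.castLE hr i) = Fin.castSucc (v (Fin.castLE h' i)) := by
    rw [castLE_eq_succAbove hr h' p hp i, EE_apply_succAbove]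
  have hpnot : p ∉ (Finset.univ.filter fun j : Fin m => (i : ℕ) < (j : ℕ)).image p.succAbove := by
    simp only [mem_image, not_exists]
    rintro j' ⟨_, hj'⟩
    exact absurd hj' (Fin.succAbove_ne p j')
  rw [filter_eq p hp i, Finset.prod_insert hpnot,
    Finset.prod_image (fun a _ b _ h => Fin.succAbove_right_injective h)]
  have h2 : ∀ j' : Fin m,
      (Fin.snoc x 0 : Fin (m+1) → F) (EE p v (p.succAbove j')) = x (v j') := by
    intro j'; rw [EE_apply_succAbove, Fin.snoc_castSucc]
  have h3 : (Fin.snoc x 0 : Fin (m+1) → F) (EE p v p) = 0 := by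
    rw [EE_apply_p, Fin.snoc_last]
  simp only [hcast, Fin.snoc_castSucc, h2, h3]
  rw [op_om_zero be _ (hx _), one_mul]


lemma card_filter_le {N r : ℕ} (hr : r ≤ N) :
    (Finset.univ.filter fun p : Fin N => r ≤ (p : ℕ)).card = N - r := by
  rcases Nat.lt_or_ge r N with h | h
  · have : (Finset.univ.filter fun p : Fin N => r ≤ (p : ℕ)) = Finset.Ici (⟨r, h⟩ : Fin N) := by
      ext p
      simp [Finset.mem_Ici, Fin.le_def]
    rw [this, Fin.card_Ici]
  · have hrN : r = N := le_antisymm hr h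
    subst hrN
    have : (Finset.univ.filter fun p : Fin r => r ≤ (p : ℕ)) = ∅ := by
      ext p
      simp only [Finset.mem_filter, Finset.mem_univ, true_and, Finset.notMem_empty, iff_false,
        not_le]
      exact p.isLt
    rw [this]
    simp

lemma key (g : F → ℕ → F) (hg : ∀ k, 0 < k → g 0 k = 0) (be : F) {m r : ℕ}
    (hr : r ≤ m+1) (h' : r ≤ m) (lam : Fin r → ℕ) (hpos : ∀ j, 0 < lam j)
    (x : Fin m → F) (hx : ∀ i, x i ≠ 0) :
    ∑ w : Equiv.Perm (Fin (m+1)),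
        (∏ j : Fin r, g ((Fin.snoc x 0 : Fin (m+1) → F) (w (Fin.castLE hr j))) (lam j)) *
          Phi be (fun k => (Fin.snoc x 0 : Fin (m+1) → F) (w k)) r hr
      = ((m+1-r : ℕ) : F) *
        ∑ v : Equiv.Perm (Fin m),
          (∏ j : Fin r, g (x (v (Fin.castLE h' j))) (lam j)) *
            Phi be (fun k => x (v k)) r h' := by
  classical
  set S : F := ∑ v : Equiv.Perm (Fin m),
      (∏ j : Fin r, g (x (v (Fin.castLE h' j))) (lam j)) * Phi be (fun k => x (v k)) r h'
    with hS
  have hbij := Fintype.sum_bijective _ (EE_bijective (m := m))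
    (fun pv : Fin (m+1) × Equiv.Perm (Fin m) =>
      (∏ j : Fin r, g ((Fin.snoc x 0 : Fin (m+1) → F) (EE pv.1 pv.2 (Fin.castLE hr j))) (lam j)) *
        Phi be (fun k => (Fin.snoc x 0 : Fin (m+1) → F) (EE pv.1 pv.2 k)) r hr)
    (fun w : Equiv.Perm (Fin (m+1)) =>
      (∏ j : Fin r, g ((Fin.snoc x 0 : Fin (m+1) → F) (w (Fin.castLE hr j))) (lam j)) *
        Phi be (fun k => (Fin.snoc x 0 : Fin (m+1) → F) (w k)) r hr)
    (fun pv => rfl)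
  rw [← hbij, Fintype.sum_prod_type]
  have hinner : ∀ p : Fin (m+1),
      (∑ v : Equiv.Perm (Fin m),
        (∏ j : Fin r, g ((Fin.snoc x 0 : Fin (m+1) → F) (EE p v (Fin.castLE hr j))) (lam j)) *
          Phi be (fun k => (Fin.snoc x 0 : Fin (m+1) → F) (EE p v k)) r hr)
        = if r ≤ (p : ℕ) then S else 0 := by
    intro p
    by_cases hp : r ≤ (p : ℕ)
    · rw [if_pos hp, hS]
      refine Finset.sum_congr rfl fun v _ => ?_
      have hterm : ∀ j : Fin r,
          (Fin.snoc x 0 : Fin (m+1) → F) (EE p v (Fin.castLE hr j)) = x (v (Fin.castLE h' j)) := by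
        intro j
        rw [castLE_eq_succAbove hr h' p hp j, EE_apply_succAbove, Fin.snoc_castSucc]
      rw [Phi_EE be hr h' x hx p hp v]
      refine congrArg (· * _) (Finset.prod_congr rfl fun j _ => ?_)
      rw [hterm j]
    · rw [if_neg hp]
      push_neg at hp
      refine Finset.sum_eq_zero fun v _ => ?_
      have hj0 : Fin.castLE hr (⟨(p : ℕ), hp⟩ : Fin r) = p := Fin.ext rfl
      have : g ((Fin.snoc x 0 : Fin (m+1) → F) (EE p v (Fin.castLE hr ⟨(p : ℕ), hp⟩)))
          (lam ⟨(p : ℕ), hp⟩) = 0 := by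
        rw [hj0, EE_apply_p, Fin.snoc_last]
        exact hg _ (hpos _)
      rw [Finset.prod_eq_zero (Finset.mem_univ (⟨(p : ℕ), hp⟩ : Fin r)) this, zero_mul]
  calc ∑ p : Fin (m+1), ∑ v : Equiv.Perm (Fin m),
        (∏ j : Fin r, g ((Fin.snoc x 0 : Fin (m+1) → F) (EE p v (Fin.castLE hr j))) (lam j)) *
          Phi be (fun k => (Fin.snoc x 0 : Fin (m+1) → F) (EE p v k)) r hr
      = ∑ p : Fin (m+1), if r ≤ (p : ℕ) then S else 0 :=
        Finset.sum_congr rfl fun p _ => hinner p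
    _ = ((m+1-r : ℕ) : F) * S := by
        rw [Finset.sum_ite, Finset.sum_const_zero, add_zero, Finset.sum_const,
          card_filter_le hr, nsmul_eq_mul]


lemma assemble (g : F → ℕ → F) (hg : ∀ k, 0 < k → g 0 k = 0) (be : F) {m r : ℕ}
    (hr : r ≤ m+1) (lam : Fin r → ℕ) (hpos : ∀ j, 0 < lam j)
    (x : Fin m → F) (hx : ∀ i, x i ≠ 0) (hchar : ∀ k : ℕ, k ≠ 0 → ((k : F) ≠ 0)) :
    ((m+1-r).factorial : F)⁻¹ *
        ∑ w : Equiv.Perm (Fin (m+1)),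
          (∏ j : Fin r, g ((Fin.snoc x 0 : Fin (m+1) → F) (w (Fin.castLE hr j))) (lam j)) *
            Phi be (fun k => (Fin.snoc x 0 : Fin (m+1) → F) (w k)) r hr
      = if h : r ≤ m then
          ((m-r).factorial : F)⁻¹ *
            ∑ v : Equiv.Perm (Fin m),
              (∏ j : Fin r, g (x (v (Fin.castLE h j))) (lam j)) *
                Phi be (fun k => x (v k)) r h
        else 0 := by
  by_cases h : r ≤ m
  · rw [dif_pos h, key g hg be hr h lam hpos x hx]
    have e1 : m + 1 - r = (m - r) + 1 := by omega
    rw [e1, Nat.factorial_succ]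
    have hfac : ((m-r).factorial : F) ≠ 0 := hchar _ (Nat.factorial_ne_zero _)
    have h2 : (((m-r)+1 : ℕ) : F) ≠ 0 := hchar _ (Nat.succ_ne_zero _)
    rw [Nat.cast_mul, mul_inv, mul_comm (((m - r + 1 : ℕ) : F))⁻¹, mul_assoc,
      ← mul_assoc ((((m - r + 1 : ℕ) : F)))⁻¹, inv_mul_cancel₀ h2, one_mul]
  · rw [dif_neg h]
    have hrm : r = m + 1 := by omega
    have hsum : (∑ w : Equiv.Perm (Fin (m+1)),
        (∏ j : Fin r, g ((Fin.snoc x 0 : Fin (m+1) → F) (w (Fin.castLE hr j))) (lam j)) *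
          Phi be (fun k => (Fin.snoc x 0 : Fin (m+1) → F) (w k)) r hr) = 0 := by
      refine Finset.sum_eq_zero fun w _ => ?_
      have hlt : ((w.symm (Fin.last m) : Fin (m+1)) : ℕ) < r := by
        rw [hrm]; exact (w.symm (Fin.last m)).isLt
      set j0 : Fin r := ⟨((w.symm (Fin.last m) : Fin (m+1)) : ℕ), hlt⟩ with hj0def
      have hc : Fin.castLE hr j0 = w.symm (Fin.last m) := Fin.ext rfl
      have hz : g ((Fin.snoc x 0 : Fin (m+1) → F) (w (Fin.castLE hr j0))) (lam j0) = 0 := by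
        rw [hc, Equiv.apply_symm_apply, Fin.snoc_last]
        exact hg _ (hpos _)
      rw [Finset.prod_eq_zero (Finset.mem_univ j0) hz, zero_mul]
    rw [hsum, mul_zero]


lemma db_zero (be : F) (c : ℕ → F) (k : ℕ) (hk : 0 < k) : db be c (0:F) k = 0 := by
  refine Finset.prod_eq_zero (Finset.mem_range.mpr hk) ?_
  simp [op]

lemma fb_zero (be : F) (k : ℕ) (hk : 0 < k) : fb be (fun _ => (0:F)) (0:F) k = 0 := by
  refine Finset.prod_eq_zero (Finset.mem_range.mpr hk) ?_
  simp [op]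

end Helpers

lemma xv_ne_zero (n : ℕ) (i : Fin n) : xv n i ≠ 0 := by
  simp only [xv, ne_eq, map_eq_zero_iff _ (IsFractionRing.injective _ _)]
  exact MvPolynomial.X_ne_zero _

lemma hy (m : ℕ) :
    (fun k : Fin (m+1) => if h : (k : ℕ) < m then xv m ⟨k, h⟩ else 0) = Fin.snoc (xv m) 0 := by
  funext k
  refine Fin.lastCases ?_ ?_ k
  · simp
  · intro j
    simp [Fin.snoc_castSucc, j.isLt]

theorem statement14 (n r : ℕ) (hr : r ≤ n) (lam : Fin r → ℕ)
    (hstrict : StrictAnti lam) (hpos : ∀ j, 0 < lam j) :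
    GQ (bet (n - 1)) (fun _ => 0)
        (fun k : Fin n => if h : (k : ℕ) < n - 1 then xv (n - 1) ⟨k, h⟩ else 0)
        hr lam
      = (if h : r ≤ n - 1 then
          GQ (bet (n - 1)) (fun _ => 0) (xv (n - 1)) h lam else 0) ∧
    GP (bet (n - 1)) (fun _ => 0)
        (fun k : Fin n => if h : (k : ℕ) < n - 1 then xv (n - 1) ⟨k, h⟩ else 0)
        hr lam
      = (if h : r ≤ n - 1 then
          GP (bet (n - 1)) (fun _ => 0) (xv (n - 1)) h lam else 0) := by
  rcases n with _ | m
  · have hr0 : r = 0 := Nat.le_zero.mp hr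
    have e : (fun k : Fin 0 => if h : (k : ℕ) < 0 - 1 then xv (0-1) ⟨k, h⟩ else 0)
        = xv (0 - 1) := funext fun k => k.elim0
    constructor
    · rw [e, dif_pos hr]
    · rw [e, dif_pos hr]
  · show (GQ (bet m) (fun _ => 0)
        (fun k : Fin (m+1) => if h : (k : ℕ) < m then xv m ⟨k, h⟩ else 0) hr lam
        = if h : r ≤ m then GQ (bet m) (fun _ => 0) (xv m) h lam else 0) ∧
      (GP (bet m) (fun _ => 0)
        (fun k : Fin (m+1) => if h : (k : ℕ) < m then xv m ⟨k, h⟩ else 0) hr lam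
        = if h : r ≤ m then GP (bet m) (fun _ => 0) (xv m) h lam else 0)
    rw [hy m]
    constructor
    · simp only [GQ]
      exact assemble (db (bet m) (fun _ => 0))
        (fun k hk => db_zero (bet m) (fun _ => 0) k hk) (bet m) hr lam hpos (xv m)
        (xv_ne_zero m) (fun k hk => Nat.cast_ne_zero.mpr hk)
    · simp only [GP]
      exact assemble (fb (bet m) (fun _ => 0))
        (fun k hk => fb_zero (bet m) k hk) (bet m) hr lam hpos (xv m)
        (xv_ne_zero m) (fun k hk => Nat.cast_ne_zero.mpr hk)


end Stmt14
end
end
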